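/- arXiv:math-ph/0405024 — 8 statements merged into one kernel-verified Lean document; each statement's English description precedes it below -/
import Mathlib

section
/- Assume E_c is a critical energy of the random polymer model. For every ε₀ > 0 there exists a constant C < ∞ such that for all real ε with |ε| ≤ ε₀, all sign sequences ω ∈ Ω₀ and all integers m ≤ k: ‖T_ω^{E_c+ε}(k,m)‖ ≤ C·e^{C|ε|·(k−m)}. Consequently there is C′ < ∞ with |γ(E_c+ε)| ≤ C′|ε| for |ε| ≤ ε₀. -/
open MeasureTheory Filter
open scoped BigOperators ENNReal

noncomputable section

/-- Single-site transfer matrix `T_{v,t}`. -/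
def Tst (v t : ℝ) : Matrix (Fin 2) (Fin 2) ℝ := (1 / t) • !![v, -t ^ 2; 1, 0]

/-- Transfer matrix over one polymer block of length `L`. -/
def Tblock (L : ℕ) (vh th : ℕ → ℝ) (E : ℝ) : Matrix (Fin 2) (Fin 2) ℝ :=
  ((List.range L).reverse.map fun j => Tst (vh j - E) (th j)).prod

/-- The transfer matrix of the polymer of sign `s` at energy `E`. -/
def Tpoly (L : Bool → ℕ) (vh th : Bool → ℕ → ℝ) (E : ℝ) (s : Bool) :
    Matrix (Fin 2) (Fin 2) ℝ :=
  Tblock (L s) (vh s) (th s) E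

/-- Transfer matrix over the polymers `m, m+1, …, k-1`. -/
def TW (L : Bool → ℕ) (vh th : Bool → ℕ → ℝ) (ω : ℤ → Bool) (E : ℝ) (k m : ℤ) :
    Matrix (Fin 2) (Fin 2) ℝ :=
  ((List.range (k - m).toNat).map fun i => Tpoly L vh th E (ω (k - 1 - i))).prod

/-- Rotation matrix by angle `η`. -/
def rotMat (η : ℝ) : Matrix (Fin 2) (Fin 2) ℝ :=
  !![Real.cos η, -Real.sin η; Real.sin η, Real.cos η]

/-- Euclidean operator norm of a real 2×2 matrix. -/
def opNormR (A : Matrix (Fin 2) (Fin 2) ℝ) : ℝ := ‖Matrix.toEuclideanCLM (𝕜 := ℝ) A‖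

/-- Average `⟨c±⟩ = p₊ c₊ + p₋ c₋` (real version). -/
def avgR (p : ℝ) (c : Bool → ℝ) : ℝ := p * c true + (1 - p) * c false

/-- Average `⟨c±⟩ = p₊ c₊ + p₋ c₋` (complex version). -/
def avgC (p : ℝ) (c : Bool → ℂ) : ℂ := p * c true + (1 - p) * c false

/-!
At `E_c` the two polymer matrices are simultaneously conjugated by `M` to rotations, which have
norm one. The map `E ↦ T_±^E` is polynomial, hence Lipschitz on compact intervals, so
`‖M T_±^{E_c+ε} M⁻¹‖ ≤ 1 + b|ε|`. Conjugating the whole product by `M` then bounds a product of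
`k - m` polymer matrices by `‖M⁻¹‖ ‖M‖ (1 + b|ε|)^(k-m) ≤ ‖M⁻¹‖ ‖M‖ e^{b|ε|(k-m)}`.

All transfer matrices have determinant one, and a `2 × 2` matrix of determinant one has operator
norm at least one (its inverse is its adjugate, which has the same norm). Hence
`0 ≤ log ‖T_ω(k,0)‖ ≤ log C + C|ε|k`, and dividing by `k` and letting `k → ∞` gives
`|γ₀(E_c+ε)| ≤ C|ε|`; finally `⟨L_±⟩ ≥ 1`.
-/

-- Under this instance `‖A‖` unfolds to `opNormR A`.
open scoped Matrix.Norms.L2Operator Matrix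

section NormedRing

variable {A : Type*} [NormedRing A] [NormOneClass A]

theorem norm_units_conj_list_prod_le (u : Aˣ) {r : ℝ} :
    ∀ {l : List A}, (∀ a ∈ l, ‖(u : A) * a * ↑u⁻¹‖ ≤ r) →
      ‖(u : A) * l.prod * ↑u⁻¹‖ ≤ r ^ l.length
  | [], _ => by simp
  | a :: l, h => by
    have hr : 0 ≤ r := (norm_nonneg _).trans (h a List.mem_cons_self)
    have hsplit : (u : A) * (a :: l).prod * ↑u⁻¹ = (u * a * ↑u⁻¹) * (u * l.prod * ↑u⁻¹) := by
      simp only [List.prod_cons, mul_assoc, Units.inv_mul_cancel_left]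
    rw [hsplit, List.length_cons, pow_succ']
    exact (norm_mul_le _ _).trans <| mul_le_mul (h a List.mem_cons_self)
      (norm_units_conj_list_prod_le u fun b hb => h b (List.mem_cons_of_mem a hb))
      (norm_nonneg _) hr

theorem norm_list_prod_le_of_units_conj (u : Aˣ) {l : List A} {r : ℝ}
    (h : ∀ a ∈ l, ‖(u : A) * a * ↑u⁻¹‖ ≤ r) :
    ‖l.prod‖ ≤ ‖(↑u⁻¹ : A)‖ * ‖(u : A)‖ * r ^ l.length := by
  have hconj : l.prod = ↑u⁻¹ * (u * l.prod * ↑u⁻¹) * u := by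
    simp only [mul_assoc, Units.inv_mul_cancel_left, Units.inv_mul, mul_one]
  rw [hconj]
  calc ‖↑u⁻¹ * (u * l.prod * ↑u⁻¹) * (u : A)‖
      ≤ ‖(↑u⁻¹ : A)‖ * ‖(u : A) * l.prod * ↑u⁻¹‖ * ‖(u : A)‖ := norm_mul₃_le
    _ ≤ ‖(↑u⁻¹ : A)‖ * r ^ l.length * ‖(u : A)‖ := by
      gcongr; exact norm_units_conj_list_prod_le u h
    _ = _ := by ring

end NormedRing

theorem contDiff_list_prod {𝕜 E 𝔸 ι : Type*} [NontriviallyNormedField 𝕜] [NormedAddCommGroup E]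
    [NormedSpace 𝕜 E] [NormedRing 𝔸] [NormedAlgebra 𝕜 𝔸] {n : WithTop ℕ∞} {f : ι → E → 𝔸} :
    ∀ {l : List ι}, (∀ i ∈ l, ContDiff 𝕜 n (f i)) → ContDiff 𝕜 n fun x => (l.map (f · x)).prod
  | [], _ => by simpa using contDiff_const
  | i :: l, h => by
    simpa using (h i List.mem_cons_self).mul
      (contDiff_list_prod fun j hj => h j (List.mem_cons_of_mem i hj))

theorem one_add_pow_le_exp_mul {x : ℝ} (hx : -1 ≤ x) (n : ℕ) :
    (1 + x) ^ n ≤ Real.exp (x * n) := by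
  rw [mul_comm, Real.exp_nat_mul]
  exact pow_le_pow_left₀ (by linarith) (by linarith [Real.add_one_le_exp x]) n

theorem abs_le_of_tendsto_integral_div {Ω : Type*} [MeasurableSpace Ω] {μ : Measure Ω}
    [IsProbabilityMeasure μ] {f : ℕ → Ω → ℝ} {a b γ : ℝ} (hf : ∀ k ω, |f k ω| ≤ a + b * k)
    (h : Tendsto (fun k : ℕ => (1 / (k : ℝ)) * ∫ ω, f k ω ∂μ) atTop (nhds γ)) : |γ| ≤ b := by
  have hbound : ∀ k : ℕ, 1 ≤ k → |(1 / (k : ℝ)) * ∫ ω, f k ω ∂μ| ≤ a * (1 / (k : ℝ)) + b := by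
    intro k hk
    have hk₀ : (0 : ℝ) < k := by exact_mod_cast hk
    have hint : |∫ ω, f k ω ∂μ| ≤ a + b * k := by
      simpa using norm_integral_le_of_norm_le_const
        (ae_of_all μ fun ω => (Real.norm_eq_abs (f k ω)).trans_le (hf k ω))
    rw [abs_mul, abs_of_pos (by positivity)]
    calc 1 / (k : ℝ) * |∫ ω, f k ω ∂μ| ≤ 1 / k * (a + b * k) := by gcongr
      _ = a * (1 / k) + b := by field_simp
  have hlim : Tendsto (fun k : ℕ => a * (1 / (k : ℝ)) + b) atTop (nhds b) := by
    simpa using (tendsto_one_div_atTop_nhds_zero_nat.const_mul a).add_const b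
  exact le_of_tendsto_of_tendsto h.abs hlim (eventually_atTop.2 ⟨1, hbound⟩)

theorem Matrix.l2_opNorm_le_one_of_mem_unitary {𝕜 n : Type*} [RCLike 𝕜] [Fintype n]
    [DecidableEq n] {U : Matrix n n 𝕜} (h : U ∈ unitary (Matrix n n 𝕜)) : ‖U‖ ≤ 1 := by
  cases isEmpty_or_nonempty n
  · simp [Subsingleton.elim U 0]
  · exact (CStarRing.norm_of_mem_unitary h).le

theorem rotMat_mem_unitary (η : ℝ) : rotMat η ∈ unitary (Matrix (Fin 2) (Fin 2) ℝ) := by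
  rw [Unitary.mem_iff]
  constructor <;>
  · ext i j
    fin_cases i <;> fin_cases j <;>
      simp [rotMat, Matrix.mul_apply, Fin.sum_univ_two, Matrix.star_eq_conjTranspose] <;>
      nlinarith [Real.sin_sq_add_cos_sq η]

theorem adjugate_eq_rotMat_mul_conjTranspose (B : Matrix (Fin 2) (Fin 2) ℝ) :
    B.adjugate = rotMat (Real.pi / 2) * Bᴴ * star (rotMat (Real.pi / 2)) := by
  ext i j
  fin_cases i <;> fin_cases j <;>
    simp [rotMat, Matrix.adjugate_fin_two, Matrix.mul_apply, Matrix.vecMul, dotProduct,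
      Fin.sum_univ_two, Matrix.star_eq_conjTranspose]

theorem one_le_norm_of_det_eq_one {B : Matrix (Fin 2) (Fin 2) ℝ} (h : B.det = 1) : 1 ≤ ‖B‖ := by
  have hJ := rotMat_mem_unitary (Real.pi / 2)
  have hadj : ‖B.adjugate‖ ≤ ‖B‖ := by
    rw [adjugate_eq_rotMat_mul_conjTranspose]
    calc _ ≤ ‖rotMat (Real.pi / 2)‖ * ‖Bᴴ‖ * ‖star (rotMat (Real.pi / 2))‖ := norm_mul₃_le
      _ ≤ 1 * ‖Bᴴ‖ * 1 := by
        gcongr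
        · exact Matrix.l2_opNorm_le_one_of_mem_unitary hJ
        · exact Matrix.l2_opNorm_le_one_of_mem_unitary (Unitary.star_mem hJ)
      _ = ‖B‖ := by rw [Matrix.l2_opNorm_conjTranspose]; ring
  have h1 : B * B.adjugate = 1 := by rw [Matrix.mul_adjugate, h, one_smul]
  have hsq : 1 ≤ ‖B‖ * ‖B‖ :=
    calc (1 : ℝ) = ‖B * B.adjugate‖ := by rw [h1, norm_one]
      _ ≤ ‖B‖ * ‖B.adjugate‖ := norm_mul_le _ _
      _ ≤ ‖B‖ * ‖B‖ := by gcongr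
  nlinarith [norm_nonneg B]

theorem abs_log_norm_le_of_det_eq_one {B : Matrix (Fin 2) (Fin 2) ℝ} (hB : B.det = 1) {C x : ℝ}
    (h : ‖B‖ ≤ C * Real.exp x) : |Real.log ‖B‖| ≤ Real.log C + x := by
  have h1 := one_le_norm_of_det_eq_one hB
  have hC : 0 < C := pos_of_mul_pos_left (h1.trans_lt' one_pos |>.trans_le h) (Real.exp_pos x).le
  rw [abs_of_nonneg (Real.log_nonneg h1), ← Real.log_exp x,
    ← Real.log_mul hC.ne' (Real.exp_pos x).ne']
  exact Real.log_le_log (by linarith) h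

theorem Tst_sub (v t E : ℝ) :
    Tst (v - E) t = Tst v t - (E / t) • Matrix.single 0 0 1 := by
  ext i j
  fin_cases i <;> fin_cases j <;> simp [Tst]
  ring

theorem contDiff_Tst (v t : ℝ) {n : WithTop ℕ∞} : ContDiff ℝ n fun E => Tst (v - E) t := by
  simp only [Tst_sub]
  fun_prop

theorem Tst_mem_mker_det (v : ℝ) {t : ℝ} (ht : t ≠ 0) :
    Tst v t ∈ MonoidHom.mker (Matrix.detMonoidHom : Matrix (Fin 2) (Fin 2) ℝ →* ℝ) := by
  rw [MonoidHom.mem_mker, Matrix.coe_detMonoidHom, Tst, Matrix.det_smul, Matrix.det_fin_two_of,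
    Fintype.card_fin]
  field_simp
  ring

section Polymer

variable (L : Bool → ℕ) (vh th : Bool → ℕ → ℝ)

theorem contDiff_Tpoly {n : WithTop ℕ∞} : ContDiff ℝ n fun E => Tpoly L vh th E :=
  contDiff_pi.2 fun _ => contDiff_list_prod fun _ _ => contDiff_Tst _ _

theorem exists_norm_Tpoly_sub_le (Ec ε₀ : ℝ) :
    ∃ K : ℝ, 0 ≤ K ∧ ∀ ε : ℝ, |ε| ≤ ε₀ → ∀ s,
      ‖Tpoly L vh th (Ec + ε) s - Tpoly L vh th Ec s‖ ≤ K * |ε| := by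
  obtain ⟨K, hK⟩ := (contDiff_Tpoly L vh th (n := 1)).contDiffOn.exists_lipschitzOnWith
    one_ne_zero (convex_Icc (Ec - ε₀) (Ec + ε₀)) isCompact_Icc
  refine ⟨K, K.2, fun ε hε s => ?_⟩
  have hmem : ∀ δ : ℝ, |δ| ≤ ε₀ → Ec + δ ∈ Set.Icc (Ec - ε₀) (Ec + ε₀) := fun δ hδ => by
    constructor <;> linarith [abs_le.1 hδ]
  have hdist := hK.dist_le_mul _ (hmem ε hε) _ (hmem 0 (by simpa using (abs_nonneg ε).trans hε))
  rw [add_zero, dist_eq_norm, dist_eq_norm, add_sub_cancel_left, Real.norm_eq_abs] at hdist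
  exact (norm_le_pi_norm (fun s => Tpoly L vh th (Ec + ε) s - Tpoly L vh th Ec s) s).trans hdist

theorem exists_norm_conj_Tpoly_le {Ec : ℝ} {M : Matrix (Fin 2) (Fin 2) ℝ} {η : Bool → ℝ}
    (hrot : ∀ s, M * Tpoly L vh th Ec s * M⁻¹ = rotMat (η s)) (ε₀ : ℝ) :
    ∃ b : ℝ, 0 ≤ b ∧ ∀ ε : ℝ, |ε| ≤ ε₀ → ∀ s,
      ‖M * Tpoly L vh th (Ec + ε) s * M⁻¹‖ ≤ 1 + b * |ε| := by
  obtain ⟨K, hK, hlip⟩ := exists_norm_Tpoly_sub_le L vh th Ec ε₀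
  refine ⟨‖M‖ * K * ‖M⁻¹‖, by positivity, fun ε hε s => ?_⟩
  have hsplit : M * Tpoly L vh th (Ec + ε) s * M⁻¹ =
      rotMat (η s) + M * (Tpoly L vh th (Ec + ε) s - Tpoly L vh th Ec s) * M⁻¹ := by
    rw [← hrot s]; noncomm_ring
  rw [hsplit]
  refine (norm_add_le _ _).trans (add_le_add
    (Matrix.l2_opNorm_le_one_of_mem_unitary (rotMat_mem_unitary _)) (norm_mul₃_le.trans ?_))
  calc ‖M‖ * ‖Tpoly L vh th (Ec + ε) s - Tpoly L vh th Ec s‖ * ‖M⁻¹‖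
      ≤ ‖M‖ * (K * |ε|) * ‖M⁻¹‖ := by gcongr; exact hlip ε hε s
    _ = ‖M‖ * K * ‖M⁻¹‖ * |ε| := by ring

-- `TW` coerces the index list `List.range _` to `List ℤ` by a monadic bind.
theorem TW_eq_prod (ω : ℤ → Bool) (E : ℝ) (k m : ℤ) :
    TW L vh th ω E k m =
      ((List.range (k - m).toNat).map fun i : ℕ => Tpoly L vh th E (ω (k - 1 - i))).prod := by
  simp [TW, ← List.map_eq_flatMap, List.map_map, Function.comp_def]

theorem TW_mem_mker_det (hth : ∀ s j, j < L s → 0 < th s j) (ω : ℤ → Bool) (E : ℝ) (k m : ℤ) :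
    TW L vh th ω E k m ∈ MonoidHom.mker (Matrix.detMonoidHom : Matrix (Fin 2) (Fin 2) ℝ →* ℝ) := by
  rw [TW_eq_prod]
  refine list_prod_mem (List.forall_mem_map.2 fun i _ => list_prod_mem ?_)
  simp only [List.forall_mem_map, List.mem_reverse, List.mem_range]
  exact fun j hj => Tst_mem_mker_det _ (hth _ j hj).ne'

theorem exists_norm_TW_le {Ec : ℝ} {M : Matrix (Fin 2) (Fin 2) ℝ} (hM : IsUnit M.det)
    {η : Bool → ℝ} (hrot : ∀ s, M * Tpoly L vh th Ec s * M⁻¹ = rotMat (η s)) (ε₀ : ℝ) :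
    ∃ C : ℝ, ∀ ε : ℝ, |ε| ≤ ε₀ → ∀ (ω : ℤ → Bool) (m k : ℤ), m ≤ k →
      ‖TW L vh th ω (Ec + ε) k m‖ ≤ C * Real.exp (C * |ε| * ((k - m : ℤ) : ℝ)) := by
  obtain ⟨b, hb, hconj⟩ := exists_norm_conj_Tpoly_le L vh th hrot ε₀
  refine ⟨max (‖M⁻¹‖ * ‖M‖) b, fun ε hε ω m k hmk => ?_⟩
  have hlen : (((k - m).toNat : ℕ) : ℝ) = ((k - m : ℤ) : ℝ) := by
    exact_mod_cast Int.toNat_of_nonneg (sub_nonneg.2 hmk)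
  set u := Matrix.nonsingInvUnit M hM
  have hu : (u : Matrix (Fin 2) (Fin 2) ℝ) = M := rfl
  have hu' : (↑u⁻¹ : Matrix (Fin 2) (Fin 2) ℝ) = M⁻¹ := rfl
  rw [TW_eq_prod]
  refine (norm_list_prod_le_of_units_conj u (r := 1 + b * |ε|) ?_).trans ?_
  · rw [hu, hu', List.forall_mem_map]
    exact fun i _ => hconj ε hε _
  rw [hu, hu', List.length_map, List.length_range]
  calc ‖M⁻¹‖ * ‖M‖ * (1 + b * |ε|) ^ (k - m).toNat
      ≤ ‖M⁻¹‖ * ‖M‖ * Real.exp (b * |ε| * ((k - m : ℤ) : ℝ)) := by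
        rw [← hlen]; gcongr; exact one_add_pow_le_exp_mul (by nlinarith [abs_nonneg ε]) _
    _ ≤ _ := by
        have : 0 ≤ ((k - m : ℤ) : ℝ) := by exact_mod_cast sub_nonneg.2 hmk
        gcongr
        · exact le_max_left _ _
        · exact le_max_right _ _

end Polymer

theorem one_le_avgR {p : ℝ} (hp0 : 0 ≤ p) (hp1 : p ≤ 1) {c : Bool → ℝ} (hc : ∀ s, 1 ≤ c s) :
    1 ≤ avgR p c := by
  unfold avgR
  nlinarith [hc true, hc false]

theorem stmt5_general
    (L : Bool → ℕ) (hL : ∀ s, 1 ≤ L s) (vh th : Bool → ℕ → ℝ)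
    (hth : ∀ s j, j < L s → 0 < th s j) (Ec : ℝ)
    (M : Matrix (Fin 2) (Fin 2) ℝ) (hM : IsUnit M.det) (η : Bool → ℝ)
    (hrot : ∀ s, M * Tpoly L vh th Ec s * M⁻¹ = rotMat (η s))
    (p : ℝ) (hp : 0 < p ∧ p < 1) (P₀ : Measure (ℤ → Bool))
    [IsProbabilityMeasure P₀]
    (γ₀ : ℝ → ℝ)
    (hγ : ∀ E : ℝ, Tendsto (fun k : ℕ =>
        (1 / (k : ℝ)) * ∫ ω, Real.log (opNormR (TW L vh th ω E (k : ℤ) 0)) ∂P₀)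
      atTop (nhds (γ₀ E)))
    (ε₀ : ℝ) :
    (∃ C : ℝ, ∀ ε : ℝ, |ε| ≤ ε₀ → ∀ (ω : ℤ → Bool) (m k : ℤ), m ≤ k →
      opNormR (TW L vh th ω (Ec + ε) k m) ≤ C * Real.exp (C * |ε| * ((k - m : ℤ) : ℝ))) ∧
    ∃ C' : ℝ, ∀ ε : ℝ, |ε| ≤ ε₀ →
      |γ₀ (Ec + ε) / avgR p (fun s => (L s : ℝ))| ≤ C' * |ε| := by
  obtain ⟨C, hC⟩ := exists_norm_TW_le L vh th hM hrot ε₀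
  refine ⟨⟨C, hC⟩, C, fun ε hε => ?_⟩
  have hlog : ∀ (k : ℕ) ω, |Real.log (opNormR (TW L vh th ω (Ec + ε) k 0))| ≤
      Real.log C + C * |ε| * k := fun k ω =>
    abs_log_norm_le_of_det_eq_one (TW_mem_mker_det L vh th hth ω _ _ _)
      (by simpa using hC ε hε ω 0 k (Int.natCast_nonneg k))
  have hγε : |γ₀ (Ec + ε)| ≤ C * |ε| := abs_le_of_tendsto_integral_div hlog (hγ (Ec + ε))
  have havg : 1 ≤ avgR p (fun s => (L s : ℝ)) :=
    one_le_avgR hp.1.le hp.2.le fun s => by exact_mod_cast hL s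
  rw [abs_div, abs_of_pos (one_pos.trans_le havg)]
  exact (div_le_self (abs_nonneg _) havg).trans hγε

/-- Deterministic bound on transfer matrices near a critical energy, and the resulting
linear bound on the Lyapunov exponent. -/
theorem stmt5
    (L : Bool → ℕ) (hL : ∀ s, 1 ≤ L s) (vh th : Bool → ℕ → ℝ)
    (hth : ∀ s j, j < L s → 0 < th s j) (Ec : ℝ)
    (hcomm : Tpoly L vh th Ec true * Tpoly L vh th Ec false
           = Tpoly L vh th Ec false * Tpoly L vh th Ec true)
    (hell : ∀ s, |(Tpoly L vh th Ec s).trace| < 2 ∨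
      Tpoly L vh th Ec s = 1 ∨ Tpoly L vh th Ec s = -1)
    (M : Matrix (Fin 2) (Fin 2) ℝ) (hM : IsUnit M.det) (η : Bool → ℝ)
    (hrot : ∀ s, M * Tpoly L vh th Ec s * M⁻¹ = rotMat (η s))
    (p : ℝ) (hp : 0 < p ∧ p < 1) (P₀ : Measure (ℤ → Bool))
    [IsProbabilityMeasure P₀]
    (hiid : ProbabilityTheory.iIndepFun (fun (l : ℤ) (ω : ℤ → Bool) => ω l) P₀)
    (hber : ∀ l : ℤ, P₀ {ω | ω l = true} = ENNReal.ofReal p)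
    (γ₀ : ℝ → ℝ)
    (hγ : ∀ E : ℝ, Tendsto (fun k : ℕ =>
        (1 / (k : ℝ)) * ∫ ω, Real.log (opNormR (TW L vh th ω E (k : ℤ) 0)) ∂P₀)
      atTop (nhds (γ₀ E)))
    (ε₀ : ℝ) (hε₀ : 0 < ε₀) :
    (∃ C : ℝ, ∀ ε : ℝ, |ε| ≤ ε₀ → ∀ (ω : ℤ → Bool) (m k : ℤ), m ≤ k →
      opNormR (TW L vh th ω (Ec + ε) k m) ≤ C * Real.exp (C * |ε| * ((k - m : ℤ) : ℝ))) ∧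
    ∃ C' : ℝ, ∀ ε : ℝ, |ε| ≤ ε₀ →
      |γ₀ (Ec + ε) / avgR p (fun s => (L s : ℝ))| ≤ C' * |ε| :=
  stmt5_general L hL vh th hth Ec M hM η hrot p hp P₀ γ₀ hγ ε₀
end
end

section
/- Assume E_c is a critical energy of the random polymer model. Fix c₊, c₋ ∈ ℂ and j ∈ {1,2}, and set I^j_N(θ,ε) = E₀( Σ_{l=0}^{N−1} c_{ω_l} e^{2ij·S_{ε,ω}^l(θ)} ). If ⟨e^{2ij·η_±}⟩ ≠ 1, then there exist C < ∞ and ε₀ > 0 such that for all |ε| ≤ ε₀, all N ≥ 1 and all θ ∈ ℝ: |I^j_N(θ,ε)| ≤ C·( N·(|b₊^ε| + |b₋^ε|) + 1 ). -/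
open MeasureTheory Filter
open scoped BigOperators ENNReal

noncomputable section

/-- The vector `v = (1, -i)ᵀ/√2`. -/
def vv : Fin 2 → ℂ := ![1 / (Real.sqrt 2 : ℂ), -Complex.I / (Real.sqrt 2 : ℂ)]

/-- Its entrywise conjugate `v̄ = (1, i)ᵀ/√2`. -/
def vvbar : Fin 2 → ℂ := ![1 / (Real.sqrt 2 : ℂ), Complex.I / (Real.sqrt 2 : ℂ)]

/-- Iterated polymer phase shifts. -/
def Sit (S : Bool → ℝ → ℝ → ℝ) (ω : ℤ → Bool) (ε : ℝ) : ℕ → ℝ → ℝ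
  | 0, θ => θ
  | l + 1, θ => S (ω l) ε (Sit S ω ε l θ)

/-!
Conjugated by `M`, a polymer acts on `ℝ² ≅ ℂ` as `z ↦ a z + conj b conj z`, so `e^{i S(θ)}` is the
unit vector along `a e^{iθ} + conj b e^{-iθ}` and `e^{2ij S(θ)}` differs from
`(a / |a|)^{2j} e^{2ijθ}` by `O(|b|)`. The phase `S^l_ω(θ)` depends only on `ω_0, …, ω_{l-1}`, so
by independence the averages `u_l = E₀ e^{2ij S^l_ω(θ)}` satisfy
`u_{l+1} = Λ u_l + O(|b₊| + |b₋|)` with `Λ = ⟨(a_± / |a_±|)^{2j}⟩`, and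
`E₀ (c_{ω_l} e^{2ij S^l_ω(θ)}) = ⟨c⟩ u_l`. Telescoping bounds `|1 - Λ| |∑_{l<N} u_l|` by
`2 + O(N (|b₊| + |b₋|))`, and `1 - Λ` stays away from `0` for small `ε` because
`Λ = ⟨e^{2ij η_±}⟩ ≠ 1` at `ε = 0`.
-/

open Complex ComplexConjugate ProbabilityTheory

theorem norm_normalize_sub_normalize_le {V : Type*} [NormedAddCommGroup V] [NormedSpace ℝ V]
    (x : V) {y : V} (hy : y ≠ 0) :
    ‖NormedSpace.normalize x - NormedSpace.normalize y‖ ≤ 2 * ‖x - y‖ / ‖y‖ := by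
  have hy' : 0 < ‖y‖ := norm_pos_iff.mpr hy
  have hsplit : NormedSpace.normalize x - NormedSpace.normalize y
      = (‖x‖⁻¹ - ‖y‖⁻¹) • x + ‖y‖⁻¹ • (x - y) := by
    simp only [NormedSpace.normalize, sub_smul, smul_sub]
    abel
  have hfirst : ‖(‖x‖⁻¹ - ‖y‖⁻¹) • x‖ ≤ ‖x - y‖ / ‖y‖ := by
    rcases eq_or_ne x 0 with rfl | hx
    · rw [smul_zero, norm_zero]
      positivity
    have hx' : 0 < ‖x‖ := norm_pos_iff.mpr hx
    calc ‖(‖x‖⁻¹ - ‖y‖⁻¹) • x‖ = |‖y‖ - ‖x‖| / ‖y‖ := by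
          rw [norm_smul, Real.norm_eq_abs, inv_sub_inv hx'.ne' hy'.ne', abs_div,
            abs_of_pos (mul_pos hx' hy')]
          field_simp
      _ ≤ ‖x - y‖ / ‖y‖ := by
          gcongr
          rw [← norm_neg (x - y), neg_sub]
          exact abs_norm_sub_norm_le y x
  calc ‖NormedSpace.normalize x - NormedSpace.normalize y‖
      ≤ ‖x - y‖ / ‖y‖ + ‖x - y‖ / ‖y‖ := by
        rw [hsplit]
        refine (norm_add_le _ _).trans (add_le_add hfirst (le_of_eq ?_))
        rw [norm_smul, norm_inv, norm_norm, inv_mul_eq_div]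
    _ = 2 * ‖x - y‖ / ‖y‖ := by ring

theorem norm_normalize_le_one {V : Type*} [NormedAddCommGroup V] [NormedSpace ℝ V] (x : V) :
    ‖NormedSpace.normalize x‖ ≤ 1 := by
  rcases eq_or_ne x 0 with rfl | hx
  · simp
  · exact (NormedSpace.norm_normalize_eq_one_iff.mpr hx).le

theorem continuousAt_normalize {V : Type*} [NormedAddCommGroup V] [NormedSpace ℝ V] {x : V}
    (hx : x ≠ 0) : ContinuousAt NormedSpace.normalize x :=
  (continuous_norm.continuousAt.inv₀ (norm_ne_zero_iff.mpr hx)).smul continuousAt_id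

theorem norm_pow_sub_pow_le {R : Type*} [NormedRing R] [NormOneClass R] {u v : R}
    (hu : ‖u‖ ≤ 1) (hv : ‖v‖ ≤ 1) (n : ℕ) : ‖u ^ n - v ^ n‖ ≤ n * ‖u - v‖ := by
  induction n with
  | zero => simp
  | succ n ih =>
    have hun : ‖u ^ n‖ ≤ 1 := (norm_pow_le u n).trans (pow_le_one₀ (norm_nonneg u) hu)
    calc ‖u ^ (n + 1) - v ^ (n + 1)‖ = ‖u ^ n * (u - v) + (u ^ n - v ^ n) * v‖ := by
          congr 1; noncomm_ring
      _ ≤ 1 * ‖u - v‖ + n * ‖u - v‖ * 1 :=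
          (norm_add_le _ _).trans (add_le_add
            ((norm_mul_le _ _).trans (by gcongr))
            ((norm_mul_le _ _).trans (by gcongr)))
      _ = (n + 1 : ℕ) * ‖u - v‖ := by push_cast; ring

theorem normalize_mul_of_norm_eq_one (a : ℂ) {e : ℂ} (he : ‖e‖ = 1) :
    NormedSpace.normalize (a * e) = NormedSpace.normalize a * e := by
  simp only [NormedSpace.normalize, norm_mul, he, mul_one, smul_mul_assoc]

theorem norm_cexp_pow_sub_le {a b : ℂ} {θ φ ρ : ℝ} (hρ : 0 < ρ) (ha : a ≠ 0)
    (h : ρ * cexp (φ * I) = a * cexp (θ * I) + conj b * cexp (-θ * I)) (n : ℕ) :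
    ‖cexp (φ * I) ^ n - (NormedSpace.normalize a * cexp (θ * I)) ^ n‖
      ≤ n * (2 * ‖b‖ / ‖a‖) := by
  have hw : NormedSpace.normalize (a * cexp (θ * I) + conj b * cexp (-θ * I))
      = cexp (φ * I) := by
    rw [← h, ← Complex.real_smul, NormedSpace.normalize_smul_of_pos hρ,
      NormedSpace.normalize_eq_self_of_norm_eq_one (norm_exp_ofReal_mul_I φ)]
  have hz : NormedSpace.normalize (a * cexp (θ * I)) = NormedSpace.normalize a * cexp (θ * I) :=
    normalize_mul_of_norm_eq_one a (norm_exp_ofReal_mul_I θ)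
  have hza : a * cexp (θ * I) ≠ 0 := mul_ne_zero ha (exp_ne_zero _)
  rw [← hw, ← hz]
  refine (norm_pow_sub_pow_le (norm_normalize_le_one _) (norm_normalize_le_one _) n).trans ?_
  gcongr
  refine (norm_normalize_sub_normalize_le _ hza).trans (le_of_eq ?_)
  rw [add_sub_cancel_left, norm_mul, norm_mul, RCLike.norm_conj, norm_exp_ofReal_mul_I,
    ← ofReal_neg, norm_exp_ofReal_mul_I]
  simp

/-- Identifying `ℝ²` with `ℂ`, the matrix `A` acts as
`z ↦ linCoeff A * z + conj (antilinCoeff A) * conj z`. -/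
def linCoeff (A : Matrix (Fin 2) (Fin 2) ℝ) : ℂ :=
  ((A 0 0 + A 1 1) / 2 : ℝ) + ((A 1 0 - A 0 1) / 2 : ℝ) * I

def antilinCoeff (A : Matrix (Fin 2) (Fin 2) ℝ) : ℂ :=
  ((A 0 0 - A 1 1) / 2 : ℝ) - ((A 0 1 + A 1 0) / 2 : ℝ) * I

theorem continuous_linCoeff : Continuous linCoeff := by
  unfold linCoeff; fun_prop

theorem linCoeff_rotMat (η : ℝ) : linCoeff (rotMat η) = cexp (η * I) := by
  apply Complex.ext <;>
    simp [linCoeff, rotMat, exp_ofReal_mul_I_re, exp_ofReal_mul_I_im, cos_ofReal_re, sin_ofReal_re]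

theorem eq_coeffs_of_mulVec_vv {A : Matrix (Fin 2) (Fin 2) ℝ} {a b : ℂ}
    (hab : (A.map ofReal).mulVec vv = a • vv + b • vvbar) :
    a = linCoeff A ∧ b = antilinCoeff A := by
  have hs : (Real.sqrt 2 : ℂ) ≠ 0 := by exact_mod_cast (Real.sqrt_pos.mpr two_pos).ne'
  have e0 := congrFun hab 0
  have e1 := congrFun hab 1
  simp only [Matrix.mulVec, dotProduct, Fin.sum_univ_two, Matrix.map_apply, vv, vvbar,
    Pi.add_apply, Pi.smul_apply, smul_eq_mul, Matrix.cons_val_zero, Matrix.cons_val_one] at e0 e1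
  field_simp at e0 e1
  have e1' : a - b = A 1 1 + A 1 0 * I := by
    linear_combination (-I) * e1 + (a - b - A 1 1) * I_sq
  constructor
  · simp only [linCoeff]; push_cast
    linear_combination (-1/2 : ℂ) * e0 + (1/2 : ℂ) * e1'
  · simp only [antilinCoeff]; push_cast
    linear_combination (-1/2 : ℂ) * e0 + (-1/2 : ℂ) * e1'

theorem ofReal_mul_cexp_eq_of_mulVec {A : Matrix (Fin 2) (Fin 2) ℝ} {θ φ ρ : ℝ}
    (h : A.mulVec ![Real.cos θ, Real.sin θ] = ρ • ![Real.cos φ, Real.sin φ]) :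
    ρ * cexp (φ * I) = linCoeff A * cexp (θ * I) + conj (antilinCoeff A) * cexp (-θ * I) := by
  have h0 := congrArg ofReal (congrFun h 0)
  have h1 := congrArg ofReal (congrFun h 1)
  simp only [Matrix.mulVec, dotProduct, Fin.sum_univ_two, Pi.smul_apply, smul_eq_mul,
    Matrix.cons_val_zero, Matrix.cons_val_one] at h0 h1
  simp only [linCoeff, antilinCoeff, map_sub, map_mul, conj_ofReal, conj_I, exp_mul_I,
    cos_neg, sin_neg]
  push_cast at h0 h1 ⊢
  linear_combination (-1) * h0 + (-I) * h1 + (A 0 1 * sin θ) * I_sq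

@[fun_prop]
theorem continuous_Tblock (L : ℕ) (vh th : ℕ → ℝ) : Continuous (Tblock L vh th) := by
  refine continuous_list_prod _ fun j _ => ?_
  unfold Tst
  fun_prop

section Coordinates

variable {ι β : Type*} [Finite β] [MeasurableSpace β] [MeasurableSingletonClass β]
  {γ : Type*} [MeasurableSpace γ] [Nonempty γ]

theorem DependsOn.measurable_of_finset {F : (ι → β) → γ} {s : Finset ι}
    (hF : DependsOn F s) : Measurable F := by
  obtain ⟨g, rfl⟩ := dependsOn_iff_exists_comp.mp hF
  exact (measurable_of_countable g).comp (Set.measurable_restrict _)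

theorem DependsOn.integrable_of_finset {μ : Measure (ι → β)} [IsFiniteMeasure μ]
    {F : (ι → β) → ℂ} {s : Finset ι} (hF : DependsOn F s) : Integrable F μ := by
  obtain ⟨g, hg⟩ := dependsOn_iff_exists_comp.mp hF
  obtain ⟨C, hC⟩ := Finite.exists_le fun x => ‖g x‖
  exact .of_bound hF.measurable_of_finset.aestronglyMeasurable C
    (ae_of_all _ fun ω => hg ▸ hC _)

theorem ProbabilityTheory.iIndepFun.indepFun_of_dependsOn {μ : Measure (ι → β)}
    (hμ : iIndepFun (fun i (ω : ι → β) => ω i) μ) {F : (ι → β) → γ} {F' : (ι → β) → γ}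
    {s t : Finset ι} (hst : Disjoint s t) (hF : DependsOn F s) (hF' : DependsOn F' t) :
    IndepFun F F' μ := by
  obtain ⟨g, rfl⟩ := dependsOn_iff_exists_comp.mp hF
  obtain ⟨g', rfl⟩ := dependsOn_iff_exists_comp.mp hF'
  exact (hμ.indepFun_finset s t hst fun i => measurable_pi_apply i).comp
    (measurable_of_countable g) (measurable_of_countable g')

end Coordinates

section Bernoulli

variable {ι : Type*} {P₀ : Measure (ι → Bool)} [IsProbabilityMeasure P₀] {p : ℝ}

theorem integral_comp_apply_eq_avgC (hp : 0 ≤ p) {k : ι}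
    (hk : P₀ {ω | ω k = true} = ENNReal.ofReal p) (g : Bool → ℂ) :
    ∫ ω, g (ω k) ∂P₀ = avgC p g := by
  have hmeas : MeasurableSet {ω : ι → Bool | ω k = true} :=
    (measurableSet_singleton true).preimage (measurable_pi_apply k)
  have hsplit : (fun ω : ι → Bool => g (ω k))
      = fun ω => {ω | ω k = true}.indicator (fun _ => g true - g false) ω + g false := by
    funext ω
    cases h : ω k <;> simp [h]
  rw [hsplit, integral_add ((integrable_const _).indicator hmeas) (integrable_const _),
    integral_indicator_const _ hmeas, integral_const, measureReal_def, hk,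
    ENNReal.toReal_ofReal hp, avgC]
  simp only [probReal_univ, one_smul, Complex.real_smul]
  ring

theorem integral_comp_apply_mul_eq_avgC_mul
    (hiid : iIndepFun (fun i (ω : ι → Bool) => ω i) P₀) (hp : 0 ≤ p) {k : ι}
    (hk : P₀ {ω | ω k = true} = ENNReal.ofReal p) {F : (ι → Bool) → ℂ} {s : Finset ι}
    (hks : k ∉ s) (hF : DependsOn F s) (g : Bool → ℂ) :
    ∫ ω, g (ω k) * F ω ∂P₀ = avgC p g * ∫ ω, F ω ∂P₀ := by
  have hg : DependsOn (fun ω : ι → Bool => g (ω k)) ({k} : Finset ι) := fun ω ω' h => by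
    simp [h k (by simp)]
  have hindep := hiid.indepFun_of_dependsOn (Finset.disjoint_singleton_left.mpr hks) hg hF
  rw [hindep.integral_fun_mul_eq_mul_integral hg.measurable_of_finset.aestronglyMeasurable
    hF.measurable_of_finset.aestronglyMeasurable, integral_comp_apply_eq_avgC hp hk]

end Bernoulli

theorem dependsOn_Sit (S : Bool → ℝ → ℝ → ℝ) (ε θ : ℝ) (l : ℕ) :
    DependsOn (fun ω => Sit S ω ε l θ) (Finset.Ico (0 : ℤ) l) := by
  induction l with
  | zero => exact fun _ _ _ => rfl
  | succ l ih =>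
    intro ω ω' h
    have hl : ω l = ω' l := h l (by simp)
    simp only [Sit, hl, ih fun i hi => h i (by simp at hi ⊢; omega)]

theorem one_sub_mul_sum_range {R : Type*} [CommRing R] (u : ℕ → R) (lam : R) (N : ℕ) :
    (1 - lam) * ∑ l ∈ Finset.range N, u l
      = u 0 - u N + ∑ l ∈ Finset.range N, (u (l + 1) - lam * u l) := by
  induction N with
  | zero => simp
  | succ N ih =>
    rw [Finset.sum_range_succ, Finset.sum_range_succ, mul_add, ih]
    ring

theorem norm_one_sub_mul_sum_range_le {R : Type*} [SeminormedCommRing R] {u : ℕ → R}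
    {lam : R} {δ : ℝ} (hu : ∀ l, ‖u l‖ ≤ 1) (hstep : ∀ l, ‖u (l + 1) - lam * u l‖ ≤ δ) (N : ℕ) :
    ‖(1 - lam) * ∑ l ∈ Finset.range N, u l‖ ≤ 2 + N * δ := by
  rw [one_sub_mul_sum_range]
  calc ‖u 0 - u N + ∑ l ∈ Finset.range N, (u (l + 1) - lam * u l)‖
      ≤ (‖u 0‖ + ‖u N‖) + ∑ l ∈ Finset.range N, ‖u (l + 1) - lam * u l‖ :=
        (norm_add_le _ _).trans (add_le_add (norm_sub_le _ _) (norm_sum_le _ _))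
    _ ≤ (1 + 1) + ∑ _l ∈ Finset.range N, δ := by
        gcongr with l
        exacts [hu 0, hu N, hstep l]
    _ = 2 + N * δ := by rw [Finset.sum_const, Finset.card_range, nsmul_eq_mul]; ring

theorem norm_one_sub_avgC_mul_integral_sum_le {P₀ : Measure (ℤ → Bool)}
    [IsProbabilityMeasure P₀] (hiid : iIndepFun (fun l (ω : ℤ → Bool) => ω l) P₀) {p : ℝ}
    (hp : 0 ≤ p) (hber : ∀ l : ℤ, P₀ {ω | ω l = true} = ENNReal.ofReal p)
    (S : Bool → ℝ → ℝ → ℝ) (ε θ : ℝ) {G : ℝ → ℂ} (hG : ∀ x, ‖G x‖ ≤ 1) (lam : Bool → ℂ)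
    {δ : ℝ} (hstep : ∀ s x, ‖G (S s ε x) - lam s * G x‖ ≤ δ) (c : Bool → ℂ) (N : ℕ) :
    ‖1 - avgC p lam‖ * ‖∫ ω, ∑ l ∈ Finset.range N, c (ω l) * G (Sit S ω ε l θ) ∂P₀‖
      ≤ ‖avgC p c‖ * (2 + N * δ) := by
  set u : ℕ → ℂ := fun l => ∫ ω, G (Sit S ω ε l θ) ∂P₀
  have hdep (l : ℕ) : DependsOn (fun ω => G (Sit S ω ε l θ)) (Finset.Ico (0 : ℤ) l) :=
    fun ω ω' h => congrArg G (dependsOn_Sit S ε θ l h)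
  have hmul (g : Bool → ℂ) (l : ℕ) : ∫ ω, g (ω l) * G (Sit S ω ε l θ) ∂P₀ = avgC p g * u l :=
    integral_comp_apply_mul_eq_avgC_mul hiid hp (hber l) (by simp) (hdep l) g
  have hint (g : Bool → ℂ) (l : ℕ) : Integrable (fun ω => g (ω l) * G (Sit S ω ε l θ)) P₀ :=
    DependsOn.integrable_of_finset (s := Finset.Ico (0 : ℤ) (l + 1)) fun ω ω' h => by
      have hl : ω l = ω' l := h l (by simp)
      simp only [hl, hdep l fun i hi => h i (by simp at hi ⊢; omega)]
  have hu (l : ℕ) : ‖u l‖ ≤ 1 := by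
    simpa using norm_integral_le_of_norm_le_const (μ := P₀) (ae_of_all _ fun ω => hG _)
  have hustep (l : ℕ) : ‖u (l + 1) - avgC p lam * u l‖ ≤ δ := by
    rw [← hmul, ← integral_sub (hdep (l + 1)).integrable_of_finset (hint lam l)]
    simpa [Sit] using
      norm_integral_le_of_norm_le_const (μ := P₀) (ae_of_all _ fun ω => hstep (ω l) _)
  have hsum : ∫ ω, ∑ l ∈ Finset.range N, c (ω l) * G (Sit S ω ε l θ) ∂P₀
      = avgC p c * ∑ l ∈ Finset.range N, u l := by
    rw [integral_finsetSum _ fun l _ => hint c l, Finset.mul_sum]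
    exact Finset.sum_congr rfl fun l _ => hmul c l
  calc ‖1 - avgC p lam‖ * ‖∫ ω, ∑ l ∈ Finset.range N, c (ω l) * G (Sit S ω ε l θ) ∂P₀‖
      = ‖avgC p c‖ * ‖(1 - avgC p lam) * ∑ l ∈ Finset.range N, u l‖ := by
        rw [hsum, norm_mul, norm_mul, mul_left_comm]
    _ ≤ ‖avgC p c‖ * (2 + N * δ) := by
        gcongr
        exact norm_one_sub_mul_sum_range_le hu hustep N

theorem continuousAt_avgC_normalize_pow {a : Bool → ℝ → ℂ} {x : ℝ}
    (ha : ∀ s, ContinuousAt (a s) x) (ha0 : ∀ s, a s x ≠ 0) (p : ℝ) (n : ℕ) :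
    ContinuousAt (fun ε => avgC p fun s => NormedSpace.normalize (a s ε) ^ n) x := by
  have hs (s : Bool) : ContinuousAt (fun ε => NormedSpace.normalize (a s ε) ^ n) x :=
    ((continuousAt_normalize (ha0 s)).comp (ha s)).pow n
  unfold avgC
  fun_prop

theorem exists_pos_le_norm_one_sub_avgC_normalize_pow {a : Bool → ℝ → ℂ}
    (ha : ∀ s, ContinuousAt (a s) 0) (ha0 : ∀ s, ‖a s 0‖ = 1) {p : ℝ} {n : ℕ}
    (h : avgC p (fun s => a s 0 ^ n) ≠ 1) :
    ∃ δ₀ > 0, ∃ ε₀ > 0, ∀ ε, |ε| ≤ ε₀ →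
      δ₀ ≤ ‖1 - avgC p fun s => NormedSpace.normalize (a s ε) ^ n‖ ∧ ∀ s, 1 / 2 ≤ ‖a s ε‖ := by
  have hΛ0 : 0 < ‖1 - avgC p fun s => NormedSpace.normalize (a s 0) ^ n‖ := by
    simpa [NormedSpace.normalize_eq_self_of_norm_eq_one (ha0 _), sub_eq_zero] using h.symm
  have hnear : ∀ᶠ ε in nhds 0, ‖1 - avgC p fun s => NormedSpace.normalize (a s 0) ^ n‖ / 2
      < ‖1 - avgC p fun s => NormedSpace.normalize (a s ε) ^ n‖ ∧ ∀ s, 1 / 2 < ‖a s ε‖ := by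
    have hΛ := continuousAt_avgC_normalize_pow ha (fun s => norm_ne_zero_iff.mp (by simp [ha0])) p n
    refine (continuousAt_const.eventually_lt (continuousAt_const.sub hΛ).norm
      (half_lt_self hΛ0)).and (eventually_all.mpr fun s => ?_)
    exact continuousAt_const.eventually_lt (ha s).norm (by rw [ha0]; norm_num)
  obtain ⟨ε₀, hε₀, hball⟩ := Metric.nhds_basis_closedBall.eventually_iff.mp hnear
  refine ⟨_, half_pos hΛ0, ε₀, hε₀, fun ε hε => ?_⟩
  obtain ⟨hΛ, hhalf⟩ := hball (by simpa [Real.norm_eq_abs] using hε)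
  exact ⟨hΛ.le, fun s => (hhalf s).le⟩

theorem norm_cexp_pow_sub_le_of_mulVec {A : Matrix (Fin 2) (Fin 2) ℝ} {a b : ℂ}
    (hab : (A.map ofReal).mulVec vv = a • vv + b • vvbar) {x φ ρ : ℝ} (hρ : 0 < ρ)
    (h : A.mulVec ![Real.cos x, Real.sin x] = ρ • ![Real.cos φ, Real.sin φ])
    (ha : 1 / 2 ≤ ‖a‖) (n : ℕ) :
    ‖cexp (φ * I) ^ n - NormedSpace.normalize a ^ n * cexp (x * I) ^ n‖ ≤ 4 * n * ‖b‖ := by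
  obtain ⟨rfl, rfl⟩ := eq_coeffs_of_mulVec_vv hab
  have ha' : 0 < ‖linCoeff A‖ := one_half_pos.trans_le ha
  rw [← mul_pow]
  refine (norm_cexp_pow_sub_le hρ (norm_pos_iff.mp ha') (ofReal_mul_cexp_eq_of_mulVec h) n).trans
    ?_
  rw [mul_div_assoc', div_le_iff₀ ha']
  have := mul_nonneg (mul_nonneg n.cast_nonneg (norm_nonneg (antilinCoeff A))) (sub_nonneg.mpr ha)
  nlinarith

theorem norm_one_sub_avgC_mul_integral_sum_cexp_le {P₀ : Measure (ℤ → Bool)}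
    [IsProbabilityMeasure P₀] (hiid : iIndepFun (fun l (ω : ℤ → Bool) => ω l) P₀) {p : ℝ}
    (hp : 0 ≤ p) (hber : ∀ l : ℤ, P₀ {ω | ω l = true} = ENNReal.ofReal p)
    {A : Bool → Matrix (Fin 2) (Fin 2) ℝ} {a b : Bool → ℂ}
    (hab : ∀ s, ((A s).map ofReal).mulVec vv = a s • vv + b s • vvbar)
    {S : Bool → ℝ → ℝ → ℝ} {ρ : Bool → ℝ → ℝ} {ε : ℝ}
    (hSρ : ∀ s θ, 0 < ρ s θ ∧ (A s).mulVec ![Real.cos θ, Real.sin θ]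
      = ρ s θ • ![Real.cos (S s ε θ), Real.sin (S s ε θ)])
    (ha : ∀ s, 1 / 2 ≤ ‖a s‖) (n : ℕ) (c : Bool → ℂ) (N : ℕ) (θ : ℝ) :
    ‖1 - avgC p fun s => NormedSpace.normalize (a s) ^ n‖
        * ‖∫ ω, ∑ l ∈ Finset.range N, c (ω l) * cexp (Sit S ω ε l θ * I) ^ n ∂P₀‖
      ≤ ‖avgC p c‖ * (2 + N * (4 * n * (‖b true‖ + ‖b false‖))) := by
  refine norm_one_sub_avgC_mul_integral_sum_le hiid hp hber S ε θ
    (G := fun x => cexp (x * I) ^ n) (fun x => by rw [norm_pow, norm_exp_ofReal_mul_I, one_pow])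
    (fun s => NormedSpace.normalize (a s) ^ n) (fun s x => ?_) c N
  refine (norm_cexp_pow_sub_le_of_mulVec (hab s) (hSρ s x).1 (hSρ s x).2 (ha s) n).trans ?_
  gcongr
  cases s <;> simp

theorem stmt8_general
    (L : Bool → ℕ) (vh th : Bool → ℕ → ℝ) (Ec : ℝ)
    (M : Matrix (Fin 2) (Fin 2) ℝ) (η : Bool → ℝ)
    (hrot : ∀ s, M * Tpoly L vh th Ec s * M⁻¹ = rotMat (η s))
    (p : ℝ) (hp : 0 < p ∧ p < 1) (P₀ : Measure (ℤ → Bool))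
    [IsProbabilityMeasure P₀]
    (hiid : ProbabilityTheory.iIndepFun (fun (l : ℤ) (ω : ℤ → Bool) => ω l) P₀)
    (hber : ∀ l : ℤ, P₀ {ω | ω l = true} = ENNReal.ofReal p)
    (a b : Bool → ℝ → ℂ)
    (hab : ∀ s ε, ((M * Tpoly L vh th (Ec + ε) s * M⁻¹).map Complex.ofReal).mulVec vv
      = a s ε • vv + b s ε • vvbar)
    (S ρ : Bool → ℝ → ℝ → ℝ)
    (hSρ : ∀ s ε θ, 0 < ρ s ε θ ∧
      (M * Tpoly L vh th (Ec + ε) s * M⁻¹).mulVec ![Real.cos θ, Real.sin θ]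
        = ρ s ε θ • ![Real.cos (S s ε θ), Real.sin (S s ε θ)])
    (j : ℕ) (c : Bool → ℂ)
    (hnonan : avgC p (fun s => Complex.exp (2 * (j : ℂ) * Complex.I * (η s : ℂ))) ≠ 1) :
    ∃ C ε₀ : ℝ, 0 < C ∧ 0 < ε₀ ∧ ∀ ε : ℝ, |ε| ≤ ε₀ → ∀ N : ℕ, 1 ≤ N → ∀ θ : ℝ,
      ‖∫ ω, (∑ l ∈ Finset.range N,
          c (ω (l : ℤ)) * Complex.exp (2 * (j : ℂ) * Complex.I * (Sit S ω ε l θ : ℂ))) ∂P₀‖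
        ≤ C * ((N : ℝ) * (‖b true ε‖ + ‖b false ε‖) + 1) := by
  have hexp (x : ℝ) : cexp (2 * j * I * x) = cexp (x * I) ^ (2 * j) := by
    rw [← exp_nat_mul]; push_cast; ring_nf
  have hcoeff (s : Bool) (ε : ℝ) := eq_coeffs_of_mulVec_vv (hab s ε)
  have ha0 (s : Bool) : a s 0 = cexp (η s * I) := by
    rw [(hcoeff s 0).1, add_zero, hrot, linCoeff_rotMat]
  have hcont (s : Bool) : ContinuousAt (a s) 0 := by
    rw [show a s = _ from funext fun ε => (hcoeff s ε).1]
    exact (continuous_linCoeff.comp (by unfold Tpoly; fun_prop)).continuousAt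
  obtain ⟨δ₀, hδ₀, ε₀, hε₀, hnear⟩ := exists_pos_le_norm_one_sub_avgC_normalize_pow hcont
    (fun s => by rw [ha0, norm_exp_ofReal_mul_I]) (n := 2 * j)
    (by simpa [ha0, ← hexp] using hnonan)
  refine ⟨‖avgC p c‖ * (2 + 8 * j) / δ₀ + 1, ε₀, by positivity, hε₀, fun ε hε N _ θ => ?_⟩
  obtain ⟨hΛ, hhalf⟩ := hnear ε hε
  have hsum := norm_one_sub_avgC_mul_integral_sum_cexp_le hiid hp.1.le hber (fun s => hab s ε)
    (fun s θ => hSρ s ε θ) hhalf (2 * j) c N θ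
  simp only [hexp]
  refine ((le_div_iff₀' (hδ₀.trans_le hΛ)).mpr hsum).trans ?_
  have hNB : 0 ≤ (N : ℝ) * (‖b true ε‖ + ‖b false ε‖) := by positivity
  calc _ ≤ ‖avgC p c‖ * ((2 + 8 * j) * (N * (‖b true ε‖ + ‖b false ε‖) + 1)) / δ₀ := by
        gcongr
        push_cast
        nlinarith [mul_nonneg (j.cast_nonneg : (0 : ℝ) ≤ j) hNB]
    _ ≤ _ := by
        rw [← mul_assoc, mul_div_right_comm]
        gcongr
        linarith

/-- A priori bound on averaged oscillatory sums (first part of Proposition 2). -/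
theorem stmt8
    (L : Bool → ℕ) (hL : ∀ s, 1 ≤ L s) (vh th : Bool → ℕ → ℝ)
    (hth : ∀ s j, j < L s → 0 < th s j) (Ec : ℝ)
    (hcomm : Tpoly L vh th Ec true * Tpoly L vh th Ec false
           = Tpoly L vh th Ec false * Tpoly L vh th Ec true)
    (hell : ∀ s, |(Tpoly L vh th Ec s).trace| < 2 ∨
      Tpoly L vh th Ec s = 1 ∨ Tpoly L vh th Ec s = -1)
    (M : Matrix (Fin 2) (Fin 2) ℝ) (hM : IsUnit M.det) (η : Bool → ℝ)
    (hrot : ∀ s, M * Tpoly L vh th Ec s * M⁻¹ = rotMat (η s))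
    (p : ℝ) (hp : 0 < p ∧ p < 1) (P₀ : Measure (ℤ → Bool))
    [IsProbabilityMeasure P₀]
    (hiid : ProbabilityTheory.iIndepFun (fun (l : ℤ) (ω : ℤ → Bool) => ω l) P₀)
    (hber : ∀ l : ℤ, P₀ {ω | ω l = true} = ENNReal.ofReal p)
    (a b : Bool → ℝ → ℂ)
    (hab : ∀ s ε, ((M * Tpoly L vh th (Ec + ε) s * M⁻¹).map Complex.ofReal).mulVec vv
      = a s ε • vv + b s ε • vvbar)
    (S ρ : Bool → ℝ → ℝ → ℝ)
    (hSρ : ∀ s ε θ, 0 < ρ s ε θ ∧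
      (M * Tpoly L vh th (Ec + ε) s * M⁻¹).mulVec ![Real.cos θ, Real.sin θ]
        = ρ s ε θ • ![Real.cos (S s ε θ), Real.sin (S s ε θ)])
    (hScont : ∀ s, Continuous fun q : ℝ × ℝ => S s q.1 q.2)
    (hSper : ∀ s ε θ, S s ε (θ + Real.pi) = S s ε θ + Real.pi)
    (hSnorm : ∀ s θ, S s 0 θ = θ + η s)
    (j : ℕ) (hj : j = 1 ∨ j = 2) (c : Bool → ℂ)
    (hnonan : avgC p (fun s => Complex.exp (2 * (j : ℂ) * Complex.I * (η s : ℂ))) ≠ 1) :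
    ∃ C ε₀ : ℝ, 0 < C ∧ 0 < ε₀ ∧ ∀ ε : ℝ, |ε| ≤ ε₀ → ∀ N : ℕ, 1 ≤ N → ∀ θ : ℝ,
      ‖∫ ω, (∑ l ∈ Finset.range N,
          c (ω (l : ℤ)) * Complex.exp (2 * (j : ℂ) * Complex.I * (Sit S ω ε l θ : ℂ))) ∂P₀‖
        ≤ C * ((N : ℝ) * (‖b true ε‖ + ‖b false ε‖) + 1) :=
  stmt8_general L vh th Ec M η hrot p hp P₀ hiid hber a b hab S ρ hSρ j c hnonan
end
end

section
/- Assume E_c is a critical energy of the random polymer model and κ := |⟨e^{2iη_±}⟩| < 1. Then there exist C < ∞ and δ₀ > 0 such that for every r ∈ ℕ, every real δ with |δ| ≤ δ₀ and every θ ∈ ℝ, there is a measurable function X : Ω₀ → ℂ depending only on the coordinates ω₀,…,ω_{r−1}, with E₀(X) = 0 and |X(ω)| ≤ 2 for all ω, such that | e^{2i·S_{δ,ω}^r(θ)} − X(ω)·e^{2iθ} | ≤ C·( r·|δ| + κ^r ) for every ω ∈ Ω₀. -/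
open MeasureTheory Filter
open scoped BigOperators ENNReal

noncomputable section

/-! After conjugation by `M`, one polymer step at energy `E_c + δ` is a perturbation of the
rotation `R_{η_±}` whose entries are polynomials in `δ`, hence of size `O(δ)`; so it multiplies
`e^{2iθ}` by `e^{2iη_±}` up to an error `O(δ)`, uniformly in `θ`. Iterating, `e^{2iS^r(θ)}` equals
`∏_{l<r} e^{2iη_{ω_l}} · e^{2iθ}` up to `O(rδ)`. By independence this product has mean
`⟨e^{2iη_±}⟩^r`, so subtracting the mean leaves a centred `X` at the cost of an error `κ^r`. -/

open ProbabilityTheory Complex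

lemma integral_bool_eq_avgC {μ : Measure Bool} [IsProbabilityMeasure μ] {p : ℝ} (hp : 0 ≤ p)
    (hμ : μ {true} = ENNReal.ofReal p) (f : Bool → ℂ) :
    ∫ b, f b ∂μ = avgC p f := by
  have htrue : μ.real {true} = p := by rw [measureReal_def, hμ, ENNReal.toReal_ofReal hp]
  have hfalse : μ.real {false} = 1 - p := by
    rw [← htrue, ← probReal_compl_eq_one_sub (measurableSet_singleton true)]
    congr 1
    ext b
    simp
  rw [integral_fintype .of_finite, Fintype.sum_bool, htrue, hfalse, avgC]
  simp [real_smul]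

lemma integral_prod_range_eq_avgC_pow {P₀ : Measure (ℤ → Bool)} [IsProbabilityMeasure P₀]
    (hiid : iIndepFun (fun (l : ℤ) (ω : ℤ → Bool) => ω l) P₀) {p : ℝ} (hp : 0 ≤ p)
    (hber : ∀ l : ℤ, P₀ {ω | ω l = true} = ENNReal.ofReal p) (f : Bool → ℂ) (r : ℕ) :
    ∫ ω, ∏ l ∈ Finset.range r, f (ω l) ∂P₀ = avgC p f ^ r := by
  have hsingle (l : ℤ) : ∫ ω, f (ω l) ∂P₀ = avgC p f := by
    have := Measure.isProbabilityMeasure_map (μ := P₀) (measurable_pi_apply l).aemeasurable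
    rw [← integral_map (measurable_pi_apply l).aemeasurable .of_discrete]
    refine integral_bool_eq_avgC hp ?_ f
    rw [Measure.map_apply (measurable_pi_apply l) (measurableSet_singleton true)]
    exact hber l
  have hfin : iIndepFun (fun (i : Fin r) (ω : ℤ → Bool) => ω (i : ℕ)) P₀ :=
    hiid.precomp (g := fun i : Fin r => ((i : ℕ) : ℤ)) fun i j h => by
      simpa [Fin.ext_iff] using h
  simp only [Finset.prod_range]
  rw [hfin.integral_fun_prod_comp (fun _ => (measurable_pi_apply _).aemeasurable)
    (fun _ => .of_discrete)]
  simp [hsingle]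

lemma norm_sub_le_two_mul_norm_smul_sub {E : Type*} [NormedAddCommGroup E] [NormedSpace ℝ E]
    {u v : E} (hu : ‖u‖ = 1) (hv : ‖v‖ = 1) {ρ : ℝ} (hρ : 0 ≤ ρ) :
    ‖u - v‖ ≤ 2 * ‖ρ • u - v‖ := by
  have hscale : ‖u - ρ • u‖ ≤ ‖ρ • u - v‖ := by
    have hsub : u - ρ • u = (1 - ρ) • u := by rw [sub_smul, one_smul]
    calc ‖u - ρ • u‖ = |‖v‖ - ‖ρ • u‖| := by
          rw [hsub, norm_smul, norm_smul, hu, hv, Real.norm_eq_abs, Real.norm_eq_abs,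
            abs_of_nonneg hρ, mul_one, mul_one]
      _ ≤ ‖ρ • u - v‖ := by rw [norm_sub_rev (ρ • u)]; exact abs_norm_sub_norm_le v (ρ • u)
  calc ‖u - v‖ ≤ ‖u - ρ • u‖ + ‖ρ • u - v‖ := norm_sub_le_norm_sub_add_norm_sub _ _ _
    _ ≤ 2 * ‖ρ • u - v‖ := by linarith

lemma norm_sq_sub_sq_le {𝕜 : Type*} [NormedField 𝕜] {u v : 𝕜} (hu : ‖u‖ ≤ 1) (hv : ‖v‖ ≤ 1) :
    ‖u ^ 2 - v ^ 2‖ ≤ 2 * ‖u - v‖ := by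
  calc ‖u ^ 2 - v ^ 2‖ = ‖u + v‖ * ‖u - v‖ := by rw [sq_sub_sq, norm_mul]
    _ ≤ 2 * ‖u - v‖ := by
      gcongr
      linarith [norm_add_le u v]

lemma norm_exp_two_mul_I (x : ℝ) : ‖exp (2 * I * x)‖ = 1 := by
  simp [norm_exp]

lemma exp_two_mul_I_eq_sq (x : ℝ) : exp (2 * I * x) = exp (x * I) ^ 2 := by
  rw [← exp_nat_mul]
  ring_nf

open scoped Matrix

lemma rotMat_mulVec (η θ : ℝ) :
    rotMat η *ᵥ ![Real.cos θ, Real.sin θ] = ![Real.cos (θ + η), Real.sin (θ + η)] := by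
  ext i
  fin_cases i <;> simp [rotMat, Matrix.mulVec, dotProduct, Real.cos_add, Real.sin_add] <;> ring

lemma abs_mulVec_cos_sin_le {A : Matrix (Fin 2) (Fin 2) ℝ} {K : ℝ} (hA : ∀ i j, |A i j| ≤ K)
    (θ : ℝ) (i : Fin 2) : |(A *ᵥ ![Real.cos θ, Real.sin θ]) i| ≤ 2 * K := by
  simp only [Matrix.mulVec, dotProduct, Fin.sum_univ_two, Matrix.cons_val_zero,
    Matrix.cons_val_one]
  have hK : 0 ≤ K := (abs_nonneg _).trans (hA 0 0)
  calc |A i 0 * Real.cos θ + A i 1 * Real.sin θ|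
      ≤ |A i 0| * |Real.cos θ| + |A i 1| * |Real.sin θ| := by
        rw [← abs_mul, ← abs_mul]; exact abs_add_le _ _
    _ ≤ K * 1 + K * 1 :=
        add_le_add (mul_le_mul (hA i 0) (Real.abs_cos_le_one θ) (abs_nonneg _) hK)
          (mul_le_mul (hA i 1) (Real.abs_sin_le_one θ) (abs_nonneg _) hK)
    _ = 2 * K := by ring

lemma norm_exp_two_mul_I_sub_le_of_near_rotMat {A : Matrix (Fin 2) (Fin 2) ℝ}
    {η θ ρ φ K : ℝ} (hρ : 0 < ρ)
    (hvec : A *ᵥ ![Real.cos θ, Real.sin θ] = ρ • ![Real.cos φ, Real.sin φ])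
    (hA : ∀ i j, |(A - rotMat η) i j| ≤ K) :
    ‖exp (2 * I * φ) - exp (2 * I * η) * exp (2 * I * θ)‖ ≤ 16 * K := by
  set d := (A - rotMat η) *ᵥ ![Real.cos θ, Real.sin θ]
  have hd : ρ • exp (φ * I) - exp ((θ + η : ℝ) * I) = ⟨d 0, d 1⟩ := by
    have hdv : d = ρ • ![Real.cos φ, Real.sin φ] - ![Real.cos (θ + η), Real.sin (θ + η)] := by
      rw [show d = _ from Matrix.sub_mulVec _ _ _, hvec, rotMat_mulVec]
    apply Complex.ext <;> simp [hdv, exp_ofReal_mul_I_re, exp_ofReal_mul_I_im, -ofReal_add]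
  have hphase : exp (2 * I * η) * exp (2 * I * θ) = exp (2 * I * (θ + η : ℝ)) := by
    rw [← exp_add]; push_cast; ring_nf
  rw [hphase, exp_two_mul_I_eq_sq, exp_two_mul_I_eq_sq]
  calc _ ≤ 2 * ‖exp (φ * I) - exp ((θ + η : ℝ) * I)‖ :=
        norm_sq_sub_sq_le (norm_exp_ofReal_mul_I _).le (norm_exp_ofReal_mul_I _).le
    _ ≤ 2 * (2 * (|d 0| + |d 1|)) := by
        gcongr
        refine (norm_sub_le_two_mul_norm_smul_sub (norm_exp_ofReal_mul_I _)
          (norm_exp_ofReal_mul_I _) hρ.le).trans ?_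
        rw [hd]
        exact mul_le_mul_of_nonneg_left (norm_le_abs_re_add_abs_im _) zero_le_two
    _ ≤ 2 * (2 * (2 * K + 2 * K)) := by
        gcongr <;> exact abs_mulVec_cos_sin_le hA θ _
    _ = 16 * K := by ring

open Polynomial

lemma Polynomial.exists_abs_eval_sub_eval_zero_le (P : ℝ[X]) :
    ∃ K, 0 ≤ K ∧ ∀ δ : ℝ, |δ| ≤ 1 → |P.eval δ - P.eval 0| ≤ K * |δ| := by
  obtain ⟨Q, hQ⟩ : X ∣ P - C (P.eval 0) := by
    simpa using dvd_iff_isRoot.mpr (show IsRoot (P - C (P.eval 0)) 0 by simp)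
  obtain ⟨K, hK⟩ := isCompact_Icc.exists_bound_of_continuousOn
    (Q.continuous.continuousOn (s := Set.Icc (-1 : ℝ) 1))
  refine ⟨max K 0, le_max_right _ _, fun δ hδ => ?_⟩
  have hfactor : P.eval δ - P.eval 0 = δ * Q.eval δ := by simpa using congrArg (eval δ) hQ
  rw [hfactor, abs_mul, mul_comm]
  gcongr
  exact (by simpa using hK δ (abs_le.mp hδ) : |Q.eval δ| ≤ K).trans (le_max_left _ _)

lemma Polynomial.exists_abs_eval_sub_eval_zero_le_of_finite {ι : Type*} [Finite ι]
    (P : ι → ℝ[X]) :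
    ∃ K, 0 ≤ K ∧ ∀ δ : ℝ, |δ| ≤ 1 → ∀ i, |(P i).eval δ - (P i).eval 0| ≤ K * |δ| := by
  have := Fintype.ofFinite ι
  choose K hK0 hK using fun i => (P i).exists_abs_eval_sub_eval_zero_le
  refine ⟨∑ i, K i, Finset.sum_nonneg fun i _ => hK0 i, fun δ hδ i => (hK i δ hδ).trans ?_⟩
  gcongr
  exact Finset.single_le_sum (fun i _ => hK0 i) (Finset.mem_univ i)

def TstPoly (v t : ℝ) : Matrix (Fin 2) (Fin 2) ℝ[X] :=
  (1 / t) • !![C v - X, C (-t ^ 2); 1, 0]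

lemma TstPoly_eval (v t ε : ℝ) : (evalRingHom ε).mapMatrix (TstPoly v t) = Tst (v - ε) t := by
  ext i j
  fin_cases i <;> fin_cases j <;> simp [TstPoly, Tst]

lemma exists_Tblock_eq_eval (L : ℕ) (v t : ℕ → ℝ) (E : ℝ) :
    ∃ P : Matrix (Fin 2) (Fin 2) ℝ[X], ∀ ε,
      Tblock L v t (E + ε) = (evalRingHom ε).mapMatrix P := by
  refine ⟨((List.range L).reverse.map fun j => TstPoly (v j - E) (t j)).prod, fun ε => ?_⟩
  rw [Tblock, map_list_prod, List.map_map]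
  congr 1
  refine List.map_congr_left fun j _ => ?_
  rw [Function.comp_apply, TstPoly_eval, sub_sub]

lemma norm_exp_Sit_sub_prod_le (S : Bool → ℝ → ℝ → ℝ) (ω : ℤ → Bool) (δ : ℝ)
    {f : Bool → ℂ} (hf : ∀ s, ‖f s‖ = 1) {ε : ℝ}
    (hstep : ∀ s θ, ‖exp (2 * I * S s δ θ) - f s * exp (2 * I * θ)‖ ≤ ε) (r : ℕ) (θ : ℝ) :
    ‖exp (2 * I * Sit S ω δ r θ) - (∏ l ∈ Finset.range r, f (ω l)) * exp (2 * I * θ)‖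
      ≤ r * ε := by
  induction r with
  | zero => simp [Sit]
  | succ r ih =>
    set θr := Sit S ω δ r θ
    set w := (∏ l ∈ Finset.range r, f (ω l)) * exp (2 * I * θ)
    have hsplit : (∏ l ∈ Finset.range (r + 1), f (ω l)) * exp (2 * I * θ) = f (ω r) * w := by
      rw [Finset.prod_range_succ]; ring
    calc ‖exp (2 * I * S (ω r) δ θr) - (∏ l ∈ Finset.range (r + 1), f (ω l)) * exp (2 * I * θ)‖
        ≤ ‖exp (2 * I * S (ω r) δ θr) - f (ω r) * exp (2 * I * θr)‖
          + ‖f (ω r) * (exp (2 * I * θr) - w)‖ := by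
          rw [hsplit, mul_sub]
          exact norm_sub_le_norm_sub_add_norm_sub _ _ _
      _ ≤ ε + r * ε := by
          rw [norm_mul, hf, one_mul]
          exact add_le_add (hstep _ _) ih
      _ = (r + 1 : ℕ) * ε := by push_cast; ring

section Polymer

variable (L : Bool → ℕ) (vh th : Bool → ℕ → ℝ) (Ec : ℝ) (M : Matrix (Fin 2) (Fin 2) ℝ)

lemma exists_conj_Tpoly_eq_eval (s : Bool) :
    ∃ P : Matrix (Fin 2) (Fin 2) ℝ[X], ∀ ε,
      M * Tpoly L vh th (Ec + ε) s * M⁻¹ = (evalRingHom ε).mapMatrix P := by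
  obtain ⟨P, hP⟩ := exists_Tblock_eq_eval (L s) (vh s) (th s) Ec
  refine ⟨M.map C * P * M⁻¹.map C, fun ε => ?_⟩
  rw [Tpoly, hP, map_mul, map_mul]
  simp [Matrix.map_map, Function.comp_def]

variable {L vh th Ec M} {η : Bool → ℝ}

lemma exists_abs_conj_Tpoly_sub_rotMat_le
    (hrot : ∀ s, M * Tpoly L vh th Ec s * M⁻¹ = rotMat (η s)) :
    ∃ K, 0 ≤ K ∧ ∀ s δ, |δ| ≤ 1 → ∀ i j,
      |(M * Tpoly L vh th (Ec + δ) s * M⁻¹ - rotMat (η s)) i j| ≤ K * |δ| := by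
  choose P hP using exists_conj_Tpoly_eq_eval L vh th Ec M
  obtain ⟨K, hK0, hK⟩ := exists_abs_eval_sub_eval_zero_le_of_finite
    fun q : Bool × Fin 2 × Fin 2 => P q.1 q.2.1 q.2.2
  refine ⟨K, hK0, fun s δ hδ i j => ?_⟩
  have hrot' : rotMat (η s) = (evalRingHom 0).mapMatrix (P s) := by
    rw [← hrot s, ← hP s 0, add_zero]
  rw [hP s δ, hrot']
  simpa using hK δ hδ (s, i, j)

lemma exists_norm_exp_phase_shift_sub_le
    (hrot : ∀ s, M * Tpoly L vh th Ec s * M⁻¹ = rotMat (η s)) {S ρ : Bool → ℝ → ℝ → ℝ}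
    (hSρ : ∀ s ε θ, 0 < ρ s ε θ ∧
      (M * Tpoly L vh th (Ec + ε) s * M⁻¹).mulVec ![Real.cos θ, Real.sin θ]
        = ρ s ε θ • ![Real.cos (S s ε θ), Real.sin (S s ε θ)]) :
    ∃ K, 0 ≤ K ∧ ∀ s δ θ, |δ| ≤ 1 →
      ‖exp (2 * I * S s δ θ) - exp (2 * I * η s) * exp (2 * I * θ)‖ ≤ K * |δ| := by
  obtain ⟨K, hK0, hK⟩ := exists_abs_conj_Tpoly_sub_rotMat_le hrot
  refine ⟨16 * K, by positivity, fun s δ θ hδ => ?_⟩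
  rw [mul_assoc 16 K]
  exact norm_exp_two_mul_I_sub_le_of_near_rotMat (hSρ s δ θ).1 (hSρ s δ θ).2 (hK s δ hδ)

end Polymer

lemma norm_sub_sub_mul_le {a b c e : ℂ} (he : ‖e‖ = 1) :
    ‖a - (b - c) * e‖ ≤ ‖a - b * e‖ + ‖c‖ := by
  calc ‖a - (b - c) * e‖ = ‖(a - b * e) + c * e‖ := by ring_nf
    _ ≤ ‖a - b * e‖ + ‖c‖ := by simpa [he] using norm_add_le (a - b * e) (c * e)

theorem stmt10_general
    (L : Bool → ℕ) (vh th : Bool → ℕ → ℝ) (Ec : ℝ)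
    (M : Matrix (Fin 2) (Fin 2) ℝ) (η : Bool → ℝ)
    (hrot : ∀ s, M * Tpoly L vh th Ec s * M⁻¹ = rotMat (η s))
    (p : ℝ) (hp : 0 < p ∧ p < 1) (P₀ : Measure (ℤ → Bool))
    [IsProbabilityMeasure P₀]
    (hiid : ProbabilityTheory.iIndepFun (fun (l : ℤ) (ω : ℤ → Bool) => ω l) P₀)
    (hber : ∀ l : ℤ, P₀ {ω | ω l = true} = ENNReal.ofReal p)
    (hκ : ‖avgC p (fun s => Complex.exp (2 * Complex.I * (η s : ℂ)))‖ < 1)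
    (S ρ : Bool → ℝ → ℝ → ℝ)
    (hSρ : ∀ s ε θ, 0 < ρ s ε θ ∧
      (M * Tpoly L vh th (Ec + ε) s * M⁻¹).mulVec ![Real.cos θ, Real.sin θ]
        = ρ s ε θ • ![Real.cos (S s ε θ), Real.sin (S s ε θ)])
    :
    ∃ C δ₀ : ℝ, 0 < C ∧ 0 < δ₀ ∧ ∀ (r : ℕ) (δ : ℝ), |δ| ≤ δ₀ → ∀ θ : ℝ,
      ∃ X : (ℤ → Bool) → ℂ, Measurable X ∧
        (∀ ω ω' : ℤ → Bool, (∀ l : ℕ, l < r → ω (l : ℤ) = ω' (l : ℤ)) → X ω = X ω') ∧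
        (∫ ω, X ω ∂P₀) = 0 ∧ (∀ ω, ‖X ω‖ ≤ 2) ∧
        ∀ ω : ℤ → Bool,
          ‖Complex.exp (2 * Complex.I * (Sit S ω δ r θ : ℂ)) -
              X ω * Complex.exp (2 * Complex.I * (θ : ℂ))‖
            ≤ C * ((r : ℝ) * |δ| +
                ‖avgC p (fun s => Complex.exp (2 * Complex.I * (η s : ℂ)))‖ ^ r) := by
  obtain ⟨K, hK0, hK⟩ := exists_norm_exp_phase_shift_sub_le hrot hSρ
  refine ⟨K + 1, 1, by positivity, one_pos, fun r δ hδ θ => ?_⟩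
  set f : Bool → ℂ := fun s => exp (2 * I * η s)
  have hf (s : Bool) : ‖f s‖ = 1 := norm_exp_two_mul_I (η s)
  have hmeas : Measurable fun ω : ℤ → Bool => ∏ l ∈ Finset.range r, f (ω l) :=
    Finset.measurable_prod _ fun l _ => (measurable_of_countable f).comp (measurable_pi_apply _)
  have hprod (ω : ℤ → Bool) : ‖∏ l ∈ Finset.range r, f (ω l)‖ = 1 := by simp [norm_prod, hf]
  have hpow : ‖avgC p f‖ ^ r ≤ 1 := pow_le_one₀ (norm_nonneg _) hκ.le
  refine ⟨fun ω => ∏ l ∈ Finset.range r, f (ω l) - avgC p f ^ r, hmeas.sub_const _,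
    fun ω ω' hωω' => ?_, ?_, fun ω => ?_, fun ω => ?_⟩
  · simp only [Finset.prod_congr rfl fun l hl => congrArg f (hωω' l (Finset.mem_range.mp hl))]
  · rw [integral_sub (.of_bound hmeas.aestronglyMeasurable 1 (.of_forall fun ω => (hprod ω).le))
      (integrable_const _), integral_prod_range_eq_avgC_pow hiid hp.1.le hber, integral_const]
    simp
  · calc _ ≤ ‖∏ l ∈ Finset.range r, f (ω l)‖ + ‖avgC p f ^ r‖ := norm_sub_le _ _
      _ ≤ 2 := by rw [hprod, norm_pow]; linarith
  · calc _ ≤ r * (K * |δ|) + ‖avgC p f‖ ^ r := by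
          refine (norm_sub_sub_mul_le (norm_exp_two_mul_I θ)).trans
            (add_le_add ?_ (norm_pow _ _).le)
          exact norm_exp_Sit_sub_prod_le S ω δ hf (fun s θ' => hK s δ θ' hδ) r θ
      _ ≤ (K + 1) * (r * |δ| + ‖avgC p f‖ ^ r) := by
          have : 0 ≤ (r : ℝ) * |δ| := by positivity
          nlinarith [pow_nonneg (norm_nonneg (avgC p f)) r]

/-- Decoupling lemma: the iterated phase is, up to small errors, a centered random
variable times `e^{2iθ}` (Lemma 4 of the paper). -/
theorem stmt10
    (L : Bool → ℕ) (hL : ∀ s, 1 ≤ L s) (vh th : Bool → ℕ → ℝ)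
    (hth : ∀ s j, j < L s → 0 < th s j) (Ec : ℝ)
    (hcomm : Tpoly L vh th Ec true * Tpoly L vh th Ec false
           = Tpoly L vh th Ec false * Tpoly L vh th Ec true)
    (hell : ∀ s, |(Tpoly L vh th Ec s).trace| < 2 ∨
      Tpoly L vh th Ec s = 1 ∨ Tpoly L vh th Ec s = -1)
    (M : Matrix (Fin 2) (Fin 2) ℝ) (hM : IsUnit M.det) (η : Bool → ℝ)
    (hrot : ∀ s, M * Tpoly L vh th Ec s * M⁻¹ = rotMat (η s))
    (p : ℝ) (hp : 0 < p ∧ p < 1) (P₀ : Measure (ℤ → Bool))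
    [IsProbabilityMeasure P₀]
    (hiid : ProbabilityTheory.iIndepFun (fun (l : ℤ) (ω : ℤ → Bool) => ω l) P₀)
    (hber : ∀ l : ℤ, P₀ {ω | ω l = true} = ENNReal.ofReal p)
    (hκ : ‖avgC p (fun s => Complex.exp (2 * Complex.I * (η s : ℂ)))‖ < 1)
    (S ρ : Bool → ℝ → ℝ → ℝ)
    (hSρ : ∀ s ε θ, 0 < ρ s ε θ ∧
      (M * Tpoly L vh th (Ec + ε) s * M⁻¹).mulVec ![Real.cos θ, Real.sin θ]
        = ρ s ε θ • ![Real.cos (S s ε θ), Real.sin (S s ε θ)])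
    (hScont : ∀ s, Continuous fun q : ℝ × ℝ => S s q.1 q.2)
    (hSper : ∀ s ε θ, S s ε (θ + Real.pi) = S s ε θ + Real.pi)
    (hSnorm : ∀ s θ, S s 0 θ = θ + η s)
    :
    ∃ C δ₀ : ℝ, 0 < C ∧ 0 < δ₀ ∧ ∀ (r : ℕ) (δ : ℝ), |δ| ≤ δ₀ → ∀ θ : ℝ,
      ∃ X : (ℤ → Bool) → ℂ, Measurable X ∧
        (∀ ω ω' : ℤ → Bool, (∀ l : ℕ, l < r → ω (l : ℤ) = ω' (l : ℤ)) → X ω = X ω') ∧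
        (∫ ω, X ω ∂P₀) = 0 ∧ (∀ ω, ‖X ω‖ ≤ 2) ∧
        ∀ ω : ℤ → Bool,
          ‖Complex.exp (2 * Complex.I * (Sit S ω δ r θ : ℂ)) -
              X ω * Complex.exp (2 * Complex.I * (θ : ℂ))‖
            ≤ C * ((r : ℝ) * |δ| +
                ‖avgC p (fun s => Complex.exp (2 * Complex.I * (η s : ℂ)))‖ ^ r) :=
  stmt10_general L vh th Ec M η hrot p hp P₀ hiid hber hκ S ρ hSρ
end
end

section
/- Let m ≥ 1, let z, ζ ∈ ℂ, and suppose sup_{0≤k≤n≤m} ‖𝒯^z(n,k)‖ ≤ C and set D = sup_{0≤l≤m−1} 1/t(l). If C·D·|ζ|·m < 1, then sup_{0≤k≤n≤m} ‖𝒯^{z+ζ}(n,k)‖ ≤ C / (1 − C·D·|ζ|·m). -/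
open MeasureTheory Filter
open scoped BigOperators ENNReal

noncomputable section

/-- Single-site transfer matrix at complex energy. -/
def TstC (a : ℂ) (t : ℝ) : Matrix (Fin 2) (Fin 2) ℂ :=
  (1 / (t : ℂ)) • !![a, -(t : ℂ) ^ 2; 1, 0]

/-- Site-wise transfer matrix `𝒯^z(n,k)` for Jacobi data `(t,v)`. -/
def TS (t v : ℤ → ℝ) (z : ℂ) (n k : ℤ) : Matrix (Fin 2) (Fin 2) ℂ :=
  ((List.range (n - k).toNat).map fun i => TstC ((v (n - 1 - i) : ℂ) - z) (t (n - 1 - i))).prod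

/-- Euclidean operator norm of a complex 2×2 matrix. -/
def opNormC (A : Matrix (Fin 2) (Fin 2) ℂ) : ℝ := ‖Matrix.toEuclideanCLM (𝕜 := ℂ) A‖

/-!
With `w = z + ζ`, one has `T_w = T_z - (ζ / t) E` where `E = diag(1, 0)` has norm `1`, and
expanding the product telescopically (Duhamel's formula) gives
`𝒯^w(n,k) = 𝒯^z(n,k) - ∑_{k ≤ l < n} (ζ / t l) 𝒯^z(n,l+1) E 𝒯^w(l,k)`.
By strong induction on `n - k`, if all shorter `𝒯^w(l,k)` are bounded by `M = C / (1 - q)`,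
`q = C D |ζ| m`, then `‖𝒯^w(n,k)‖ ≤ C + q M = M`.
-/

open Finset
open scoped Matrix.Norms.L2Operator

section OrderedProd

variable {R : Type*}

/-- `orderedProd A n k = A (n-1) * ⋯ * A k`, and `1` when `n ≤ k`. -/
def orderedProd [Monoid R] (A : ℤ → R) (n k : ℤ) : R :=
  ((List.range (n - k).toNat).map fun i : ℕ => A (n - 1 - i)).prod

variable [Ring R] (A B : ℤ → R) {k n : ℤ}

@[simp]
lemma orderedProd_self (k : ℤ) : orderedProd A k k = 1 := by
  simp [orderedProd]

lemma orderedProd_add_one (h : k ≤ n) :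
    orderedProd A (n + 1) k = A n * orderedProd A n k := by
  have hlen : (n + 1 - k).toNat = (n - k).toNat + 1 := by omega
  rw [orderedProd, orderedProd, hlen, List.range_succ_eq_map, List.map_cons, List.prod_cons,
    List.map_map]
  congr 1
  · simp
  · congr 1
    refine List.map_congr_left fun i _ => ?_
    simp only [Function.comp_apply, Nat.cast_succ]
    congr 1
    ring

/-- Duhamel's formula for ordered products. -/
theorem orderedProd_eq_add_sum (h : k ≤ n) :
    orderedProd B n k = orderedProd A n k +
      ∑ l ∈ Ico k n, orderedProd A n (l + 1) * (B l - A l) * orderedProd B l k := by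
  induction n, h using Int.leInduction with
  | base => simp
  | succ n hkn ih =>
    have hshift : ∀ l ∈ Ico k n, A n * (orderedProd A n (l + 1) * (B l - A l) *
        orderedProd B l k) = orderedProd A (n + 1) (l + 1) * (B l - A l) * orderedProd B l k := by
      intro l hl
      rw [orderedProd_add_one A (by grind), mul_assoc, mul_assoc, mul_assoc]
    rw [orderedProd_add_one B hkn, orderedProd_add_one A hkn, ← insert_Ico_right_eq_Ico_add_one hkn,
      sum_insert right_notMem_Ico, orderedProd_self, one_mul, ← sum_congr rfl hshift, ← mul_sum]
    calc B n * orderedProd B n k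
        = A n * orderedProd B n k + (B n - A n) * orderedProd B n k := by noncomm_ring
      _ = _ := by rw [ih]; noncomm_ring

end OrderedProd

section NormedRing

variable {R : Type*} [NormedRing R] {A B : ℤ → R} {C ε M : ℝ} {k n m : ℤ}

lemma norm_orderedProd_le_add_mul (hkn : k ≤ n) (hC0 : 0 ≤ C) (hε0 : 0 ≤ ε)
    (hA : ∀ l, k ≤ l → l ≤ n → ‖orderedProd A n l‖ ≤ C)
    (hε : ∀ l ∈ Ico k n, ‖B l - A l‖ ≤ ε) (hB : ∀ l ∈ Ico k n, ‖orderedProd B l k‖ ≤ M) :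
    ‖orderedProd B n k‖ ≤ C + (n - k) * (C * ε * M) := by
  have hterm : ∀ l ∈ Ico k n,
      ‖orderedProd A n (l + 1) * (B l - A l) * orderedProd B l k‖ ≤ C * ε * M := by
    intro l hl
    have hl' := mem_Ico.mp hl
    calc _ ≤ ‖orderedProd A n (l + 1)‖ * ‖B l - A l‖ * ‖orderedProd B l k‖ :=
          norm_mul₃_le
      _ ≤ C * ε * M := by
        gcongr
        · exact hA _ (by omega) (by omega)
        · exact hε l hl
        · exact hB l hl
  calc ‖orderedProd B n k‖
      ≤ ‖orderedProd A n k‖ + ∑ l ∈ Ico k n,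
          ‖orderedProd A n (l + 1) * (B l - A l) * orderedProd B l k‖ := by
        rw [orderedProd_eq_add_sum A B hkn]
        refine (norm_add_le _ _).trans ?_
        gcongr
        exact norm_sum_le _ _
    _ ≤ C + (Ico k n).card • (C * ε * M) :=
        add_le_add (hA k le_rfl hkn) (sum_le_card_nsmul _ _ _ hterm)
    _ = C + (n - k) * (C * ε * M) := by
        have hcard : ((Ico k n).card : ℝ) = n - k := by
          rw [Int.card_Ico]
          exact_mod_cast Int.toNat_of_nonneg (by omega)
        rw [nsmul_eq_mul, hcard]

theorem norm_orderedProd_le_div (hε0 : 0 ≤ ε)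
    (hA : ∀ k n : ℤ, 0 ≤ k → k ≤ n → n ≤ m → ‖orderedProd A n k‖ ≤ C)
    (hε : ∀ l : ℤ, 0 ≤ l → l < m → ‖B l - A l‖ ≤ ε) (hsmall : C * ε * m < 1)
    (hk : 0 ≤ k) (hkn : k ≤ n) (hnm : n ≤ m) :
    ‖orderedProd B n k‖ ≤ C / (1 - C * ε * m) := by
  have hq : 0 < 1 - C * ε * m := by linarith
  have hC0 : 0 ≤ C := (norm_nonneg _).trans (hA k k hk le_rfl (hkn.trans hnm))
  induction hj : (n - k).toNat using Nat.strong_induction_on generalizing n with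
  | _ j ih =>
    calc ‖orderedProd B n k‖
        ≤ C + (n - k) * (C * ε * (C / (1 - C * ε * m))) := by
          refine norm_orderedProd_le_add_mul hkn hC0 hε0
            (fun l hkl hln => hA l n (by omega) hln hnm)
            (fun l hl => hε l (by grind) (by grind)) (fun l hl => ?_)
          obtain ⟨hkl, hln⟩ := mem_Ico.mp hl
          exact ih (l - k).toNat (by omega) hkl (by omega) rfl
      _ ≤ C + m * (C * ε * (C / (1 - C * ε * m))) := by
          gcongr
          exact_mod_cast (by omega : n - k ≤ m)
      _ = C / (1 - C * ε * m) := by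
          linear_combination -(div_mul_cancel₀ C hq.ne')

end NormedRing

lemma opNormC_eq_norm (A : Matrix (Fin 2) (Fin 2) ℂ) : opNormC A = ‖A‖ := rfl

lemma TS_eq_orderedProd (t v : ℤ → ℝ) (z : ℂ) (n k : ℤ) :
    TS t v z n k = orderedProd (fun j => TstC ((v j : ℂ) - z) (t j)) n k := by
  simp only [TS, orderedProd, bind_pure_comp, List.map_eq_map, List.map_map]
  rfl

lemma TstC_sub_sub_TstC (a ζ : ℂ) (s : ℝ) :
    TstC (a - ζ) s - TstC a s = (-ζ / s) • Matrix.diagonal ![1, 0] := by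
  ext i j
  fin_cases i <;> fin_cases j <;> simp [TstC]
  ring

lemma norm_TstC_sub_sub_TstC_le (a ζ : ℂ) {s : ℝ} (hs : 0 < s) :
    ‖TstC (a - ζ) s - TstC a s‖ ≤ ‖ζ‖ / s := by
  have hE : ‖(Matrix.diagonal ![1, 0] : Matrix (Fin 2) (Fin 2) ℂ)‖ ≤ 1 := by
    rw [Matrix.l2_opNorm_diagonal]
    refine pi_norm_le_iff_of_nonneg zero_le_one |>.mpr fun i => ?_
    fin_cases i <;> simp
  rw [TstC_sub_sub_TstC, norm_smul, norm_div, norm_neg, Complex.norm_real,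
    Real.norm_of_nonneg hs.le]
  exact mul_le_of_le_one_right (by positivity) hE

/-- Perturbative bound on transfer matrices (Lemma 1 of the paper). -/
theorem stmt11 (t v : ℤ → ℝ) (ht : ∀ n, 0 < t n) (m : ℤ) (hm : 1 ≤ m) (z ζ : ℂ)
    (C D : ℝ)
    (hC : ∀ k n : ℤ, 0 ≤ k → k ≤ n → n ≤ m → opNormC (TS t v z n k) ≤ C)
    (hD : ∀ l : ℤ, 0 ≤ l → l ≤ m - 1 → 1 / t l ≤ D)
    (hsmall : C * D * ‖ζ‖ * (m : ℝ) < 1) :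
    ∀ k n : ℤ, 0 ≤ k → k ≤ n → n ≤ m →
      opNormC (TS t v (z + ζ) n k) ≤ C / (1 - C * D * ‖ζ‖ * (m : ℝ)) := by
  intro k n hk hkn hnm
  have hD0 : 0 ≤ D := (one_div_pos.mpr (ht 0)).le.trans (hD 0 le_rfl (by omega))
  have hstep : ∀ l : ℤ, 0 ≤ l → l < m →
      ‖TstC ((v l : ℂ) - (z + ζ)) (t l) - TstC ((v l : ℂ) - z) (t l)‖ ≤ D * ‖ζ‖ := by
    intro l hl hlm
    rw [← sub_sub]
    calc _ ≤ ‖ζ‖ / t l := norm_TstC_sub_sub_TstC_le _ _ (ht l)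
      _ = 1 / t l * ‖ζ‖ := by ring
      _ ≤ D * ‖ζ‖ := by gcongr; exact hD l hl (by omega)
  rw [opNormC_eq_norm, TS_eq_orderedProd, mul_assoc C D]
  simp only [opNormC_eq_norm, TS_eq_orderedProd] at hC
  exact norm_orderedProd_le_div (by positivity) hC hstep (by linarith) hk hkn hnm
end
end

section
/- For all z, ζ ∈ ℂ and all integers k ≤ n: 𝒯^{z+ζ}(n,k) = 𝒯^z(n,k) − ζ·Σ_{l=k}^{n−1} 𝒯^{z+ζ}(n,l+1) · (1/t(l)) · P · 𝒯^z(l,k), where P = [[1,0],[0,0]]. -/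
open MeasureTheory Filter
open scoped BigOperators ENNReal

noncomputable section

/-- Discrete Duhamel formula for the propagators `U`, `W` generated by the one-step factors
`a`, `b`. -/
theorem propagator_eq_sub_sum {R : Type*} [Ring R] (a b : ℤ → R) (U W : ℤ → ℤ → R)
    (hU_self : ∀ k, U k k = 1) (hW_self : ∀ k, W k k = 1)
    (hU_succ : ∀ k n, k ≤ n → U (n + 1) k = a n * U n k)
    (hW_succ : ∀ k n, k ≤ n → W (n + 1) k = b n * W n k) {k n : ℤ} (hkn : k ≤ n) :
    W n k = U n k - ∑ i ∈ Finset.range (n - k).toNat,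
      W n (k + i + 1) * (a (k + i) - b (k + i)) * U (k + i) k := by
  obtain ⟨m, rfl⟩ : ∃ m : ℕ, n = k + m := ⟨(n - k).toNat, by omega⟩
  simp only [add_sub_cancel_left, Int.toNat_natCast]
  clear hkn
  induction m with
  | zero => simp [hU_self, hW_self]
  | succ m ih =>
    have hk : k ≤ k + m := by omega
    have hshift : ∀ i ∈ Finset.range m,
        W (k + m + 1) (k + i + 1) * (a (k + i) - b (k + i)) * U (k + i) k =
          b (k + m) * (W (k + m) (k + i + 1) * (a (k + i) - b (k + i)) * U (k + i) k) := by
      intro i hi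
      rw [Finset.mem_range] at hi
      rw [hW_succ _ _ (by omega), mul_assoc, mul_assoc, mul_assoc]
    rw [Nat.cast_succ, ← add_assoc, hW_succ _ _ hk, hU_succ _ _ hk, ih, Finset.sum_range_succ,
      Finset.sum_congr rfl hshift, ← Finset.mul_sum, hW_self]
    noncomm_ring

lemma TS_self (t v : ℤ → ℝ) (z : ℂ) (k : ℤ) : TS t v z k k = 1 := by
  simp [TS]

lemma TS_succ (t v : ℤ → ℝ) (z : ℂ) {k n : ℤ} (h : k ≤ n) :
    TS t v z (n + 1) k = TstC ((v n : ℂ) - z) (t n) * TS t v z n k := by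
  have hlen : (n + 1 - k).toNat = (n - k).toNat + 1 := by omega
  -- `TS` casts `List.range _` to `List ℤ` through the list monad; turn that back into a `map`.
  simp only [TS, List.pure_def, List.bind_eq_flatMap, ← List.map_eq_flatMap]
  rw [hlen, List.range_succ_eq_map, List.map_cons, List.map_cons, List.prod_cons, List.map_map,
    List.map_map, List.map_map]
  congr 1
  · simp
  · refine congrArg _ (List.map_congr_left fun i _ => ?_)
    simp only [Function.comp_apply, Nat.cast_succ]
    ring_nf

lemma TstC_sub (a ζ : ℂ) (s : ℝ) :
    TstC a s - TstC (a - ζ) s = ζ • ((1 / (s : ℂ)) • !![1, 0; 0, 0]) := by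
  ext i j
  fin_cases i <;> fin_cases j <;> simp [TstC]; ring

theorem stmt12_general (t v : ℤ → ℝ) (z ζ : ℂ) (k n : ℤ) (hkn : k ≤ n) :
    TS t v (z + ζ) n k =
      TS t v z n k - ζ • ∑ i ∈ Finset.range (n - k).toNat,
        TS t v (z + ζ) n (k + i + 1) *
          ((1 / (t (k + i) : ℂ)) • (!![1, 0; 0, 0] : Matrix (Fin 2) (Fin 2) ℂ)) *
          TS t v z (k + i) k := by
  have hstep : ∀ k n, k ≤ n → TS t v (z + ζ) (n + 1) k =
      TstC ((v n : ℂ) - z - ζ) (t n) * TS t v (z + ζ) n k := by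
    intro k n h
    rw [TS_succ t v _ h, sub_add_eq_sub_sub]
  rw [propagator_eq_sub_sum _ _ _ _ (TS_self t v z) (TS_self t v (z + ζ))
    (fun _ _ => TS_succ t v z) hstep hkn, Finset.smul_sum]
  simp only [TstC_sub, mul_smul_comm, smul_mul_assoc]

/-- Resolvent-type perturbation identity for transfer matrices. -/
theorem stmt12 (t v : ℤ → ℝ) (ht : ∀ n, 0 < t n) (z ζ : ℂ) (k n : ℤ) (hkn : k ≤ n) :
    TS t v (z + ζ) n k =
      TS t v z n k - ζ • ∑ i ∈ Finset.range (n - k).toNat,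
        TS t v (z + ζ) n (k + i + 1) *
          ((1 / (t (k + i) : ℂ)) • (!![1, 0; 0, 0] : Matrix (Fin 2) (Fin 2) ℂ)) *
          TS t v z (k + i) k :=
  stmt12_general t v z ζ k n hkn
end
end

section
/- For every integer n ≥ 1 the map E ↦ θ^{0,E}(n) is differentiable and R^{0,E}(n)²·∂_E θ^{0,E}(n) = Σ_{l=0}^{n−1} u^E(l)², and for every integer n ≤ −1 it is differentiable and R^{0,E}(n)²·∂_E θ^{0,E}(n) = −Σ_{l=n}^{−1} u^E(l)². In particular ∂_E θ^{0,E}(n) > 0 for n ≥ 2 and ∂_E θ^{0,E}(n) < 0 for n ≤ −2. -/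
open MeasureTheory Filter
open scoped BigOperators ENNReal

noncomputable section

open Complex in
lemma myIm {f : ℝ → ℂ} {f' : ℂ} {x : ℝ} (hf : HasDerivAt f f' x) :
    HasDerivAt (fun y => (f y).im) f'.im x := by
  exact (Complex.imCLM.hasFDerivAt.comp_hasDerivAt x hf)

open Complex in
lemma aux_im (p q r s pd qd rd sd : ℝ) (h1 : p^2+q^2 ≠ 0) (h0 : r^2+s^2 ≠ 0) :
    ((-I * ((pd+qd*I) * (r - s*I) + (p+q*I) * (rd - sd*I))) /
      (-I * ((p+q*I)*(r - s*I)))).im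
      = (qd*p - pd*q)/(p^2+q^2) - (sd*r - rd*s)/(r^2+s^2) := by
  have hn : Complex.normSq (-I * ((p+q*I)*(r - s*I))) = (p^2+q^2)*(r^2+s^2) := by
    simp [Complex.normSq_apply, Complex.mul_re, Complex.mul_im]; ring
  rw [Complex.div_im, hn]
  simp only [Complex.mul_re, Complex.mul_im, Complex.add_re, Complex.add_im,
    Complex.sub_re, Complex.sub_im, Complex.I_re, Complex.I_im, Complex.ofReal_re,
    Complex.ofReal_im, Complex.neg_re, Complex.neg_im]
  field_simp
  ring

open Complex in
lemma aux_arg (R₁ R₀ a b : ℝ) (hR₁ : 0 < R₁) (hR₀ : 0 < R₀)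
    (h1 : -(Real.pi/2) < a - b) (h2 : a - b < 3*Real.pi/2) :
    Complex.arg (-I * (((R₁*Real.cos a : ℝ) + (R₁*Real.sin a : ℝ) * I) *
      ((R₀*Real.cos b : ℝ) - (R₀*Real.sin b : ℝ) * I))) = a - b - Real.pi/2 := by
  have key : (-I * (((R₁*Real.cos a : ℝ) + (R₁*Real.sin a : ℝ) * I) *
      ((R₀*Real.cos b : ℝ) - (R₀*Real.sin b : ℝ) * I)))
      = ((R₁*R₀ : ℝ) : ℂ) * ((Real.cos (a-b-Real.pi/2) : ℝ) + (Real.sin (a-b-Real.pi/2) : ℝ) * I) := by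
    have hc : Real.cos (a-b-Real.pi/2) = Real.sin (a-b) := by
      rw [Real.cos_sub]; simp
    have hs : Real.sin (a-b-Real.pi/2) = -Real.cos (a-b) := by
      rw [Real.sin_sub]; simp
    rw [hc, hs, Real.sin_sub, Real.cos_sub]
    apply Complex.ext <;>
      simp [Complex.mul_re, Complex.mul_im] <;> ring
  rw [key, Complex.arg_real_mul _ (by positivity), Complex.ofReal_cos, Complex.ofReal_sin,
    Complex.arg_cos_add_sin_mul_I]
  constructor <;> [linarith [Real.pi_pos]; linarith [Real.pi_pos]]

open Complex in
lemma aux_nz1 (R a : ℝ) (hR : 0 < R) : ((R*Real.cos a : ℝ) : ℂ) + (R*Real.sin a : ℝ) * I ≠ 0 := by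
  intro h
  have h2 := congrArg Complex.normSq h
  simp only [Complex.normSq_apply, Complex.add_re, Complex.add_im, Complex.sub_re,
    Complex.sub_im, Complex.mul_re, Complex.mul_im, Complex.I_re, Complex.I_im,
    Complex.ofReal_re, Complex.ofReal_im, Complex.normSq_zero, Complex.zero_re,
    Complex.zero_im] at h2
  ring_nf at h2
  nlinarith [Real.sin_sq_add_cos_sq a, h2]

open Complex in
lemma aux_nz2 (R a : ℝ) (hR : 0 < R) : ((R*Real.cos a : ℝ) : ℂ) - (R*Real.sin a : ℝ) * I ≠ 0 := by
  intro h
  have h2 := congrArg Complex.normSq h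
  simp only [Complex.normSq_apply, Complex.add_re, Complex.add_im, Complex.sub_re,
    Complex.sub_im, Complex.mul_re, Complex.mul_im, Complex.I_re, Complex.I_im,
    Complex.ofReal_re, Complex.ofReal_im, Complex.normSq_zero, Complex.zero_re,
    Complex.zero_im] at h2
  ring_nf at h2
  nlinarith [Real.sin_sq_add_cos_sq a, h2]

open Complex in
lemma aux_slit (R₁ R₀ a b : ℝ) (hR₁ : 0 < R₁) (hR₀ : 0 < R₀)
    (h1 : -(Real.pi/2) < a - b) (h2 : a - b < 3*Real.pi/2) :
    -I * (((R₁*Real.cos a : ℝ) + (R₁*Real.sin a : ℝ) * I) *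
      ((R₀*Real.cos b : ℝ) - (R₀*Real.sin b : ℝ) * I)) ∈ Complex.slitPlane := by
  rw [Complex.mem_slitPlane_iff_arg]
  constructor
  · rw [aux_arg R₁ R₀ a b hR₁ hR₀ h1 h2]
    intro h; linarith
  · exact mul_ne_zero (by simp [Complex.I_ne_zero])
      (mul_ne_zero (aux_nz1 R₁ a hR₁) (aux_nz2 R₀ b hR₀))

/-- Derivative of the free Prüfer phase with respect to the energy. -/
theorem stmt13 (t v : ℤ → ℝ) (ht : ∀ n, 0 < t n) (θ₀ : ℝ)
    (u R θ : ℝ → ℤ → ℝ)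
    (hrec : ∀ E n, -(t (n + 1)) * u E (n + 1) + v n * u E n - t n * u E (n - 1) = E * u E n)
    (hinit : ∀ E, t 0 * u E 0 = Real.cos θ₀ ∧ u E (-1) = Real.sin θ₀)
    (hRpos : ∀ E n, 0 < R E n)
    (hPruef : ∀ E n, t n * u E n = R E n * Real.cos (θ E n) ∧
      u E (n - 1) = R E n * Real.sin (θ E n))
    (hθinit : ∀ E, θ E 0 = θ₀)
    (hbranch : ∀ E n, -(Real.pi / 2) < θ E (n + 1) - θ E n ∧
      θ E (n + 1) - θ E n < 3 * Real.pi / 2) :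
    ∀ (E : ℝ) (n : ℤ),
      (1 ≤ n → ∃ d : ℝ, HasDerivAt (fun E' => θ E' n) d E ∧
        R E n ^ 2 * d = ∑ l ∈ Finset.range n.toNat, u E l ^ 2 ∧ (2 ≤ n → 0 < d)) ∧
      (n ≤ -1 → ∃ d : ℝ, HasDerivAt (fun E' => θ E' n) d E ∧
        R E n ^ 2 * d = -∑ l ∈ Finset.range (-n).toNat, u E (n + l) ^ 2 ∧ (n ≤ -2 → d < 0)) := by
  intro E n
  -- the argument identity for the phase increment
  have harg : ∀ (E' : ℝ) (k : ℤ),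
      Complex.arg (-Complex.I * (((t (k+1) * u E' (k+1) : ℝ) + (u E' k : ℝ) * Complex.I) *
        ((t k * u E' k : ℝ) - (u E' (k-1) : ℝ) * Complex.I)))
        = θ E' (k+1) - θ E' k - Real.pi/2 := by
    intro E' k
    have h2 := hPruef E' k
    have h1 := hPruef E' (k+1)
    have h1b : u E' k = R E' (k+1) * Real.sin (θ E' (k+1)) := by
      rw [← h1.2]; congr 1; ring
    rw [h2.1, h1.1, h2.2, h1b]
    exact aux_arg _ _ _ _ (hRpos E' (k+1)) (hRpos E' k) (hbranch E' k).1 (hbranch E' k).2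
  have hslit : ∀ (E' : ℝ) (k : ℤ),
      -Complex.I * (((t (k+1) * u E' (k+1) : ℝ) + (u E' k : ℝ) * Complex.I) *
        ((t k * u E' k : ℝ) - (u E' (k-1) : ℝ) * Complex.I)) ∈ Complex.slitPlane := by
    intro E' k
    have h2 := hPruef E' k
    have h1 := hPruef E' (k+1)
    have h1b : u E' k = R E' (k+1) * Real.sin (θ E' (k+1)) := by
      rw [← h1.2]; congr 1; ring
    rw [h2.1, h1.1, h2.2, h1b]
    exact aux_slit _ _ _ _ (hRpos E' (k+1)) (hRpos E' k) (hbranch E' k).1 (hbranch E' k).2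
  have L1 : ∀ (E' : ℝ) (k : ℤ),
      θ E' (k+1) = θ E' k + (Real.pi/2 +
        (Complex.log (-Complex.I * (((t (k+1) * u E' (k+1) : ℝ) + (u E' k : ℝ) * Complex.I) *
          ((t k * u E' k : ℝ) - (u E' (k-1) : ℝ) * Complex.I)))).im) := by
    intro E' k
    rw [Complex.log_im, harg E' k]; ring
  -- base data
  have hu0fun : (fun E' : ℝ => u E' 0) = fun _ => Real.cos θ₀ / t 0 := by
    funext E'
    rw [eq_div_iff (ne_of_gt (ht 0))]
    linear_combination (hinit E').1
  have hum1fun : (fun E' : ℝ => u E' (-1)) = fun _ => Real.sin θ₀ := by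
    funext E'
    exact (hinit E').2
  have hθ0fun : (fun E' : ℝ => θ E' 0) = fun _ => θ₀ := funext hθinit
  -- forward induction
  have FWD : ∀ m : ℕ, ∃ du1 du0 dθ : ℝ,
      HasDerivAt (fun E' => u E' (m:ℤ)) du1 E ∧
      HasDerivAt (fun E' => u E' ((m:ℤ) - 1)) du0 E ∧
      HasDerivAt (fun E' => θ E' (m:ℤ)) dθ E ∧
      R E (m:ℤ) ^ 2 * dθ = ∑ l ∈ Finset.range m, u E (l:ℤ) ^ 2 ∧
      t (m:ℤ) * (du0 * u E (m:ℤ) - du1 * u E ((m:ℤ)-1)) = ∑ l ∈ Finset.range m, u E (l:ℤ) ^ 2 := by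
    intro m
    induction m with
    | zero =>
      refine ⟨0, 0, 0, ?_, ?_, ?_, by simp, by simp⟩
      · rw [show ((0:ℕ):ℤ) = 0 from by norm_num, hu0fun]; exact hasDerivAt_const E _
      · rw [show ((0:ℕ):ℤ) - 1 = -1 from by norm_num, hum1fun]; exact hasDerivAt_const E _
      · rw [show ((0:ℕ):ℤ) = 0 from by norm_num, hθ0fun]; exact hasDerivAt_const E _
    | succ m ih =>
      obtain ⟨du1, du0, dθ, hu1, hu0, hθm, hR2, hA⟩ := ih
      set k : ℤ := (m:ℤ) with hk
      have hcast : ((m+1:ℕ):ℤ) = k + 1 := by push_cast; ring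
      have hsub : ((m+1:ℕ):ℤ) - 1 = k := by push_cast; ring
      set S : ℝ := ∑ l ∈ Finset.range m, u E (l:ℤ) ^ 2 with hS
      -- derivative of u at k+1
      have hu2fun : (fun E' : ℝ => u E' (k+1))
          = fun E' => ((v k - E') * u E' k - t k * u E' (k-1)) / t (k+1) := by
        funext E'
        rw [eq_div_iff (ne_of_gt (ht (k+1)))]
        linear_combination -(hrec E' k)
      set du2 : ℝ := (-1 * u E k + (v k - E) * du1 - t k * du0) / t (k+1) with hdu2
      have hu2 : HasDerivAt (fun E' => u E' (k+1)) du2 E := by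
        rw [hu2fun]
        exact ((((hasDerivAt_id E).const_sub (v k)).mul hu1).sub (hu0.const_mul (t k))).div_const _
      have e1 : t (k+1) * du2 = -1 * u E k + (v k - E) * du1 - t k * du0 := by
        rw [hdu2, mul_comm, div_mul_cancel₀ _ (ne_of_gt (ht (k+1)))]
      have hA' : t (k+1) * (du1 * u E (k+1) - du2 * u E k) = S + u E k ^ 2 := by
        linear_combination (-du1) * (hrec E k) - u E k * e1 + hA
      -- quadratic identities
      have hq1 : R E (k+1)^2 = (t (k+1) * u E (k+1))^2 + (u E k)^2 := by
        have h1 := hPruef E (k+1)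
        have h1b : u E k = R E (k+1) * Real.sin (θ E (k+1)) := by
          rw [← h1.2]; congr 1; ring
        rw [h1.1, h1b]
        linear_combination -(R E (k+1))^2 * (Real.sin_sq_add_cos_sq (θ E (k+1)))
      have hq0 : R E k^2 = (t k * u E k)^2 + (u E (k-1))^2 := by
        have h0 := hPruef E k
        rw [h0.1, h0.2]
        linear_combination -(R E k)^2 * (Real.sin_sq_add_cos_sq (θ E k))
      have h1ne : R E (k+1)^2 ≠ 0 := (pow_pos (hRpos E (k+1)) 2).ne'
      have h0ne : R E k^2 ≠ 0 := (pow_pos (hRpos E k) 2).ne'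
      -- derivative of the phase increment
      have hgd : HasDerivAt (fun E' => -Complex.I * (((t (k+1) * u E' (k+1) : ℝ) + (u E' k : ℝ) * Complex.I) *
          ((t k * u E' k : ℝ) - (u E' (k-1) : ℝ) * Complex.I)))
          (-Complex.I * ((((t (k+1) * du2 : ℝ) : ℂ) + (du1 : ℝ) * Complex.I) *
              ((t k * u E k : ℝ) - (u E (k-1) : ℝ) * Complex.I)
            + (((t (k+1) * u E (k+1) : ℝ) : ℂ) + (u E k : ℝ) * Complex.I) *
              (((t k * du1 : ℝ) : ℂ) - (du0 : ℝ) * Complex.I))) E := by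
        exact ((((hu2.const_mul (t (k+1))).ofReal_comp.add
            (hu1.ofReal_comp.mul_const Complex.I)).mul
          (((hu1.const_mul (t k)).ofReal_comp).sub
            (hu0.ofReal_comp.mul_const Complex.I))).const_mul (-Complex.I))
      have him := myIm ((hgd.clog_real (hslit E k)))
      beta_reduce at him
      rw [aux_im (t (k+1) * u E (k+1)) (u E k) (t k * u E k) (u E (k-1))
        (t (k+1) * du2) du1 (t k * du1) du0 (by rw [← hq1]; exact h1ne) (by rw [← hq0]; exact h0ne)] at him
      rw [show du1*(t (k+1)*u E (k+1)) - (t (k+1)*du2)*(u E k) = S + u E k^2 from by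
          linear_combination hA',
        show du0*(t k*u E k) - (t k*du1)*(u E (k-1)) = S from by linear_combination hA,
        ← hq1, ← hq0] at him
      set D : ℝ := (S + u E k^2) / R E (k+1)^2 - S / R E k^2 with hD
      have hθfun : (fun E' : ℝ => θ E' (k+1)) = (fun E' => θ E' k + (Real.pi/2 +
          (Complex.log (-Complex.I * (((t (k+1) * u E' (k+1) : ℝ) + (u E' k : ℝ) * Complex.I) *
            ((t k * u E' k : ℝ) - (u E' (k-1) : ℝ) * Complex.I)))).im)) :=
        funext fun E' => L1 E' k
      have hθ' : HasDerivAt (fun E' => θ E' (k+1)) (dθ + (0 + D)) E := by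
        rw [hθfun]
        exact hθm.add ((hasDerivAt_const E _).add him)
      have hdθval : dθ = S / R E k ^ 2 := by
        rw [eq_div_iff h0ne]; linear_combination hR2
      refine ⟨du2, du1, dθ + (0 + D), ?_, ?_, ?_, ?_, ?_⟩
      · rw [hcast]; exact hu2
      · rw [hsub]; exact hu1
      · rw [hcast]; exact hθ'
      · rw [hcast, Finset.sum_range_succ, ← hk, ← hS, hD, hdθval]
        have hR1ne := (hRpos E (k+1)).ne'
        field_simp
        ring
      · rw [hsub, hcast, Finset.sum_range_succ, ← hk, ← hS]
        linear_combination hA'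
  -- backward induction
  have BWD : ∀ m : ℕ, ∃ du1 du0 dθ : ℝ,
      HasDerivAt (fun E' => u E' (-(m:ℤ))) du1 E ∧
      HasDerivAt (fun E' => u E' (-(m:ℤ) - 1)) du0 E ∧
      HasDerivAt (fun E' => θ E' (-(m:ℤ))) dθ E ∧
      R E (-(m:ℤ)) ^ 2 * dθ = -∑ l ∈ Finset.range m, u E (-(m:ℤ) + l) ^ 2 ∧
      t (-(m:ℤ)) * (du0 * u E (-(m:ℤ)) - du1 * u E (-(m:ℤ) - 1))
        = -∑ l ∈ Finset.range m, u E (-(m:ℤ) + l) ^ 2 := by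
    intro m
    induction m with
    | zero =>
      refine ⟨0, 0, 0, ?_, ?_, ?_, by simp, by simp⟩
      · rw [show -((0:ℕ):ℤ) = 0 from by norm_num, hu0fun]; exact hasDerivAt_const E _
      · rw [show -((0:ℕ):ℤ) - 1 = -1 from by norm_num, hum1fun]; exact hasDerivAt_const E _
      · rw [show -((0:ℕ):ℤ) = 0 from by norm_num, hθ0fun]; exact hasDerivAt_const E _
    | succ m ih =>
      obtain ⟨du1, du0, dθ, hu1, hu0, hθm, hR2, hA⟩ := ih
      set nn : ℤ := -(m:ℤ) with hnn
      have hcast : -((m+1:ℕ):ℤ) = nn - 1 := by rw [hnn]; push_cast; ring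
      have hsub : -((m+1:ℕ):ℤ) - 1 = nn - 1 - 1 := by rw [hcast]
      set S : ℝ := ∑ l ∈ Finset.range m, u E (nn + l) ^ 2 with hS
      have hidx : nn - 1 + 1 = nn := by ring
      -- derivative of u at nn-1-1
      have hu2fun : (fun E' : ℝ => u E' (nn-1-1))
          = fun E' => ((v (nn-1) - E') * u E' (nn-1) - t nn * u E' nn) / t (nn-1) := by
        funext E'
        have h := hrec E' (nn-1)
        rw [hidx] at h
        rw [eq_div_iff (ne_of_gt (ht (nn-1)))]
        linear_combination -h
      set du2 : ℝ := (-1 * u E (nn-1) + (v (nn-1) - E) * du0 - t nn * du1) / t (nn-1) with hdu2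
      have hu2 : HasDerivAt (fun E' => u E' (nn-1-1)) du2 E := by
        rw [hu2fun]
        exact ((((hasDerivAt_id E).const_sub (v (nn-1))).mul hu0).sub
          (hu1.const_mul (t nn))).div_const _
      have e1 : t (nn-1) * du2 = -1 * u E (nn-1) + (v (nn-1) - E) * du0 - t nn * du1 := by
        rw [hdu2, mul_comm, div_mul_cancel₀ _ (ne_of_gt (ht (nn-1)))]
      have hrecE : -(t nn) * u E nn + v (nn-1) * u E (nn-1) - t (nn-1) * u E (nn-1-1)
          = E * u E (nn-1) := by
        have h := hrec E (nn-1); rw [hidx] at h; exact h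
      have hA' : t (nn-1) * (du2 * u E (nn-1) - du0 * u E (nn-1-1)) = -S - u E (nn-1) ^ 2 := by
        linear_combination (u E (nn-1)) * e1 + du0 * hrecE + hA
      -- quadratic identities
      have hq1 : R E nn^2 = (t nn * u E nn)^2 + (u E (nn-1))^2 := by
        have h1 := hPruef E nn
        rw [h1.1, h1.2]
        linear_combination -(R E nn)^2 * (Real.sin_sq_add_cos_sq (θ E nn))
      have hq0 : R E (nn-1)^2 = (t (nn-1) * u E (nn-1))^2 + (u E (nn-1-1))^2 := by
        have h0 := hPruef E (nn-1)
        rw [h0.1, h0.2]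
        linear_combination -(R E (nn-1))^2 * (Real.sin_sq_add_cos_sq (θ E (nn-1)))
      have h1ne : R E nn^2 ≠ 0 := (pow_pos (hRpos E nn) 2).ne'
      have h0ne : R E (nn-1)^2 ≠ 0 := (pow_pos (hRpos E (nn-1)) 2).ne'
      have hslit' := hslit E (nn-1)
      rw [hidx] at hslit'
      have hgd : HasDerivAt (fun E' => -Complex.I * (((t nn * u E' nn : ℝ) + (u E' (nn-1) : ℝ) * Complex.I) *
          ((t (nn-1) * u E' (nn-1) : ℝ) - (u E' (nn-1-1) : ℝ) * Complex.I)))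
          (-Complex.I * ((((t nn * du1 : ℝ) : ℂ) + (du0 : ℝ) * Complex.I) *
              ((t (nn-1) * u E (nn-1) : ℝ) - (u E (nn-1-1) : ℝ) * Complex.I)
            + (((t nn * u E nn : ℝ) : ℂ) + (u E (nn-1) : ℝ) * Complex.I) *
              (((t (nn-1) * du0 : ℝ) : ℂ) - (du2 : ℝ) * Complex.I))) E := by
        exact ((((hu1.const_mul (t nn)).ofReal_comp.add
            (hu0.ofReal_comp.mul_const Complex.I)).mul
          (((hu0.const_mul (t (nn-1))).ofReal_comp).sub
            (hu2.ofReal_comp.mul_const Complex.I))).const_mul (-Complex.I))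
      have him := myIm ((hgd.clog_real hslit'))
      beta_reduce at him
      rw [aux_im (t nn * u E nn) (u E (nn-1)) (t (nn-1) * u E (nn-1)) (u E (nn-1-1))
        (t nn * du1) du0 (t (nn-1) * du0) du2 (by rw [← hq1]; exact h1ne)
        (by rw [← hq0]; exact h0ne)] at him
      rw [show du0*(t nn*u E nn) - (t nn*du1)*(u E (nn-1)) = -S from by linear_combination hA,
        show du2*(t (nn-1)*u E (nn-1)) - (t (nn-1)*du0)*(u E (nn-1-1)) = -S - u E (nn-1)^2 from by
          linear_combination hA',
        ← hq1, ← hq0] at him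
      set D : ℝ := (-S) / R E nn^2 - (-S - u E (nn-1)^2) / R E (nn-1)^2 with hD
      have hθfun : (fun E' : ℝ => θ E' (nn-1)) = (fun E' => θ E' nn - (Real.pi/2 +
          (Complex.log (-Complex.I * (((t nn * u E' nn : ℝ) + (u E' (nn-1) : ℝ) * Complex.I) *
            ((t (nn-1) * u E' (nn-1) : ℝ) - (u E' (nn-1-1) : ℝ) * Complex.I)))).im)) := by
        funext E'
        have h := L1 E' (nn-1)
        rw [hidx] at h
        linarith
      have hθ' : HasDerivAt (fun E' => θ E' (nn-1)) (dθ - (0 + D)) E := by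
        rw [hθfun]
        exact hθm.sub ((hasDerivAt_const E _).add him)
      have hdθval : dθ = (-S) / R E nn ^ 2 := by
        rw [eq_div_iff h1ne]; linear_combination hR2
      have hsum : ∑ l ∈ Finset.range (m+1), u E (-((m+1:ℕ):ℤ) + l) ^ 2
          = S + u E (nn-1) ^ 2 := by
        rw [Finset.sum_range_succ']
        congr 1
        · rw [hS]
          refine Finset.sum_congr rfl fun l _ => ?_
          have h' : -((m+1:ℕ):ℤ) + ((l+1:ℕ):ℤ) = nn + (l:ℤ) := by rw [hnn]; push_cast; ring
          rw [h']
        · have h' : -((m+1:ℕ):ℤ) + ((0:ℕ):ℤ) = nn - 1 := by rw [hnn]; push_cast; ring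
          rw [h']
      refine ⟨du0, du2, dθ - (0 + D), ?_, ?_, ?_, ?_, ?_⟩
      · rw [hcast]; exact hu0
      · rw [hsub]; exact hu2
      · rw [hcast]; exact hθ'
      · rw [hsum, hcast, hD, hdθval]
        have hR1ne := (hRpos E (nn-1)).ne'
        field_simp
        ring
      · rw [hsum, hsub, hcast]
        linear_combination hA'
  constructor
  · -- forward case
    intro hn1
    have hm : ((n.toNat:ℕ):ℤ) = n := Int.toNat_of_nonneg (by linarith)
    obtain ⟨du1, du0, dθ, hu1, hu0, hθm, hR2, hA⟩ := FWD n.toNat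
    rw [hm] at hθm hR2
    refine ⟨dθ, hθm, hR2, ?_⟩
    intro hn2
    -- positivity
    have hq : R E 1^2 = (t 1 * u E 1)^2 + (u E 0)^2 := by
      have h1 := hPruef E 1
      have h1b : u E 0 = R E 1 * Real.sin (θ E 1) := by
        rw [← h1.2]; congr 1
      rw [h1.1, h1b]
      linear_combination -(R E 1)^2 * (Real.sin_sq_add_cos_sq (θ E 1))
    have hpos : 0 < u E 0^2 + u E 1^2 := by
      rcases lt_or_ge 0 (u E 0^2 + u E 1^2) with h | h
      · exact h
      · exfalso
        nlinarith [sq_nonneg (u E 0), sq_nonneg (u E 1), sq_nonneg (t 1), hRpos E 1,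
          pow_pos (hRpos E 1) 2, hq]
    have hsubset : ({0, 1} : Finset ℕ) ⊆ Finset.range n.toNat := by
      intro x hx
      simp only [Finset.mem_insert, Finset.mem_singleton] at hx
      rcases hx with rfl | rfl <;> simp <;> omega
    have hle : u E 0^2 + u E 1^2 ≤ ∑ l ∈ Finset.range n.toNat, u E (l:ℤ) ^ 2 := by
      have := Finset.sum_le_sum_of_subset_of_nonneg hsubset
        (fun i _ _ => sq_nonneg (u E (i:ℤ)))
      simpa using this
    have hSpos : 0 < ∑ l ∈ Finset.range n.toNat, u E (l:ℤ) ^ 2 := lt_of_lt_of_le hpos hle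
    nlinarith [pow_pos (hRpos E n) 2, hR2, hSpos]
  · -- backward case
    intro hn1
    have hm : (((-n).toNat:ℕ):ℤ) = -n := Int.toNat_of_nonneg (by linarith)
    have hm' : -(((-n).toNat:ℕ):ℤ) = n := by rw [hm]; ring
    obtain ⟨du1, du0, dθ, hu1, hu0, hθm, hR2, hA⟩ := BWD (-n).toNat
    rw [hm'] at hθm hR2
    refine ⟨dθ, hθm, hR2, ?_⟩
    intro hn2
    have hq : R E (n+1)^2 = (t (n+1) * u E (n+1))^2 + (u E n)^2 := by
      have h1 := hPruef E (n+1)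
      have h1b : u E n = R E (n+1) * Real.sin (θ E (n+1)) := by
        rw [← h1.2]; congr 1; ring
      rw [h1.1, h1b]
      linear_combination -(R E (n+1))^2 * (Real.sin_sq_add_cos_sq (θ E (n+1)))
    have hpos : 0 < u E n^2 + u E (n+1)^2 := by
      rcases lt_or_ge 0 (u E n^2 + u E (n+1)^2) with h | h
      · exact h
      · exfalso
        nlinarith [sq_nonneg (u E n), sq_nonneg (u E (n+1)), sq_nonneg (t (n+1)),
          pow_pos (hRpos E (n+1)) 2, hq]
    have hsubset : ({0, 1} : Finset ℕ) ⊆ Finset.range (-n).toNat := by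
      intro x hx
      simp only [Finset.mem_insert, Finset.mem_singleton] at hx
      rcases hx with rfl | rfl <;> simp <;> omega
    have hle : u E n^2 + u E (n+1)^2 ≤ ∑ l ∈ Finset.range (-n).toNat, u E (n + l) ^ 2 := by
      have := Finset.sum_le_sum_of_subset_of_nonneg hsubset
        (fun i _ _ => sq_nonneg (u E (n + (i:ℤ))))
      simpa using this
    have hSpos : 0 < ∑ l ∈ Finset.range (-n).toNat, u E (n + l) ^ 2 := lt_of_lt_of_le hpos hle
    nlinarith [pow_pos (hRpos E n) 2, hR2, hSpos]
end
end

section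
/- Take the initial Prüfer phase θ⁰ = 0 (i.e., u^E(−1) = 0, t(0)u^E(0) = 1). Then for every E ∈ ℝ and every N ≥ 1: | (1/π)·θ^{0,E}(N) − #{ eigenvalues of H_N strictly below E } | ≤ 1/2. Moreover, if E_1 < E_2 < … < E_N are the (simple) eigenvalues of H_N, then θ^{0,E_j}(N) = π/2 + π(j−1) for each j. -/
open MeasureTheory Filter
open scoped BigOperators ENNReal

noncomputable section

/-- Dirichlet restriction of the Jacobi matrix with data `(t,v)` to `{0,…,N-1}`. -/
def jacobiMat (t v : ℤ → ℝ) (N : ℕ) : Matrix (Fin N) (Fin N) ℝ := fun i j =>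
  if (i : ℤ) = (j : ℤ) then v (i : ℤ)
  else if (i : ℤ) = (j : ℤ) + 1 then -t (i : ℤ)
  else if (j : ℤ) = (i : ℤ) + 1 then -t (j : ℤ)
  else 0

/-- `E` is an eigenvalue of the matrix `A`. -/
def IsEig {N : ℕ} (A : Matrix (Fin N) (Fin N) ℝ) (E : ℝ) : Prop :=
  ∃ ψ : Fin N → ℝ, ψ ≠ 0 ∧ A.mulVec ψ = E • ψ

/-- Extension of a vector on `{0,…,N-1}` by zero boundary values. -/
def pad {N : ℕ} (ψ : Fin N → ℝ) (k : ℤ) : ℝ :=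
  if h : 0 ≤ k ∧ k < N then ψ ⟨k.toNat, by omega⟩ else 0

namespace Osc
open Complex Topology

/-- real part of the transfer direction vector -/
def mre (tn vn E α : ℝ) : ℝ := (vn - E) * Real.cos α - tn ^ 2 * Real.sin α
/-- imaginary part of the transfer direction vector -/
def mim (tn vn E α : ℝ) : ℝ := Real.cos α

def mfun (tn vn E α : ℝ) : ℂ := (mre tn vn E α : ℝ) + (mim tn vn E α : ℝ) * I

def zre (tn vn E α : ℝ) : ℝ :=
  Real.cos α * mim tn vn E α - Real.sin α * mre tn vn E α
def zim (tn vn E α : ℝ) : ℝ :=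
  -(Real.cos α * mre tn vn E α + Real.sin α * mim tn vn E α)

def zfun (tn vn E α : ℝ) : ℂ := (zre tn vn E α : ℝ) + (zim tn vn E α : ℝ) * I

def gmap (tn vn E α : ℝ) : ℝ := α + Real.pi / 2 + (zfun tn vn E α).arg

lemma zfun_re (tn vn E α : ℝ) : (zfun tn vn E α).re = zre tn vn E α := by simp [zfun]
lemma zfun_im (tn vn E α : ℝ) : (zfun tn vn E α).im = zim tn vn E α := by simp [zfun]

lemma zre_pos (tn vn E α : ℝ) (ht : 0 < tn) (h : zim tn vn E α = 0) :
    0 < zre tn vn E α := by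
  have hcs : Real.sin α ^ 2 + Real.cos α ^ 2 = 1 := Real.sin_sq_add_cos_sq α
  unfold zim mre mim at h
  unfold zre mre mim
  set c := Real.cos α with hc
  set s := Real.sin α with hs
  rcases eq_or_ne c 0 with h0 | h0
  · rw [h0]
    have hs2 : s ^ 2 = 1 := by nlinarith
    have ht2 : (0:ℝ) < tn ^ 2 := by positivity
    nlinarith
  · have H1 : (vn - E) * c ^ 2 - tn ^ 2 * c * s + s * c = 0 := by
      linear_combination (-1 : ℝ) * h
    have key : (c * c - s * ((vn - E) * c - tn ^ 2 * s)) * c ^ 2 = c ^ 2 := by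
      linear_combination (-(c * s)) * H1 + c ^ 2 * hcs
    have hc2 : (0:ℝ) < c ^ 2 := by positivity
    nlinarith [key]

lemma zfun_ne_zero (tn vn E α : ℝ) (ht : 0 < tn) : zfun tn vn E α ≠ 0 := by
  intro h
  have h1 : zre tn vn E α = 0 := by rw [← zfun_re tn vn E α, h]; simp
  have h2 : zim tn vn E α = 0 := by rw [← zfun_im tn vn E α, h]; simp
  exact absurd h1 (ne_of_gt (zre_pos tn vn E α ht h2))

lemma zfun_mem_slitPlane (tn vn E α : ℝ) (ht : 0 < tn) :
    zfun tn vn E α ∈ Complex.slitPlane := by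
  rcases eq_or_ne (zim tn vn E α) 0 with h | h
  · exact Or.inl (by rw [zfun_re]; exact zre_pos tn vn E α ht h)
  · exact Or.inr (by rw [zfun_im]; exact h)

lemma exp_gmap (tn vn E α : ℝ) (ht : 0 < tn) :
    Complex.exp ((gmap tn vn E α : ℝ) * I) * (‖zfun tn vn E α‖ : ℝ)
      = mfun tn vn E α := by
  have hz := zfun_ne_zero tn vn E α ht
  have hcs : Real.sin α ^ 2 + Real.cos α ^ 2 = 1 := Real.sin_sq_add_cos_sq α
  have h1 : Complex.exp ((gmap tn vn E α : ℝ) * I)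
      = Complex.exp ((α : ℝ) * I) * Complex.exp (((Real.pi/2 : ℝ)) * I)
        * Complex.exp (((zfun tn vn E α).arg : ℝ) * I) := by
    rw [gmap]
    push_cast
    rw [add_mul, add_mul, Complex.exp_add, Complex.exp_add]
  have h2 : Complex.exp (((Real.pi/2 : ℝ)) * I) = I := by
    rw [Complex.exp_mul_I]
    simp [← Complex.ofReal_cos, ← Complex.ofReal_sin]
  have h3 : Complex.exp (((zfun tn vn E α).arg : ℝ) * I) * (‖zfun tn vn E α‖ : ℝ)
      = zfun tn vn E α := by
    rw [mul_comm]; exact Complex.norm_mul_exp_arg_mul_I _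
  rw [h1, h2, mul_assoc (Complex.exp ((α:ℝ) * I) * I), h3, Complex.exp_mul_I]
  rw [← Complex.ofReal_cos, ← Complex.ofReal_sin]
  apply Complex.ext
  · simp only [zfun, mfun, zre, zim, mre, mim, Complex.add_re, Complex.add_im,
      Complex.mul_re, Complex.mul_im, Complex.ofReal_re, Complex.ofReal_im,
      Complex.I_re, Complex.I_im]
    ring_nf
    linear_combination ((vn - E) * Real.cos α - tn ^ 2 * Real.sin α) * hcs
  · simp only [zfun, mfun, zre, zim, mre, mim, Complex.add_re, Complex.add_im,
      Complex.mul_re, Complex.mul_im, Complex.ofReal_re, Complex.ofReal_im,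
      Complex.I_re, Complex.I_im]
    ring_nf
    linear_combination Real.cos α * hcs


-- new part
lemma gmap_sub_gt (tn vn E α : ℝ) : -(Real.pi / 2) < gmap tn vn E α - α := by
  have h := Complex.neg_pi_lt_arg (zfun tn vn E α)
  unfold gmap; linarith

lemma gmap_sub_le (tn vn E α : ℝ) : gmap tn vn E α - α ≤ 3 * Real.pi / 2 := by
  have h := Complex.arg_le_pi (zfun tn vn E α)
  unfold gmap; linarith

lemma exp_eq_of_abs_sub_lt {a b : ℝ} (h : Complex.exp ((a:ℝ) * I) = Complex.exp ((b:ℝ) * I))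
    (hd : |a - b| < 2 * Real.pi) : a = b := by
  rw [Complex.exp_eq_exp_iff_exists_int] at h
  obtain ⟨n, hn⟩ := h
  have him := congrArg Complex.im hn
  simp [Complex.add_im, Complex.mul_im, Complex.mul_re] at him
  -- him : a = b + n * (2 * π) (in some form)
  have hab : a - b = n * (2 * Real.pi) := by linarith
  rw [hab, abs_mul] at hd
  have hpi : (0:ℝ) < 2 * Real.pi := by positivity
  rw [abs_of_pos hpi] at hd
  have hn1 : |(n:ℝ)| < 1 := by
    by_contra hcon
    push_neg at hcon
    nlinarith
  have hn0 : n = 0 := by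
    obtain ⟨ha, hb⟩ := abs_lt.mp hn1
    have ha' : (-1:ℤ) < n := by exact_mod_cast ha
    have hb' : n < (1:ℤ) := by exact_mod_cast hb
    omega
  rw [hn0] at hab
  push_cast at hab
  linarith

lemma zfun_add_pi (tn vn E α : ℝ) : zfun tn vn E (α + Real.pi) = zfun tn vn E α := by
  unfold zfun zre zim mre mim
  rw [Real.cos_add_pi, Real.sin_add_pi]
  push_cast
  ring

lemma gmap_add_pi (tn vn E α : ℝ) :
    gmap tn vn E (α + Real.pi) = gmap tn vn E α + Real.pi := by
  unfold gmap; rw [zfun_add_pi]; ring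

lemma zfun_add_int_two_pi (tn vn E α : ℝ) (n : ℤ) :
    zfun tn vn E (α + n * (2 * Real.pi)) = zfun tn vn E α := by
  unfold zfun zre zim mre mim
  rw [Real.cos_add_int_mul_two_pi, Real.sin_add_int_mul_two_pi]

lemma gmap_add_int_two_pi (tn vn E α : ℝ) (n : ℤ) :
    gmap tn vn E (α + n * (2 * Real.pi)) = gmap tn vn E α + n * (2 * Real.pi) := by
  unfold gmap; rw [zfun_add_int_two_pi]; ring

lemma continuous_zfun (tn vn : ℝ) : Continuous fun p : ℝ × ℝ => zfun tn vn p.1 p.2 := by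
  unfold zfun zre zim mre mim
  fun_prop

lemma continuous_gmap (tn vn : ℝ) (ht : 0 < tn) :
    Continuous fun p : ℝ × ℝ => gmap tn vn p.1 p.2 := by
  unfold gmap
  refine (continuous_snd.add continuous_const).add ?_
  rw [continuous_iff_continuousAt]
  intro p
  have hz : ContinuousAt (fun p : ℝ × ℝ => zfun tn vn p.1 p.2) p :=
    (continuous_zfun tn vn).continuousAt
  exact ContinuousAt.comp (g := Complex.arg)
    (Complex.continuousAt_arg (zfun_mem_slitPlane tn vn p.1 p.2 ht)) hz

lemma abs_zfun_pos (tn vn E α : ℝ) (ht : 0 < tn) : 0 < ‖zfun tn vn E α‖ :=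
  norm_pos_iff.mpr (zfun_ne_zero tn vn E α ht)

lemma exp_eq_exp_of_cs {α α' : ℝ} (hc : Real.cos α = Real.cos α')
    (hs : Real.sin α = Real.sin α') :
    Complex.exp ((α:ℝ) * I) = Complex.exp ((α':ℝ) * I) := by
  rw [Complex.exp_mul_I, Complex.exp_mul_I, ← Complex.ofReal_cos, ← Complex.ofReal_sin,
    ← Complex.ofReal_cos, ← Complex.ofReal_sin, hc, hs]

lemma gmap_injective (tn vn E : ℝ) (ht : 0 < tn) : Function.Injective (gmap tn vn E) := by
  intro α α' hgg
  have hcs : Real.sin α ^ 2 + Real.cos α ^ 2 = 1 := Real.sin_sq_add_cos_sq α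
  have hcs' : Real.sin α' ^ 2 + Real.cos α' ^ 2 = 1 := Real.sin_sq_add_cos_sq α'
  have h1 := exp_gmap tn vn E α ht
  have h1' := exp_gmap tn vn E α' ht
  rw [hgg] at h1
  set r := ‖zfun tn vn E α‖ with hrdef
  set r' := ‖zfun tn vn E α'‖ with hrdef'
  have hr : 0 < r := abs_zfun_pos tn vn E α ht
  have hr' : 0 < r' := abs_zfun_pos tn vn E α' ht
  have hm : mfun tn vn E α * (r' : ℂ) = mfun tn vn E α' * (r : ℂ) := by
    rw [← h1, ← h1']; ring
  have him : mim tn vn E α * r' = mim tn vn E α' * r := by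
    have := congrArg Complex.im hm
    simpa [mfun, Complex.add_im, Complex.mul_im] using this
  have hre : mre tn vn E α * r' = mre tn vn E α' * r := by
    have := congrArg Complex.re hm
    simpa [mfun, Complex.add_re, Complex.mul_re] using this
  have hcc : Real.cos α * r' = Real.cos α' * r := him
  have hss : Real.sin α * r' = Real.sin α' * r := by
    have h2 : tn ^ 2 * (Real.sin α * r') = tn ^ 2 * (Real.sin α' * r) := by
      have : (vn - E) * (Real.cos α * r') = (vn - E) * (Real.cos α' * r) := by rw [hcc]
      unfold mre at hre
      linarith [hre, this]
    exact mul_left_cancel₀ (by positivity) h2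
  have hrr : r = r' := by
    have h2 : r ^ 2 = r' ^ 2 := by
      linear_combination (-(r^2)) * hcs' + (r'^2) * hcs
        - (Real.sin α * r' + Real.sin α' * r) * hss
        - (Real.cos α * r' + Real.cos α' * r) * hcc
    rw [← Real.sqrt_sq hr.le, ← Real.sqrt_sq hr'.le, h2]
  rw [hrr] at hcc hss
  have hc2 : Real.cos α = Real.cos α' := mul_right_cancel₀ (ne_of_gt hr') hcc
  have hs2 : Real.sin α = Real.sin α' := mul_right_cancel₀ (ne_of_gt hr') hss
  have hexp := exp_eq_exp_of_cs hc2 hs2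
  rw [Complex.exp_eq_exp_iff_exists_int] at hexp
  obtain ⟨n, hn⟩ := hexp
  have him2 := congrArg Complex.im hn
  simp [Complex.add_im, Complex.mul_im, Complex.mul_re] at him2
  -- him2 : α = α' + n * (2π)
  have hαα : α = α' + n * (2 * Real.pi) := by linarith
  rw [hαα, gmap_add_int_two_pi] at hgg
  have hpi : (0:ℝ) < 2 * Real.pi := by positivity
  have hn0 : (n:ℝ) = 0 := by
    rcases lt_trichotomy (n:ℝ) 0 with h | h | h
    · nlinarith
    · exact h
    · nlinarith
  rw [hαα, hn0]; ring

lemma gmap_strictMono (tn vn E : ℝ) (ht : 0 < tn) : StrictMono (gmap tn vn E) := by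
  have hcont : Continuous (gmap tn vn E) := by
    have := (continuous_gmap tn vn ht).comp
      (Continuous.prodMk (continuous_const : Continuous fun _ : ℝ => E) continuous_id)
    exact this
  rcases hcont.strictMono_of_inj (gmap_injective tn vn E ht) with h | h
  · exact h
  · exfalso
    have h1 : gmap tn vn E (0 + Real.pi) < gmap tn vn E 0 :=
      h (by linarith [Real.pi_pos])
    rw [gmap_add_pi] at h1
    linarith [Real.pi_pos]

lemma sin_gmap_sub (tn vn α : ℝ) (E E' : ℝ) (ht : 0 < tn) :
    Real.sin (gmap tn vn E' α - gmap tn vn E α)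
      * (‖zfun tn vn E α‖ * ‖zfun tn vn E' α‖)
      = (E' - E) * Real.cos α ^ 2 := by
  have h := exp_gmap tn vn E α ht
  have h' := exp_gmap tn vn E' α ht
  set g := gmap tn vn E α
  set g' := gmap tn vn E' α
  set r := ‖zfun tn vn E α‖
  set r' := ‖zfun tn vn E' α‖
  have hconj : Complex.exp (-(g:ℂ) * I) = (starRingEnd ℂ) (Complex.exp ((g:ℝ) * I)) := by
    rw [← Complex.exp_conj]
    congr 1
    simp
  have hsplit : Complex.exp ((g' - g : ℝ) * I)
      = Complex.exp ((g':ℝ) * I) * Complex.exp (-(g:ℂ) * I) := by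
    rw [← Complex.exp_add]
    congr 1
    push_cast
    ring
  have key : Complex.exp ((g' - g : ℝ) * I) * ((r : ℂ) * (r' : ℂ))
      = mfun tn vn E' α * (starRingEnd ℂ) (mfun tn vn E α) := by
    rw [hsplit, ← h, ← h', map_mul, ← hconj, Complex.conj_ofReal]
    ring
  have him := congrArg Complex.im key
  have hgen : ∀ x y x' y' : ℝ, (((x':ℝ) + (y':ℝ)*I) * (starRingEnd ℂ) ((x:ℝ) + (y:ℝ)*I)).im
      = y'*x - x'*y := by
    intro x y x' y'
    simp [Complex.mul_im]
    ring
  have h5 : (mfun tn vn E' α * (starRingEnd ℂ) (mfun tn vn E α)).im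
      = (E' - E) * Real.cos α ^ 2 := by
    rw [mfun, mfun, hgen]
    unfold mre mim
    ring
  have h3 : ((r : ℂ) * (r' : ℂ)).im = 0 := by simp
  have h4 : ((r : ℂ) * (r' : ℂ)).re = r * r' := by simp
  rw [Complex.mul_im, Complex.exp_ofReal_mul_I_im, h3, h4, h5] at him
  linarith [him]

lemma gmap_const_of_cos_eq_zero (tn vn α : ℝ) (hc : Real.cos α = 0) (E E' : ℝ) :
    gmap tn vn E α = gmap tn vn E' α := by
  unfold gmap
  have : zfun tn vn E α = zfun tn vn E' α := by
    unfold zfun zre zim mre mim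
    rw [hc]
    push_cast
    ring
  rw [this]

lemma gmap_strictMono_E (tn vn α : ℝ) (ht : 0 < tn) (hcos : Real.cos α ≠ 0) :
    StrictMono (fun E => gmap tn vn E α) := by
  have hcont : Continuous (fun E => gmap tn vn E α) := by
    have := (continuous_gmap tn vn ht).comp
      (Continuous.prodMk continuous_id (continuous_const : Continuous fun _ : ℝ => α))
    exact this
  have hinj : Function.Injective (fun E => gmap tn vn E α) := by
    intro E E' hgg
    simp only at hgg
    have h1 := exp_gmap tn vn E α ht
    have h1' := exp_gmap tn vn E' α ht
    rw [hgg] at h1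
    set r := ‖zfun tn vn E α‖ with hrdef
    set r' := ‖zfun tn vn E' α‖ with hrdef'
    have hr : 0 < r := abs_zfun_pos tn vn E α ht
    have hr' : 0 < r' := abs_zfun_pos tn vn E' α ht
    have hm : mfun tn vn E α * (r' : ℂ) = mfun tn vn E' α * (r : ℂ) := by
      rw [← h1, ← h1']; ring
    have him : mim tn vn E α * r' = mim tn vn E' α * r := by
      have := congrArg Complex.im hm
      simpa [mfun, Complex.add_im, Complex.mul_im] using this
    have hre : mre tn vn E α * r' = mre tn vn E' α * r := by
      have := congrArg Complex.re hm
      simpa [mfun, Complex.add_re, Complex.mul_re] using this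
    unfold mim at him
    have hrr : r = r' := by
      have := mul_left_cancel₀ hcos him
      linarith
    rw [hrr] at hre
    have hmr : mre tn vn E α = mre tn vn E' α := mul_right_cancel₀ (ne_of_gt hr') hre
    unfold mre at hmr
    have : (vn - E) * Real.cos α = (vn - E') * Real.cos α := by linarith
    have := mul_right_cancel₀ hcos this
    linarith
  rcases hcont.strictMono_of_inj hinj with h | h
  · exact h
  · exfalso
    obtain ⟨δ, hδpos, hδ⟩ := Metric.continuousAt_iff.mp hcont.continuousAt Real.pi Real.pi_pos
    set E2 := δ / 2
    have hE2 : dist E2 (0:ℝ) < δ := by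
      simp only [Real.dist_eq, E2]
      rw [sub_zero, abs_of_pos (by linarith)]
      linarith
    have hd := hδ hE2
    rw [Real.dist_eq] at hd
    have hlt : gmap tn vn E2 α < gmap tn vn 0 α := h (by positivity)
    have hsin := sin_gmap_sub tn vn α 0 E2 ht
    have hc2 : 0 < Real.cos α ^ 2 :=
      lt_of_le_of_ne (sq_nonneg _) (Ne.symm (pow_ne_zero 2 hcos))
    have hpos : 0 < (E2 - 0) * Real.cos α ^ 2 := by
      apply mul_pos _ hc2
      simp only [E2, sub_zero]
      linarith
    have habs : 0 < ‖zfun tn vn 0 α‖ * ‖zfun tn vn E2 α‖ :=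
      mul_pos (abs_zfun_pos tn vn 0 α ht) (abs_zfun_pos tn vn E2 α ht)
    have hsinpos : 0 < Real.sin (gmap tn vn E2 α - gmap tn vn 0 α) := by
      by_contra hcon
      push_neg at hcon
      nlinarith
    have hneg : Real.sin (gmap tn vn E2 α - gmap tn vn 0 α) < 0 := by
      apply Real.sin_neg_of_neg_of_neg_pi_lt
      · linarith
      · have : |gmap tn vn E2 α - gmap tn vn 0 α| < Real.pi := hd
        have := abs_lt.mp this
        linarith [this.1]
    linarith

lemma gmap_mono_E (tn vn α : ℝ) (ht : 0 < tn) {E E' : ℝ} (hEE : E ≤ E') :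
    gmap tn vn E α ≤ gmap tn vn E' α := by
  rcases eq_or_ne (Real.cos α) 0 with hc | hc
  · exact le_of_eq (gmap_const_of_cos_eq_zero tn vn α hc E E')
  · rcases eq_or_lt_of_le hEE with h | h
    · rw [h]
    · exact le_of_lt ((gmap_strictMono_E tn vn α ht hc) h)


structure Setup where
  t : ℤ → ℝ
  v : ℤ → ℝ
  u : ℝ → ℤ → ℝ
  R : ℝ → ℤ → ℝ
  θ : ℝ → ℤ → ℝ
  ht : ∀ n, 0 < t n
  hrec : ∀ E n, -(t (n + 1)) * u E (n + 1) + v n * u E n - t n * u E (n - 1) = E * u E n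
  hinit : ∀ E, t 0 * u E 0 = 1 ∧ u E (-1) = 0
  hRpos : ∀ E n, 0 < R E n
  hPruef : ∀ E n, t n * u E n = R E n * Real.cos (θ E n) ∧
    u E (n - 1) = R E n * Real.sin (θ E n)
  hθinit : ∀ E, θ E 0 = 0
  hbranch : ∀ E n, -(Real.pi / 2) < θ E (n + 1) - θ E n ∧
    θ E (n + 1) - θ E n < 3 * Real.pi / 2

namespace Setup

variable (S : Setup)

lemma t_ne (n : ℤ) : S.t n ≠ 0 := ne_of_gt (S.ht n)

lemma R_ne (E : ℝ) (n : ℤ) : S.R E n ≠ 0 := ne_of_gt (S.hRpos E n)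

lemma u_neg_one (E : ℝ) : S.u E (-1) = 0 := (S.hinit E).2

lemma u_zero (E : ℝ) : S.u E 0 = 1 / S.t 0 :=
  eq_one_div_of_mul_eq_one_left (by rw [mul_comm]; exact (S.hinit E).1)

lemma u_zero_pos (E : ℝ) : 0 < S.u E 0 := by
  rw [S.u_zero]
  exact one_div_pos.mpr (S.ht 0)

lemma cos_theta (E : ℝ) (n : ℤ) : Real.cos (S.θ E n) = S.t n * S.u E n / S.R E n := by
  rw [(S.hPruef E n).1, mul_comm, mul_div_assoc, div_self (S.R_ne E n), mul_one]

lemma sin_theta (E : ℝ) (n : ℤ) : Real.sin (S.θ E n) = S.u E (n - 1) / S.R E n := by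
  rw [(S.hPruef E n).2, mul_comm, mul_div_assoc, div_self (S.R_ne E n), mul_one]

lemma sin_theta_succ (E : ℝ) (n : ℤ) :
    Real.sin (S.θ E (n + 1)) = S.u E n / S.R E (n + 1) := by
  have h := S.sin_theta E (n + 1)
  simpa using h

lemma u_succ (E : ℝ) (n : ℤ) :
    S.u E (n + 1) = ((S.v n - E) * S.u E n - S.t n * S.u E (n - 1)) / S.t (n + 1) := by
  have h := S.hrec E n
  have htn := S.t_ne (n + 1)
  field_simp [htn]
  linarith

lemma theta_succ (E : ℝ) (n : ℤ) :
    S.θ E (n + 1) = gmap (S.t n) (S.v n) E (S.θ E n) := by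
  set α := S.θ E n with hα
  set g := gmap (S.t n) (S.v n) E α with hg
  have htn := S.ht n
  have h1 := exp_gmap (S.t n) (S.v n) E α htn
  have hc := (S.hPruef E n).1
  have hs := (S.hPruef E n).2
  have hr := S.hrec E n
  have hmre : mre (S.t n) (S.v n) E α * S.R E n = S.t n * (S.t (n+1) * S.u E (n+1)) := by
    unfold mre
    linear_combination (-(S.v n - E)) * hc + S.t n ^ 2 * hs + S.t n * hr
  have hmim : mim (S.t n) (S.v n) E α * S.R E n = S.t n * S.u E n := by
    unfold mim
    linear_combination (-1 : ℝ) * hc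
  have hZ : Complex.exp ((S.θ E (n+1) : ℝ) * I) * ((S.R E (n+1) : ℝ) : ℂ)
      = ((S.t (n+1) * S.u E (n+1) : ℝ) : ℂ) + ((S.u E n : ℝ) : ℂ) * I := by
    rw [Complex.exp_mul_I, ← Complex.ofReal_cos, ← Complex.ofReal_sin,
      S.cos_theta E (n+1), S.sin_theta_succ E n]
    have hR : ((S.R E (n+1) : ℝ) : ℂ) ≠ 0 := by
      exact_mod_cast S.R_ne E (n+1)
    push_cast
    field_simp [hR]
  set r := ‖zfun (S.t n) (S.v n) E α‖ with hrdef
  have hrpos : 0 < r := abs_zfun_pos (S.t n) (S.v n) E α htn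
  have hcomb : Complex.exp ((g:ℝ) * I) * ((r * S.R E n : ℝ) : ℂ)
      = Complex.exp ((S.θ E (n+1):ℝ) * I) * ((S.t n * S.R E (n+1) : ℝ) : ℂ) := by
    calc Complex.exp ((g:ℝ) * I) * ((r * S.R E n : ℝ) : ℂ)
        = (Complex.exp ((g:ℝ) * I) * (r : ℂ)) * ((S.R E n : ℝ) : ℂ) := by
          push_cast; ring
      _ = mfun (S.t n) (S.v n) E α * ((S.R E n : ℝ) : ℂ) := by rw [h1]
      _ = ((mre (S.t n) (S.v n) E α * S.R E n : ℝ) : ℂ)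
            + ((mim (S.t n) (S.v n) E α * S.R E n : ℝ) : ℂ) * I := by
          rw [mfun]; push_cast; ring
      _ = ((S.t n * (S.t (n+1) * S.u E (n+1)) : ℝ) : ℂ)
            + ((S.t n * S.u E n : ℝ) : ℂ) * I := by rw [hmre, hmim]
      _ = ((S.t n : ℝ) : ℂ) * (((S.t (n+1) * S.u E (n+1) : ℝ) : ℂ)
            + ((S.u E n : ℝ) : ℂ) * I) := by push_cast; ring
      _ = ((S.t n : ℝ) : ℂ) * (Complex.exp ((S.θ E (n+1) : ℝ) * I)
            * ((S.R E (n+1) : ℝ) : ℂ)) := by rw [hZ]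
      _ = Complex.exp ((S.θ E (n+1):ℝ) * I) * ((S.t n * S.R E (n+1) : ℝ) : ℂ) := by
          push_cast; ring
  have habs : r * S.R E n = S.t n * S.R E (n+1) := by
    have h2 := congrArg norm hcomb
    simp only [norm_mul, Complex.norm_exp_ofReal_mul_I, Complex.norm_real, Real.norm_eq_abs, one_mul] at h2
    rw [abs_of_pos hrpos, abs_of_pos (S.hRpos E n),
      abs_of_pos (S.ht n), abs_of_pos (S.hRpos E (n+1))] at h2
    exact h2
  have hexp : Complex.exp ((g:ℝ) * I) = Complex.exp ((S.θ E (n+1):ℝ) * I) := by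
    rw [habs] at hcomb
    have hne : ((S.t n * S.R E (n+1) : ℝ) : ℂ) ≠ 0 := by
      have : S.t n * S.R E (n+1) ≠ 0 := ne_of_gt (mul_pos (S.ht n) (S.hRpos E (n+1)))
      exact_mod_cast this
    exact mul_right_cancel₀ hne hcomb
  have hb := S.hbranch E n
  have h2 := gmap_sub_gt (S.t n) (S.v n) E α
  have h3 := gmap_sub_le (S.t n) (S.v n) E α
  apply exp_eq_of_abs_sub_lt hexp.symm
  rw [abs_sub_lt_iff]
  constructor
  · linarith [Real.pi_pos, hb.1, h3]
  · linarith [Real.pi_pos, hb.2, h2]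

lemma theta_cont (n : ℕ) : Continuous fun E => S.θ E (n : ℤ) := by
  induction n with
  | zero =>
      have : (fun E => S.θ E ((0:ℕ) : ℤ)) = fun _ => (0:ℝ) := by
        funext E; simpa using S.hθinit E
      rw [this]; exact continuous_const
  | succ k ih =>
      have : (fun E => S.θ E ((k+1 : ℕ) : ℤ))
          = fun E => gmap (S.t k) (S.v k) E (S.θ E (k : ℤ)) := by
        funext E
        rw [show ((k+1:ℕ) : ℤ) = (k:ℤ) + 1 by push_cast; ring, S.theta_succ E k]
      rw [this]
      exact (continuous_gmap _ _ (S.ht k)).comp (continuous_id.prodMk ih)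

lemma theta_strictMono (n : ℕ) (hn : 1 ≤ n) {E E' : ℝ} (hEE : E < E') :
    S.θ E (n : ℤ) < S.θ E' (n : ℤ) := by
  induction n with
  | zero => omega
  | succ k ih =>
      rw [show ((k+1:ℕ) : ℤ) = (k:ℤ) + 1 by push_cast; ring,
        S.theta_succ E k, S.theta_succ E' k]
      rcases Nat.eq_zero_or_pos k with hk | hk
      · subst hk
        simp only [Nat.cast_zero, S.hθinit]
        have hcos : Real.cos (0:ℝ) ≠ 0 := by
          rw [Real.cos_zero]; norm_num
        exact gmap_strictMono_E (S.t 0) (S.v 0) 0 (S.ht 0) hcos hEE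
      · have h1 : S.θ E (k : ℤ) < S.θ E' (k : ℤ) := ih hk
        calc gmap (S.t k) (S.v k) E (S.θ E (k:ℤ))
            < gmap (S.t k) (S.v k) E (S.θ E' (k:ℤ)) :=
              gmap_strictMono (S.t k) (S.v k) E (S.ht k) h1
          _ ≤ gmap (S.t k) (S.v k) E' (S.θ E' (k:ℤ)) :=
              gmap_mono_E (S.t k) (S.v k) _ (S.ht k) hEE.le

lemma sin_cos_sign (E : ℝ) (n : ℤ) :
    Real.sin (S.θ E (n+1)) * Real.cos (S.θ E n)
      = S.t n * S.u E n ^ 2 / (S.R E (n+1) * S.R E n) := by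
  rw [S.sin_theta_succ, S.cos_theta]
  have h1 := S.R_ne E (n+1)
  have h2 := S.R_ne E n
  field_simp [h1, h2]

lemma sin_cos_sign_nonneg (E : ℝ) (n : ℤ) :
    0 ≤ Real.sin (S.θ E (n+1)) * Real.cos (S.θ E n) := by
  rw [S.sin_cos_sign]
  apply div_nonneg
  · exact mul_nonneg (le_of_lt (S.ht n)) (sq_nonneg _)
  · exact le_of_lt (mul_pos (S.hRpos E (n+1)) (S.hRpos E n))

lemma cos_eq_zero_of_sin_succ (E : ℝ) (n : ℤ) (h : Real.sin (S.θ E (n+1)) = 0) :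
    Real.cos (S.θ E n) = 0 := by
  rw [S.sin_theta_succ] at h
  rw [S.cos_theta]
  have hu : S.u E n = 0 := by
    rcases div_eq_zero_iff.mp h with h' | h'
    · exact h'
    · exact absurd h' (S.R_ne E (n+1))
  rw [hu]
  simp

lemma neg_one_zpow_cases (m : ℤ) : (-1:ℝ)^m = 1 ∨ (-1:ℝ)^m = -1 := by
  rcases Int.even_or_odd m with h | h
  · exact Or.inl h.neg_one_zpow
  · exact Or.inr h.neg_one_zpow

lemma no_cross_down (E : ℝ) (n : ℤ) (m : ℤ) (h : (m:ℝ) * Real.pi < S.θ E n) :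
    (m:ℝ) * Real.pi < S.θ E (n+1) := by
  by_contra hcon
  push_neg at hcon
  have hb := S.hbranch E n
  have hpi := Real.pi_pos
  set a := S.θ E n - m * Real.pi with hadef
  set b := S.θ E (n+1) - m * Real.pi with hbdef
  have ha1 : 0 < a := by simp only [hadef]; linarith
  have ha2 : a < Real.pi / 2 := by simp only [hadef, hbdef] at *; linarith [hb.1]
  have hb1 : -(Real.pi/2) < b := by simp only [hadef, hbdef] at *; linarith [hb.1]
  have hb2 : b ≤ 0 := by simp only [hbdef]; linarith
  have hca : Real.cos (S.θ E n) = (-1:ℝ)^m * Real.cos a := by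
    rw [show S.θ E n = a + m * Real.pi by rw [hadef]; ring, Real.cos_add_int_mul_pi]
  have hsb : Real.sin (S.θ E (n+1)) = (-1:ℝ)^m * Real.sin b := by
    rw [show S.θ E (n+1) = b + m * Real.pi by rw [hbdef]; ring, Real.sin_add_int_mul_pi]
  have hcapos : 0 < Real.cos a := Real.cos_pos_of_mem_Ioo ⟨by linarith, ha2⟩
  have hsbn : Real.sin b ≤ 0 :=
    Real.sin_nonpos_of_nonpos_of_neg_pi_le hb2 (by linarith)
  have hfact := S.sin_cos_sign_nonneg E n
  have hsq : ((-1:ℝ)^m) * ((-1:ℝ)^m) = 1 := by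
    rcases neg_one_zpow_cases m with h1 | h1 <;> rw [h1] <;> norm_num
  have hprod : Real.sin (S.θ E (n+1)) * Real.cos (S.θ E n) = Real.sin b * Real.cos a := by
    rw [hca, hsb]
    calc (-1:ℝ)^m * Real.sin b * ((-1:ℝ)^m * Real.cos a)
        = ((-1:ℝ)^m * (-1:ℝ)^m) * (Real.sin b * Real.cos a) := by ring
      _ = Real.sin b * Real.cos a := by rw [hsq]; ring
  rw [hprod] at hfact
  have hsb0 : Real.sin b = 0 := by nlinarith
  have : Real.sin (S.θ E (n+1)) = 0 := by rw [hsb, hsb0]; ring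
  have hc0 := S.cos_eq_zero_of_sin_succ E n this
  rw [hca] at hc0
  rcases neg_one_zpow_cases m with h1 | h1 <;> rw [h1] at hc0 <;> nlinarith

lemma cross_up_bound (E : ℝ) (n : ℤ) (m : ℤ) (h : S.θ E n < (m:ℝ) * Real.pi) :
    S.θ E (n+1) < ((m:ℝ) + 1) * Real.pi := by
  by_contra hcon
  push_neg at hcon
  have hb := S.hbranch E n
  have hpi := Real.pi_pos
  set a := S.θ E n - m * Real.pi with hadef
  set b := S.θ E (n+1) - ((m:ℝ)+1) * Real.pi with hbdef
  have ha2 : a < 0 := by simp only [hadef]; linarith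
  have ha1 : -(Real.pi/2) < a := by simp only [hadef, hbdef] at *; linarith [hb.2]
  have hb1 : 0 ≤ b := by simp only [hbdef]; linarith
  have hb2 : b < Real.pi / 2 := by simp only [hadef, hbdef] at *; linarith [hb.2]
  have hca : Real.cos (S.θ E n) = (-1:ℝ)^m * Real.cos a := by
    rw [show S.θ E n = a + m * Real.pi by rw [hadef]; ring, Real.cos_add_int_mul_pi]
  have hsb : Real.sin (S.θ E (n+1)) = (-1:ℝ)^(m+1) * Real.sin b := by
    rw [show S.θ E (n+1) = b + (m+1 : ℤ) * Real.pi by rw [hbdef]; push_cast; ring,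
      Real.sin_add_int_mul_pi]
  have hcapos : 0 < Real.cos a := Real.cos_pos_of_mem_Ioo ⟨ha1, by linarith⟩
  have hsbn : 0 ≤ Real.sin b :=
    Real.sin_nonneg_of_nonneg_of_le_pi hb1 (by linarith)
  have hfact := S.sin_cos_sign_nonneg E n
  have hsq : ((-1:ℝ)^(m+1)) * ((-1:ℝ)^m) = -1 := by
    rw [zpow_add₀ (by norm_num : (-1:ℝ) ≠ 0) m 1]
    rcases neg_one_zpow_cases m with h1 | h1 <;> rw [h1] <;> norm_num
  have hprod : Real.sin (S.θ E (n+1)) * Real.cos (S.θ E n)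
      = -(Real.sin b * Real.cos a) := by
    rw [hca, hsb]
    calc (-1:ℝ)^(m+1) * Real.sin b * ((-1:ℝ)^m * Real.cos a)
        = ((-1:ℝ)^(m+1) * (-1:ℝ)^m) * (Real.sin b * Real.cos a) := by ring
      _ = -(Real.sin b * Real.cos a) := by rw [hsq]; ring
  rw [hprod] at hfact
  have hsb0 : Real.sin b = 0 := by nlinarith
  have : Real.sin (S.θ E (n+1)) = 0 := by rw [hsb, hsb0]; ring
  have hc0 := S.cos_eq_zero_of_sin_succ E n this
  rw [hca] at hc0
  rcases neg_one_zpow_cases m with h1 | h1 <;> rw [h1] at hc0 <;> nlinarith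

lemma theta_one_pos (E : ℝ) : 0 < S.θ E 1 ∧ S.θ E 1 < Real.pi := by
  have hpi := Real.pi_pos
  have hb := S.hbranch E 0
  rw [S.hθinit] at hb
  simp only [zero_add, sub_zero] at hb
  have hsin : 0 < Real.sin (S.θ E 1) := by
    have h := S.sin_theta_succ E 0
    simp only [zero_add] at h
    rw [h]
    exact div_pos (S.u_zero_pos E) (S.hRpos E 1)
  constructor
  · by_contra hcon
    push_neg at hcon
    have : Real.sin (S.θ E 1) ≤ 0 :=
      Real.sin_nonpos_of_nonpos_of_neg_pi_le hcon (by linarith [hb.1])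
    linarith
  · by_contra hcon
    push_neg at hcon
    have h1 : Real.sin (S.θ E 1) = -Real.sin (S.θ E 1 - Real.pi) := by
      rw [show S.θ E 1 = (S.θ E 1 - Real.pi) + Real.pi by ring, Real.sin_add_pi]
      ring
    have h2 : 0 ≤ Real.sin (S.θ E 1 - Real.pi) :=
      Real.sin_nonneg_of_nonneg_of_le_pi (by linarith) (by linarith [hb.2])
    rw [h1] at hsin
    linarith

lemma theta_pos (E : ℝ) (n : ℕ) (hn : 1 ≤ n) : 0 < S.θ E (n : ℤ) := by
  induction n with
  | zero => omega
  | succ k ih =>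
      rcases Nat.eq_zero_or_pos k with hk | hk
      · subst hk
        exact (S.theta_one_pos E).1
      · have h1 := ih hk
        have := S.no_cross_down E (k : ℤ) 0 (by simpa using h1)
        rw [show ((k+1:ℕ) : ℤ) = (k:ℤ) + 1 by push_cast; ring]
        simpa using this

lemma theta_lt (E : ℝ) (n : ℕ) (hn : 1 ≤ n) : S.θ E (n : ℤ) < (n:ℝ) * Real.pi := by
  induction n with
  | zero => omega
  | succ k ih =>
      rcases Nat.eq_zero_or_pos k with hk | hk
      · subst hk
        simpa using (S.theta_one_pos E).2
      · have h1 := ih hk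
        have := S.cross_up_bound E (k : ℤ) (k : ℤ) (by exact_mod_cast h1)
        rw [show ((k+1:ℕ) : ℤ) = (k:ℤ) + 1 by push_cast; ring]
        push_cast at this ⊢
        linarith

end Setup

-- pure trig helpers
lemma mem_quadrant1 (x : ℝ) (h1 : -(Real.pi/2) < x) (h2 : x < 2*Real.pi)
    (hs : 0 < Real.sin x) (hc : 0 < Real.cos x) : 0 < x ∧ x < Real.pi/2 := by
  have hpi := Real.pi_pos
  constructor
  · by_contra hcon
    push_neg at hcon
    have := Real.sin_nonpos_of_nonpos_of_neg_pi_le hcon (by linarith)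
    linarith
  · by_contra hcon
    push_neg at hcon
    rcases le_or_gt x (3*Real.pi/2) with h | h
    · have := Real.cos_nonpos_of_pi_div_two_le_of_le hcon (by linarith)
      linarith
    · have hx : Real.sin x = Real.sin ((x - 2*Real.pi) + (1:ℤ) * (2*Real.pi)) := by
        norm_num
      rw [Real.sin_add_int_mul_two_pi] at hx
      have : Real.sin (x - 2*Real.pi) ≤ 0 :=
        Real.sin_nonpos_of_nonpos_of_neg_pi_le (by linarith) (by linarith)
      rw [hx] at hs
      linarith

lemma mem_quadrant4 (x : ℝ) (h1 : -(2*Real.pi) < x) (h2 : x < Real.pi/2)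
    (hs : Real.sin x < 0) (hc : 0 < Real.cos x) : -(Real.pi/2) < x ∧ x < 0 := by
  have hpi := Real.pi_pos
  constructor
  · by_contra hcon
    push_neg at hcon
    rcases le_or_gt (-(3*Real.pi/2)) x with h | h
    · have h3 : Real.cos x = Real.cos (-x) := (Real.cos_neg x).symm
      have : Real.cos (-x) ≤ 0 :=
        Real.cos_nonpos_of_pi_div_two_le_of_le (by linarith) (by linarith)
      rw [h3] at hc
      linarith
    · have hx : Real.sin x = Real.sin ((x + 2*Real.pi) + (-1:ℤ) * (2*Real.pi)) := by
        norm_num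
      rw [Real.sin_add_int_mul_two_pi] at hx
      have : 0 ≤ Real.sin (x + 2*Real.pi) :=
        Real.sin_nonneg_of_nonneg_of_le_pi (by linarith) (by linarith)
      rw [hx] at hs
      linarith
  · by_contra hcon
    push_neg at hcon
    have := Real.sin_nonneg_of_nonneg_of_le_pi hcon (by linarith)
    linarith

namespace Setup

variable (S : Osc.Setup)

lemma arctan_formula (E : ℝ) (n : ℤ) (k : ℤ)
    (h1 : -(Real.pi/2) < S.θ E n - (k:ℝ) * Real.pi)
    (h2 : S.θ E n - (k:ℝ) * Real.pi < Real.pi/2) :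
    S.θ E n = (k:ℝ) * Real.pi
      + Real.arctan (S.u E (n-1) / (S.t n * S.u E n)) := by
  have hγ : Real.cos (S.θ E n - (k:ℝ)*Real.pi) > 0 := Real.cos_pos_of_mem_Ioo ⟨h1, h2⟩
  have hcosθ : Real.cos (S.θ E n) ≠ 0 := by
    have h3 : Real.cos (S.θ E n) = (-1:ℝ)^k * Real.cos (S.θ E n - (k:ℝ)*Real.pi) := by
      rw [show S.θ E n = (S.θ E n - (k:ℝ)*Real.pi) + (k:ℝ)*Real.pi by ring,
        Real.cos_add_int_mul_pi]
      ring_nf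
    rw [h3]
    rcases neg_one_zpow_cases k with h4 | h4 <;> rw [h4] <;> nlinarith
  have htan : Real.tan (S.θ E n - (k:ℝ)*Real.pi) = Real.tan (S.θ E n) :=
    Real.tan_periodic.sub_int_mul_eq k
  have htan2 : Real.tan (S.θ E n) = S.u E (n-1) / (S.t n * S.u E n) := by
    rw [Real.tan_eq_sin_div_cos, S.sin_theta, S.cos_theta]
    have hR := S.R_ne E n
    have htu : S.t n * S.u E n ≠ 0 := by
      rw [S.cos_theta] at hcosθ
      intro hh
      rw [hh] at hcosθ
      simp at hcosθ
    field_simp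
  have := Real.arctan_tan h1 h2
  rw [htan, htan2] at this
  linarith

lemma ratio_atBot (n : ℕ) :
    (∀ᶠ E in atBot, 0 < S.u E (n : ℤ)) ∧
      Tendsto (fun E => S.u E ((n:ℤ) - 1) / S.u E (n:ℤ)) atBot (𝓝 0) := by
  induction n with
  | zero =>
      constructor
      · exact Filter.Eventually.of_forall fun E => S.u_zero_pos E
      · simp only [Nat.cast_zero]
        have : (fun E => S.u E ((0:ℤ) - 1) / S.u E (0:ℤ)) = fun _ => (0:ℝ) := by
          funext E
          norm_num [S.u_neg_one E]
        rw [this]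
        exact tendsto_const_nhds
  | succ k ih =>
      obtain ⟨hpos, hrat⟩ := ih
      have hw : Tendsto (fun E => (S.v k - E) - S.t k * (S.u E ((k:ℤ)-1) / S.u E (k:ℤ)))
          atBot atTop := by
        have h1 : Tendsto (fun E : ℝ => -E) atBot atTop := tendsto_neg_atBot_atTop
        have h2 : Tendsto (fun E => S.v k - S.t k * (S.u E ((k:ℤ)-1) / S.u E (k:ℤ)))
            atBot (𝓝 (S.v k - S.t k * 0)) :=
          tendsto_const_nhds.sub (tendsto_const_nhds.mul hrat)
        have := h1.atTop_add h2
        refine this.congr fun E => ?_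
        ring
      have hwev : ∀ᶠ E in atBot, 1 < (S.v k - E) - S.t k * (S.u E ((k:ℤ)-1) / S.u E (k:ℤ)) :=
        hw.eventually (eventually_gt_atTop 1)
      have hkey : ∀ᶠ E in atBot,
          S.u E ((k:ℤ)+1) = S.u E (k:ℤ)
            * ((S.v k - E) - S.t k * (S.u E ((k:ℤ)-1) / S.u E (k:ℤ))) / S.t ((k:ℤ)+1) := by
        filter_upwards [hpos] with E hE
        rw [S.u_succ E (k:ℤ)]
        have hne : S.u E (k:ℤ) ≠ 0 := ne_of_gt hE
        field_simp
      constructor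
      · filter_upwards [hpos, hwev, hkey] with E hE hwE hkE
        rw [show ((k+1:ℕ):ℤ) = (k:ℤ)+1 by push_cast; ring, hkE]
        have := S.ht ((k:ℤ)+1)
        positivity
      · have hlim : Tendsto (fun E => S.t ((k:ℤ)+1)
            * ((S.v k - E) - S.t k * (S.u E ((k:ℤ)-1) / S.u E (k:ℤ)))⁻¹) atBot (𝓝 0) := by
          have := hw.inv_tendsto_atTop
          have h2 := this.const_mul (S.t ((k:ℤ)+1))
          simpa using h2
        apply hlim.congr'
        filter_upwards [hpos, hwev, hkey] with E hE hwE hkE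
        rw [show ((k+1:ℕ):ℤ) = (k:ℤ)+1 by push_cast; ring]
        rw [show (k:ℤ)+1-1 = (k:ℤ) by ring]
        rw [hkE]
        have hne : S.u E (k:ℤ) ≠ 0 := ne_of_gt hE
        have hwne : (S.v k - E) - S.t k * (S.u E ((k:ℤ)-1) / S.u E (k:ℤ)) ≠ 0 := by linarith
        have htne := S.t_ne ((k:ℤ)+1)
        field_simp

lemma theta_mem_atBot (n : ℕ) :
    ∀ᶠ E in atBot, 0 ≤ S.θ E (n:ℤ) ∧ S.θ E (n:ℤ) < Real.pi/2 := by
  have hpi := Real.pi_pos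
  induction n with
  | zero =>
      apply Filter.Eventually.of_forall
      intro E
      rw [show ((0:ℕ):ℤ) = 0 by norm_num, S.hθinit E]
      constructor <;> linarith
  | succ k ih =>
      have hu1 := (S.ratio_atBot k).1
      have hu2 := (S.ratio_atBot (k+1)).1
      filter_upwards [ih, hu1, hu2] with E hE hu1E hu2E
      rw [show ((k+1:ℕ):ℤ) = (k:ℤ)+1 by push_cast; ring] at hu2E ⊢
      have hb := S.hbranch E (k:ℤ)
      have hsin : 0 < Real.sin (S.θ E ((k:ℤ)+1)) := by
        rw [S.sin_theta_succ E (k:ℤ)]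
        exact div_pos hu1E (S.hRpos E ((k:ℤ)+1))
      have hcos : 0 < Real.cos (S.θ E ((k:ℤ)+1)) := by
        rw [S.cos_theta E ((k:ℤ)+1)]
        exact div_pos (mul_pos (S.ht ((k:ℤ)+1)) hu2E) (S.hRpos E ((k:ℤ)+1))
      have hq := mem_quadrant1 (S.θ E ((k:ℤ)+1))
        (by linarith [hb.1, hE.1]) (by linarith [hb.2, hE.2]) hsin hcos
      exact ⟨le_of_lt hq.1, hq.2⟩

lemma theta_tendsto_atBot (n : ℕ) : Tendsto (fun E => S.θ E (n:ℤ)) atBot (𝓝 0) := by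
  rcases Nat.eq_zero_or_pos n with hn | hn
  · subst hn
    have : (fun E => S.θ E ((0:ℕ):ℤ)) = fun _ => (0:ℝ) := by
      funext E; simpa using S.hθinit E
    rw [this]
    exact tendsto_const_nhds
  have hev : ∀ᶠ E in atBot,
      S.θ E (n:ℤ) = Real.arctan (S.u E ((n:ℤ)-1) / (S.t n * S.u E (n:ℤ))) := by
    filter_upwards [S.theta_mem_atBot n] with E hE
    have := S.arctan_formula E (n:ℤ) 0 (by push_cast; linarith [hE.1, hE.2])
      (by push_cast; linarith [hE.1, hE.2])
    simpa using this
  have hq := (S.ratio_atBot n).2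
  have hlim : Tendsto (fun E => S.u E ((n:ℤ)-1) / (S.t n * S.u E (n:ℤ))) atBot (𝓝 0) := by
    have h2 := hq.div_const (S.t n)
    rw [zero_div] at h2
    refine h2.congr fun E => ?_
    rw [div_div, mul_comm]
  have harc : Tendsto (fun E => Real.arctan (S.u E ((n:ℤ)-1) / (S.t n * S.u E (n:ℤ))))
      atBot (𝓝 0) := by
    have := (Real.continuous_arctan.tendsto' 0 0 Real.arctan_zero).comp hlim
    exact this
  exact harc.congr' (by filter_upwards [hev] with E hE using hE.symm)

lemma ratio_atTop (n : ℕ) :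
    (∀ᶠ E in atTop, 0 < (-1:ℝ)^n * S.u E (n : ℤ)) ∧
      Tendsto (fun E => S.u E ((n:ℤ) - 1) / S.u E (n:ℤ)) atTop (𝓝 0) := by
  induction n with
  | zero =>
      constructor
      · apply Filter.Eventually.of_forall
        intro E
        simpa using S.u_zero_pos E
      · simp only [Nat.cast_zero]
        have : (fun E => S.u E ((0:ℤ) - 1) / S.u E (0:ℤ)) = fun _ => (0:ℝ) := by
          funext E
          norm_num [S.u_neg_one E]
        rw [this]
        exact tendsto_const_nhds
  | succ k ih =>
      obtain ⟨hpos, hrat⟩ := ih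
      have hw : Tendsto (fun E => (S.v k - E) - S.t k * (S.u E ((k:ℤ)-1) / S.u E (k:ℤ)))
          atTop atBot := by
        have h1 : Tendsto (fun E : ℝ => -E) atTop atBot := tendsto_neg_atTop_atBot
        have h2 : Tendsto (fun E => S.v k - S.t k * (S.u E ((k:ℤ)-1) / S.u E (k:ℤ)))
            atTop (𝓝 (S.v k - S.t k * 0)) :=
          tendsto_const_nhds.sub (tendsto_const_nhds.mul hrat)
        have := h1.atBot_add h2
        refine this.congr fun E => ?_
        ring
      have hwev : ∀ᶠ E in atTop,
          (S.v k - E) - S.t k * (S.u E ((k:ℤ)-1) / S.u E (k:ℤ)) < -1 :=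
        hw.eventually (eventually_lt_atBot (-1))
      have hune : ∀ᶠ E in atTop, S.u E (k:ℤ) ≠ 0 := by
        filter_upwards [hpos] with E hE
        intro hh
        rw [hh] at hE
        simp at hE
      have hkey : ∀ᶠ E in atTop,
          S.u E ((k:ℤ)+1) = S.u E (k:ℤ)
            * ((S.v k - E) - S.t k * (S.u E ((k:ℤ)-1) / S.u E (k:ℤ))) / S.t ((k:ℤ)+1) := by
        filter_upwards [hune] with E hne
        rw [S.u_succ E (k:ℤ)]
        field_simp
      constructor
      · filter_upwards [hpos, hwev, hkey] with E hE hwE hkE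
        rw [show ((k+1:ℕ):ℤ) = (k:ℤ)+1 by push_cast; ring, hkE]
        have ht1 := S.ht ((k:ℤ)+1)
        rw [show ((-1:ℝ)^(k+1)) = -(-1:ℝ)^k by rw [pow_succ]; ring]
        have hnum : 0 < ((-1:ℝ)^k * S.u E (k:ℤ))
            * (-((S.v k - E) - S.t k * (S.u E ((k:ℤ)-1) / S.u E (k:ℤ)))) := by
          apply mul_pos hE
          linarith
        rw [div_eq_mul_inv]
        have hinv : 0 < (S.t ((k:ℤ)+1))⁻¹ := by positivity
        nlinarith [hnum, hinv]
      · have hlim : Tendsto (fun E => S.t ((k:ℤ)+1)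
            * ((S.v k - E) - S.t k * (S.u E ((k:ℤ)-1) / S.u E (k:ℤ)))⁻¹) atTop (𝓝 0) := by
          have h0 : Tendsto (fun E => -((S.v k - E) - S.t k * (S.u E ((k:ℤ)-1) / S.u E (k:ℤ))))
              atTop atTop := by
            exact tendsto_neg_atBot_atTop.comp hw
          have h1 := h0.inv_tendsto_atTop
          have h2 : Tendsto (fun E =>
              ((S.v k - E) - S.t k * (S.u E ((k:ℤ)-1) / S.u E (k:ℤ)))⁻¹) atTop (𝓝 0) := by
            have h3 := h1.neg
            rw [neg_zero] at h3
            refine h3.congr fun E => ?_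
            simp only [Pi.inv_apply]
            rw [← inv_neg, neg_neg]
          have h4 := h2.const_mul (S.t ((k:ℤ)+1))
          simpa using h4
        apply hlim.congr'
        filter_upwards [hune, hwev, hkey] with E hne hwE hkE
        rw [show ((k+1:ℕ):ℤ) = (k:ℤ)+1 by push_cast; ring]
        rw [show (k:ℤ)+1-1 = (k:ℤ) by ring]
        rw [hkE]
        have hwne : (S.v k - E) - S.t k * (S.u E ((k:ℤ)-1) / S.u E (k:ℤ)) ≠ 0 := by linarith
        have htne := S.t_ne ((k:ℤ)+1)
        field_simp

lemma theta_mem_atTop (n : ℕ) :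
    ∀ᶠ E in atTop, (n:ℝ)*Real.pi - Real.pi/2 < S.θ E (n:ℤ) := by
  have hpi := Real.pi_pos
  induction n with
  | zero =>
      apply Filter.Eventually.of_forall
      intro E
      rw [show ((0:ℕ):ℤ) = 0 by norm_num, S.hθinit E]
      push_cast
      linarith
  | succ k ih =>
      have hu1 := (S.ratio_atTop k).1
      have hu2 := (S.ratio_atTop (k+1)).1
      filter_upwards [ih, hu1, hu2] with E hE hu1E hu2E
      rw [show ((k+1:ℕ):ℤ) = (k:ℤ)+1 by push_cast; ring] at hu2E ⊢
      have hb := S.hbranch E (k:ℤ)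
      -- upper bound for θ E k
      have hup : S.θ E (k:ℤ) ≤ (k:ℝ)*Real.pi := by
        rcases Nat.eq_zero_or_pos k with hk | hk
        · subst hk
          simp [S.hθinit E]
        · exact le_of_lt (S.theta_lt E k hk)
      set γ := S.θ E ((k:ℤ)+1) - ((k:ℝ)+1)*Real.pi with hγdef
      have hγ1 : -(2*Real.pi) < γ := by simp only [hγdef]; push_cast at hE ⊢; linarith [hb.1]
      have hγ2 : γ < Real.pi/2 := by simp only [hγdef]; linarith [hb.2]
      have hsinθ : 0 < (-1:ℝ)^k * Real.sin (S.θ E ((k:ℤ)+1)) := by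
        rw [S.sin_theta_succ E (k:ℤ)]
        have hcast : ((-1:ℝ)^(k:ℕ)) = (-1:ℝ)^((k:ℕ):ℤ) := by rw [zpow_natCast]
        rw [hcast] at hu1E ⊢
        rcases neg_one_zpow_cases (k:ℤ) with h1 | h1
        · rw [h1] at hu1E ⊢
          simp only [one_mul] at hu1E ⊢
          exact div_pos hu1E (S.hRpos E ((k:ℤ)+1))
        · rw [h1] at hu1E ⊢
          have : S.u E (k:ℤ) < 0 := by nlinarith
          have hdiv : S.u E (k:ℤ) / S.R E ((k:ℤ)+1) < 0 :=
            div_neg_of_neg_of_pos this (S.hRpos E ((k:ℤ)+1))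
          nlinarith
      have hcosθ : 0 < (-1:ℝ)^(k+1) * Real.cos (S.θ E ((k:ℤ)+1)) := by
        rw [S.cos_theta E ((k:ℤ)+1)]
        rcases neg_one_zpow_cases ((k:ℤ)+1) with h1 | h1
        · rw [show ((-1:ℝ)^(k+1:ℕ)) = (-1:ℝ)^(((k:ℤ))+1) by
            rw [← zpow_natCast]; norm_num, h1] at hu2E ⊢
          simp only [one_mul] at hu2E ⊢
          exact div_pos (mul_pos (S.ht ((k:ℤ)+1)) hu2E) (S.hRpos E ((k:ℤ)+1))
        · rw [show ((-1:ℝ)^(k+1:ℕ)) = (-1:ℝ)^(((k:ℤ))+1) by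
            rw [← zpow_natCast]; norm_num, h1] at hu2E ⊢
          have hu : S.u E ((k:ℤ)+1) < 0 := by nlinarith
          have : S.t ((k:ℤ)+1) * S.u E ((k:ℤ)+1) < 0 :=
            mul_neg_of_pos_of_neg (S.ht ((k:ℤ)+1)) hu
          have hdiv : S.t ((k:ℤ)+1) * S.u E ((k:ℤ)+1) / S.R E ((k:ℤ)+1) < 0 :=
            div_neg_of_neg_of_pos this (S.hRpos E ((k:ℤ)+1))
          nlinarith
      -- transfer signs to γ
      have hsinγ : Real.sin γ < 0 := by
        have h3 : Real.sin (S.θ E ((k:ℤ)+1)) = (-1:ℝ)^((k:ℤ)+1) * Real.sin γ := by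
          rw [show S.θ E ((k:ℤ)+1) = γ + ((k:ℤ)+1:ℤ) * Real.pi by
            rw [hγdef]; push_cast; ring, Real.sin_add_int_mul_pi]
        rw [h3] at hsinθ
        have hsq : (-1:ℝ)^(k:ℕ) * (-1:ℝ)^(((k:ℤ))+1) = -1 := by
          rw [show ((-1:ℝ)^(k:ℕ)) = (-1:ℝ)^((k:ℕ):ℤ) by rw [zpow_natCast]]
          rw [← zpow_add₀ (by norm_num : (-1:ℝ) ≠ 0)]
          rcases neg_one_zpow_cases ((k:ℤ) + ((k:ℤ)+1)) with h4 | h4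
          · exfalso
            have : Odd ((k:ℤ) + ((k:ℤ)+1)) := ⟨k, by ring⟩
            rw [this.neg_one_zpow] at h4
            norm_num at h4
          · exact h4
        nlinarith [hsinθ, hsq]
      have hcosγ : 0 < Real.cos γ := by
        have h3 : Real.cos (S.θ E ((k:ℤ)+1)) = (-1:ℝ)^((k:ℤ)+1) * Real.cos γ := by
          rw [show S.θ E ((k:ℤ)+1) = γ + ((k:ℤ)+1:ℤ) * Real.pi by
            rw [hγdef]; push_cast; ring, Real.cos_add_int_mul_pi]
        rw [h3] at hcosθ
        have hsq : (-1:ℝ)^(k+1:ℕ) * (-1:ℝ)^(((k:ℤ))+1) = 1 := by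
          rw [show ((-1:ℝ)^(k+1:ℕ)) = (-1:ℝ)^((k+1:ℕ):ℤ) by rw [zpow_natCast]]
          rw [← zpow_add₀ (by norm_num : (-1:ℝ) ≠ 0)]
          have : Even (((k+1:ℕ):ℤ) + ((k:ℤ)+1)) := ⟨(k:ℤ)+1, by push_cast; ring⟩
          exact this.neg_one_zpow
        nlinarith [hcosθ, hsq]
      have := mem_quadrant4 γ hγ1 hγ2 hsinγ hcosγ
      push_cast
      simp only [hγdef] at this
      push_cast at this
      linarith [this.1]

lemma theta_tendsto_atTop (n : ℕ) (hn : 1 ≤ n) :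
    Tendsto (fun E => S.θ E (n:ℤ)) atTop (𝓝 ((n:ℝ)*Real.pi)) := by
  have hpi := Real.pi_pos
  have hev : ∀ᶠ E in atTop,
      S.θ E (n:ℤ) = (n:ℝ)*Real.pi
        + Real.arctan (S.u E ((n:ℤ)-1) / (S.t n * S.u E (n:ℤ))) := by
    filter_upwards [S.theta_mem_atTop n] with E hE
    have hlt := S.theta_lt E n hn
    have := S.arctan_formula E (n:ℤ) (n:ℤ) (by push_cast; linarith)
      (by push_cast; linarith)
    rw [this]
    push_cast
    ring
  have hq := (S.ratio_atTop n).2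
  have hlim : Tendsto (fun E => S.u E ((n:ℤ)-1) / (S.t n * S.u E (n:ℤ))) atTop (𝓝 0) := by
    have h2 := hq.div_const (S.t n)
    rw [zero_div] at h2
    refine h2.congr fun E => ?_
    rw [div_div, mul_comm]
  have harc : Tendsto (fun E => Real.arctan (S.u E ((n:ℤ)-1) / (S.t n * S.u E (n:ℤ))))
      atTop (𝓝 0) :=
    (Real.continuous_arctan.tendsto' 0 0 Real.arctan_zero).comp hlim
  have := harc.const_add ((n:ℝ)*Real.pi)
  rw [add_zero] at this
  exact this.congr' (by filter_upwards [hev] with E hE using hE.symm)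

end Setup

section MatrixPart

variable {N : ℕ}

lemma pad_in_range (ψ : Fin N → ℝ) (c : ℤ) (h : 0 ≤ c ∧ c < N) :
    pad ψ c = ψ ⟨c.toNat, by omega⟩ := by
  unfold pad
  rw [dif_pos h]

lemma pad_out_range (ψ : Fin N → ℝ) (c : ℤ) (h : ¬(0 ≤ c ∧ c < N)) :
    pad ψ c = 0 := by
  unfold pad
  rw [dif_neg h]

lemma pad_coe (ψ : Fin N → ℝ) (j : Fin N) : pad ψ (j : ℤ) = ψ j := by
  rw [pad_in_range ψ (j:ℤ) ⟨by positivity, by exact_mod_cast j.isLt⟩]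
  congr 1 <;> simp

lemma sum_ite_pad (ψ : Fin N → ℝ) (c : ℤ) :
    (∑ j : Fin N, if (j:ℤ) = c then ψ j else 0) = pad ψ c := by
  by_cases h : 0 ≤ c ∧ c < N
  · rw [pad_in_range ψ c h]
    set j0 : Fin N := ⟨c.toNat, by omega⟩ with hj0
    have hcond : ∀ j : Fin N, ((j:ℤ) = c) ↔ (j = j0) := by
      intro j
      constructor
      · intro hj
        apply Fin.ext
        have : (j0:ℕ) = c.toNat := rfl
        omega
      · intro hj
        subst hj
        have : (j0:ℕ) = c.toNat := rfl
        omega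
    rw [Finset.sum_congr rfl fun j _ => if_congr (hcond j) rfl rfl]
    rw [Finset.sum_ite_eq' Finset.univ j0 ψ]
    simp
  · rw [pad_out_range ψ c h]
    apply Finset.sum_eq_zero
    intro j _
    rw [if_neg]
    have := j.isLt
    omega

lemma jacobi_mulVec (t v : ℤ → ℝ) (ψ : Fin N → ℝ) (i : Fin N) :
    (jacobiMat t v N).mulVec ψ i
      = -(t ((i:ℤ) + 1)) * pad ψ ((i:ℤ)+1) + v (i:ℤ) * pad ψ (i:ℤ)
        - t (i:ℤ) * pad ψ ((i:ℤ) - 1) := by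
  have hptwise : ∀ j : Fin N, jacobiMat t v N i j * ψ j
      = v (i:ℤ) * (if (j:ℤ) = (i:ℤ) then ψ j else 0)
        + (-(t ((i:ℤ)+1))) * (if (j:ℤ) = (i:ℤ)+1 then ψ j else 0)
        + (-(t (i:ℤ))) * (if (j:ℤ) = (i:ℤ)-1 then ψ j else 0) := by
    intro j
    unfold jacobiMat
    by_cases h1 : (i:ℤ) = (j:ℤ)
    · rw [if_pos h1, if_pos (by omega), if_neg (by omega), if_neg (by omega)]
      ring
    · rw [if_neg h1]
      by_cases h2 : (i:ℤ) = (j:ℤ)+1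
      · rw [if_pos h2, if_neg (by omega), if_neg (by omega), if_pos (by omega)]
        ring
      · rw [if_neg h2]
        by_cases h3 : (j:ℤ) = (i:ℤ)+1
        · rw [if_pos h3, if_neg (by omega), if_pos (by omega), if_neg (by omega), h3]
          ring
        · rw [if_neg h3, if_neg (by omega), if_neg (by omega), if_neg (by omega)]
          ring
  have hmv : (jacobiMat t v N).mulVec ψ i = ∑ j : Fin N, jacobiMat t v N i j * ψ j := by
    rfl
  rw [hmv, Finset.sum_congr rfl fun j _ => hptwise j]
  rw [Finset.sum_add_distrib, Finset.sum_add_distrib,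
    ← Finset.mul_sum, ← Finset.mul_sum, ← Finset.mul_sum,
    sum_ite_pad, sum_ite_pad, sum_ite_pad]
  ring

end MatrixPart

namespace Setup

variable (S : Osc.Setup)

lemma u_zero_of_zero (E : ℝ) (hw : S.u E 0 = 0) : False := by
  have := S.u_zero_pos E
  rw [hw] at this
  exact lt_irrefl 0 this

lemma isEig_iff_u (N : ℕ) (hN : 1 ≤ N) (E : ℝ) :
    IsEig (jacobiMat S.t S.v N) E ↔ S.u E (N:ℤ) = 0 := by
  constructor
  · rintro ⟨ψ, hψ, heig⟩
    set w : ℤ → ℝ := pad ψ with hwdef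
    set c : ℝ := S.t 0 * w 0 with hcdef
    have hrecw : ∀ k : ℤ, 0 ≤ k → k < N →
        -(S.t (k+1)) * w (k+1) + S.v k * w k - S.t k * w (k-1) = E * w k := by
      intro k hk0 hkN
      set i : Fin N := ⟨k.toNat, by omega⟩ with hidef
      have hik : (i:ℤ) = k := by
        have : (i:ℕ) = k.toNat := rfl
        omega
      have h1 := congrFun heig i
      rw [jacobi_mulVec S.t S.v ψ i] at h1
      simp only [Pi.smul_apply, smul_eq_mul] at h1
      rw [← hwdef, hik] at h1
      have h3 : ψ i = w k := by rw [← pad_coe ψ i, ← hwdef, hik]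
      rw [h3] at h1
      linarith [h1]
    have hP : ∀ k : ℕ, (k:ℤ) ≤ N →
        w ((k:ℤ)-1) = c * S.u E ((k:ℤ)-1) ∧ w (k:ℤ) = c * S.u E (k:ℤ) := by
      intro k
      induction k with
      | zero =>
          intro _
          simp only [Nat.cast_zero]
          constructor
          · have h1 : w ((0:ℤ)-1) = 0 := by
              rw [hwdef]
              apply pad_out_range
              omega
            rw [h1, show ((0:ℤ) - 1) = (-1:ℤ) by norm_num, S.u_neg_one E]
            ring
          · have ht0 := S.t_ne 0
            rw [hcdef, S.u_zero E]
            field_simp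
      | succ k ih =>
          intro hk
          have hk' : (k:ℤ) ≤ N := by push_cast at hk ⊢; omega
          obtain ⟨ih1, ih2⟩ := ih hk'
          have hkN : (k:ℤ) < N := by push_cast at hk; omega
          have hr := hrecw (k:ℤ) (by positivity) hkN
          have hu := S.u_succ E (k:ℤ)
          have htne := S.t_ne ((k:ℤ)+1)
          constructor
          · rw [show ((k+1:ℕ):ℤ) - 1 = (k:ℤ) by push_cast; ring]
            exact ih2
          · rw [show ((k+1:ℕ):ℤ) = (k:ℤ)+1 by push_cast; ring]
            have hw1 : w ((k:ℤ)+1)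
                = ((S.v k - E) * w (k:ℤ) - S.t k * w ((k:ℤ)-1)) / S.t ((k:ℤ)+1) := by
              field_simp [htne]
              linarith [hr]
            rw [hw1, ih1, ih2, hu]
            field_simp [htne]
    have hc : c ≠ 0 := by
      intro hc0
      apply hψ
      funext j
      have hj := (hP (j:ℕ) (by exact_mod_cast le_of_lt j.isLt)).2
      rw [hc0] at hj
      rw [← pad_coe ψ j]
      simp only [zero_mul] at hj
      exact hj
    have hN1 := hP N (le_refl _)
    have hwN : w (N:ℤ) = 0 := by
      rw [hwdef]
      apply pad_out_range
      omega
    rw [hwN] at hN1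
    have := hN1.2
    rcases mul_eq_zero.mp this.symm with h | h
    · exact absurd h hc
    · exact h
  · intro huN
    refine ⟨fun j => S.u E (j:ℤ), ?_, ?_⟩
    · intro hzero
      have := congrFun hzero ⟨0, hN⟩
      simp only [Pi.zero_apply] at this
      exact S.u_zero_of_zero E (by exact_mod_cast this)
    · funext i
      rw [jacobi_mulVec]
      set ψ : Fin N → ℝ := fun j => S.u E (j:ℤ) with hψdef
      have hp0 : pad ψ (i:ℤ) = S.u E (i:ℤ) := pad_coe ψ i
      have hpm : pad ψ ((i:ℤ)-1) = S.u E ((i:ℤ)-1) := by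
        by_cases h : 0 ≤ (i:ℤ)-1
        · rw [pad_in_range ψ _ ⟨h, by have := i.isLt; omega⟩]
          simp only [hψdef]
          congr 1 <;> omega
        · rw [pad_out_range ψ _ (by omega)]
          have hi0 : (i:ℤ) - 1 = -1 := by have := i.isLt; omega
          rw [hi0, S.u_neg_one E]
      have hpp : pad ψ ((i:ℤ)+1) = S.u E ((i:ℤ)+1) := by
        by_cases h : (i:ℤ)+1 < N
        · rw [pad_in_range ψ _ ⟨by positivity, h⟩]
          simp only [hψdef]
          congr 1 <;> omega
        · rw [pad_out_range ψ _ (by omega)]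
          have hiN : (i:ℤ) + 1 = N := by have := i.isLt; omega
          rw [hiN, huN]
      rw [hp0, hpm, hpp]
      have := S.hrec E (i:ℤ)
      simp only [Pi.smul_apply, smul_eq_mul]
      linarith [this]

lemma u_eq_zero_iff_cos (E : ℝ) (n : ℤ) :
    S.u E n = 0 ↔ Real.cos (S.θ E n) = 0 := by
  rw [S.cos_theta]
  constructor
  · intro h
    rw [h]
    simp
  · intro h
    rcases div_eq_zero_iff.mp h with h' | h'
    · rcases mul_eq_zero.mp h' with h'' | h''
      · exact absurd h'' (S.t_ne n)
      · exact h''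
    · exact absurd h' (S.R_ne E n)

lemma cos_theta_eq_zero_iff (E : ℝ) (N : ℕ) (hN : 1 ≤ N) :
    Real.cos (S.θ E (N:ℤ)) = 0
      ↔ ∃ k : ℕ, k < N ∧ S.θ E (N:ℤ) = Real.pi/2 + (k:ℝ) * Real.pi := by
  have hpi := Real.pi_pos
  have hpos := S.theta_pos E N hN
  have hlt := S.theta_lt E N hN
  constructor
  · intro h
    obtain ⟨k, hk⟩ := Real.cos_eq_zero_iff.mp h
    have hk0 : 0 ≤ k := by
      by_contra hcon
      push_neg at hcon
      have hk1 : k ≤ -1 := by omega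
      have : (k:ℝ) ≤ -1 := by exact_mod_cast hk1
      nlinarith
    have hkN : k < N := by
      by_contra hcon
      push_neg at hcon
      have : (N:ℝ) ≤ (k:ℝ) := by exact_mod_cast hcon
      nlinarith
    refine ⟨k.toNat, by omega, ?_⟩
    rw [hk]
    have : ((k.toNat : ℕ) : ℝ) = (k:ℝ) := by
      have : (k.toNat : ℤ) = k := Int.toNat_of_nonneg hk0
      exact_mod_cast this
    rw [this]
    ring
  · rintro ⟨k, _, hk⟩
    rw [hk, show Real.pi/2 + (k:ℝ)*Real.pi = Real.pi/2 + ((k:ℕ):ℤ)*Real.pi by push_cast; ring,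
      Real.cos_add_int_mul_pi]
    simp

lemma isEig_iff_theta (N : ℕ) (hN : 1 ≤ N) (E : ℝ) :
    IsEig (jacobiMat S.t S.v N) E
      ↔ ∃ k : ℕ, k < N ∧ S.θ E (N:ℤ) = Real.pi/2 + (k:ℝ) * Real.pi := by
  rw [S.isEig_iff_u N hN E, S.u_eq_zero_iff_cos E (N:ℤ), S.cos_theta_eq_zero_iff E N hN]

end Setup

namespace Setup

variable (S : Osc.Setup)

lemma theta_inj (N : ℕ) (hN : 1 ≤ N) {E1 E2 : ℝ}
    (h : S.θ E1 (N:ℤ) = S.θ E2 (N:ℤ)) : E1 = E2 := by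
  rcases lt_trichotomy E1 E2 with hc | hc | hc
  · exact absurd h (ne_of_lt (S.theta_strictMono N hN hc))
  · exact hc
  · exact absurd h.symm (ne_of_lt (S.theta_strictMono N hN hc))

lemma exists_theta_eq (N : ℕ) (hN : 1 ≤ N) (y : ℝ) (hy1 : 0 < y)
    (hy2 : y < (N:ℝ) * Real.pi) : ∃ E, S.θ E (N:ℤ) = y := by
  obtain ⟨a, ha⟩ : ∃ a, S.θ a (N:ℤ) < y :=
    ((S.theta_tendsto_atBot N).eventually_lt_const hy1).exists
  obtain ⟨b, hb⟩ : ∃ b, y < S.θ b (N:ℤ) :=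
    ((S.theta_tendsto_atTop N hN).eventually_const_lt hy2).exists
  have hab : a ≤ b := by
    by_contra hcon
    push_neg at hcon
    have := S.theta_strictMono N hN hcon
    linarith
  obtain ⟨E, _, hE2⟩ := intermediate_value_Icc hab (S.theta_cont N).continuousOn
    (⟨ha.le, hb.le⟩ : y ∈ Set.Icc (S.θ a (N:ℤ)) (S.θ b (N:ℤ)))
  exact ⟨E, hE2⟩

lemma part_a (N : ℕ) (hN : 1 ≤ N) (E : ℝ) :
    |(1 / Real.pi) * S.θ E (N:ℤ)
      - (Set.ncard {E' : ℝ | E' < E ∧ IsEig (jacobiMat S.t S.v N) E'} : ℝ)| ≤ 1/2 := by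
  have hpi := Real.pi_pos
  set x := S.θ E (N:ℤ) with hxdef
  have hx1 : 0 < x := S.theta_pos E N hN
  have hx2 : x < (N:ℝ) * Real.pi := S.theta_lt E N hN
  have hEk : ∀ k : ℕ, k < N → ∃ E', S.θ E' (N:ℤ) = Real.pi/2 + (k:ℝ) * Real.pi := by
    intro k hk
    apply S.exists_theta_eq N hN
    · positivity
    · have : (k:ℝ) ≤ (N:ℝ) - 1 := by
        have : (k:ℝ) + 1 ≤ (N:ℝ) := by exact_mod_cast hk
        linarith
      nlinarith
  classical
  set e : ℕ → ℝ := fun k => if hk : k < N then (hEk k hk).choose else 0 with hedef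
  have he : ∀ k : ℕ, k < N → S.θ (e k) (N:ℤ) = Real.pi/2 + (k:ℝ) * Real.pi := by
    intro k hk
    simp only [hedef, dif_pos hk]
    exact (hEk k hk).choose_spec
  set T : Set ℕ := {k : ℕ | k < N ∧ Real.pi/2 + (k:ℝ) * Real.pi < x} with hTdef
  have hset : {E' : ℝ | E' < E ∧ IsEig (jacobiMat S.t S.v N) E'} = e '' T := by
    ext E'
    constructor
    · rintro ⟨hlt, heig⟩
      obtain ⟨k, hkN, hkθ⟩ := (S.isEig_iff_theta N hN E').mp heig
      have hθlt : S.θ E' (N:ℤ) < x := S.theta_strictMono N hN hlt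
      refine ⟨k, ⟨hkN, by rw [← hkθ]; exact hθlt⟩, ?_⟩
      apply S.theta_inj N hN
      rw [he k hkN, hkθ]
    · rintro ⟨k, ⟨hkN, hkx⟩, rfl⟩
      constructor
      · by_contra hcon
        push_neg at hcon
        rcases eq_or_lt_of_le hcon with h | h
        · have hx := he k hkN
          rw [← h] at hx
          have : x = Real.pi/2 + (k:ℝ) * Real.pi := by rw [hxdef, hx]
          linarith
        · have h2 := S.theta_strictMono N hN h
          rw [he k hkN] at h2
          have h3 : x = S.θ E (N:ℤ) := hxdef
          linarith
      · exact (S.isEig_iff_theta N hN _).mpr ⟨k, hkN, he k hkN⟩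
  have hinjT : Set.InjOn e T := by
    intro k1 hk1 k2 hk2 hkk
    have h1 := he k1 hk1.1
    have h2 := he k2 hk2.1
    rw [hkk, h2] at h1
    have : (k1:ℝ) = (k2:ℝ) := by
      have := mul_right_cancel₀ (ne_of_gt hpi) (by linarith : (k2:ℝ) * Real.pi = (k1:ℝ) * Real.pi)
      linarith
    exact_mod_cast this
  set m : ℕ := Nat.ceil (x / Real.pi - 1/2) with hmdef
  have hTm : T = {k : ℕ | k < m} := by
    ext k
    simp only [hTdef, Set.mem_setOf_eq]
    have hiff : (Real.pi/2 + (k:ℝ) * Real.pi < x) ↔ ((k:ℝ) < x / Real.pi - 1/2) := by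
      rw [lt_sub_iff_add_lt, lt_div_iff₀ hpi]
      constructor <;> intro h <;> nlinarith
    constructor
    · rintro ⟨_, h2⟩
      rw [hmdef, Nat.lt_ceil]
      exact hiff.mp h2
    · intro hk
      rw [hmdef, Nat.lt_ceil] at hk
      have hkN : k < N := by
        have h3 : (k:ℝ) < (N:ℝ) := by
          have : x / Real.pi < (N:ℝ) := by
            rw [div_lt_iff₀ hpi]
            exact hx2
          linarith
        exact_mod_cast h3
      exact ⟨hkN, hiff.mpr hk⟩
  have hcard : (Set.ncard {E' : ℝ | E' < E ∧ IsEig (jacobiMat S.t S.v N) E'}) = m := by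
    rw [hset, Set.ncard_image_of_injOn hinjT, hTm]
    have : {k : ℕ | k < m} = ↑(Finset.range m) := by
      ext k
      simp
    rw [this, Set.ncard_coe_finset, Finset.card_range]
  rw [hcard]
  have hyx : (1 / Real.pi) * x = x / Real.pi := by ring
  rw [hyx]
  set y := x / Real.pi with hydef
  have hy1 : 0 < y := div_pos hx1 hpi
  rcases Nat.eq_zero_or_pos m with hm | hm
  · rw [hm]
    have : y - 1/2 ≤ 0 := Nat.ceil_eq_zero.mp hm
    rw [abs_le]
    constructor
    · push_cast
      linarith
    · push_cast
      linarith
  · have h1 : y - 1/2 ≤ (m:ℝ) := Nat.le_ceil _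
    have h0 : 0 < y - 1/2 := by
      rw [hmdef] at hm
      exact Nat.ceil_pos.mp hm
    have h2 : (m:ℝ) < (y - 1/2) + 1 := Nat.ceil_lt_add_one (le_of_lt h0)
    rw [abs_le]
    constructor <;> linarith

lemma part_b (N : ℕ) (hN : 1 ≤ N) (Ev : Fin N → ℝ) (hmono : StrictMono Ev)
    (hEig : ∀ j, IsEig (jacobiMat S.t S.v N) (Ev j)) (j : Fin N) :
    S.θ (Ev j) (N:ℤ) = Real.pi/2 + Real.pi * (j:ℝ) := by
  have hpi := Real.pi_pos
  have hK : ∀ j : Fin N, ∃ k : ℕ, k < N ∧ S.θ (Ev j) (N:ℤ) = Real.pi/2 + (k:ℝ) * Real.pi :=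
    fun j => (S.isEig_iff_theta N hN (Ev j)).mp (hEig j)
  classical
  choose K hK1 hK2 using hK
  have hKmono : StrictMono K := by
    intro a b hab
    have h1 := S.theta_strictMono N hN (hmono hab)
    rw [hK2 a, hK2 b] at h1
    by_contra hcon
    push_neg at hcon
    have hcast : (K b : ℝ) ≤ (K a : ℝ) := by exact_mod_cast hcon
    nlinarith
  have hle : ∀ n : ℕ, ∀ h : n < N, n ≤ K ⟨n, h⟩ := by
    intro n
    induction n with
    | zero => intro h; exact Nat.zero_le _
    | succ p ih =>
        intro h
        have hp : p < N := by omega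
        have h1 := ih hp
        have h2 : K ⟨p, hp⟩ < K ⟨p+1, h⟩ := hKmono (by rw [Fin.mk_lt_mk]; omega)
        omega
  have hge : ∀ n : ℕ, ∀ h : n < N, K ⟨n, h⟩ ≤ n := by
    -- reversed argument
    have hrev : ∀ d : ℕ, ∀ hd : d < N, K ⟨N - 1 - d, by omega⟩ ≤ N - 1 - d := by
      intro d
      induction d with
      | zero =>
          intro hd
          have := hK1 ⟨N - 1 - 0, by omega⟩
          omega
      | succ p ih =>
          intro hd
          have hp : p < N := by omega
          have h1 := ih hp
          have h2 : K ⟨N - 1 - (p+1), by omega⟩ < K ⟨N - 1 - p, by omega⟩ := by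
            apply hKmono
            rw [Fin.mk_lt_mk]
            omega
          omega
    intro n h
    have hd : N - 1 - n < N := by omega
    have := hrev (N - 1 - n) hd
    have heq : (⟨N - 1 - (N - 1 - n), by omega⟩ : Fin N) = ⟨n, h⟩ := by
      rw [Fin.mk_eq_mk]
      omega
    rw [heq] at this
    omega
  have hKj : K j = (j : ℕ) := by
    have h1 := hle (j:ℕ) j.isLt
    have h2 := hge (j:ℕ) j.isLt
    have : (⟨(j:ℕ), j.isLt⟩ : Fin N) = j := by
      rw [Fin.mk_eq_mk]
    rw [this] at h1 h2
    omega
  rw [hK2 j, hKj]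
  ring

end Setup

end Osc

/-- Oscillation theorem: the Prüfer phase counts eigenvalues of the Dirichlet restriction. -/
theorem stmt14 (t v : ℤ → ℝ) (ht : ∀ n, 0 < t n)
    (u R θ : ℝ → ℤ → ℝ)
    (hrec : ∀ E n, -(t (n + 1)) * u E (n + 1) + v n * u E n - t n * u E (n - 1) = E * u E n)
    (hinit : ∀ E, t 0 * u E 0 = 1 ∧ u E (-1) = 0)
    (hRpos : ∀ E n, 0 < R E n)
    (hPruef : ∀ E n, t n * u E n = R E n * Real.cos (θ E n) ∧
      u E (n - 1) = R E n * Real.sin (θ E n))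
    (hθinit : ∀ E, θ E 0 = 0)
    (hbranch : ∀ E n, -(Real.pi / 2) < θ E (n + 1) - θ E n ∧
      θ E (n + 1) - θ E n < 3 * Real.pi / 2)
    (N : ℕ) (hN : 1 ≤ N) :
    (∀ E : ℝ,
      |(1 / Real.pi) * θ E (N : ℤ) -
        (Set.ncard {E' : ℝ | E' < E ∧ IsEig (jacobiMat t v N) E'} : ℝ)| ≤ 1 / 2) ∧
    ∀ Ev : Fin N → ℝ, StrictMono Ev → (∀ j, IsEig (jacobiMat t v N) (Ev j)) →
      ∀ j : Fin N, θ (Ev j) (N : ℤ) = Real.pi / 2 + Real.pi * (j : ℝ) := by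
  set S : Osc.Setup := ⟨t, v, u, R, θ, ht, hrec, hinit, hRpos, hPruef, hθinit, hbranch⟩ with hSdef
  constructor
  · intro E
    exact S.part_a N hN E
  · intro Ev hmono hEig j
    exact S.part_b N hN Ev hmono hEig j
end
end

section
/- Let A, B be real 2×2 matrices of determinant 1 with A·B = B·A, and suppose that each of A and B either has |trace| < 2 or is equal to 𝟙 or −𝟙. Then there exist an invertible real 2×2 matrix M and angles η_A, η_B ∈ ℝ such that M A M^{−1} = R_{η_A} and M B M^{−1} = R_{η_B}, where R_η = [[cos η, −sin η],[sin η, cos η]] is the rotation matrix by angle η. -/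
open MeasureTheory Filter
open scoped BigOperators ENNReal

noncomputable section

/-!
If `|tr A| < 2`, write `tr A = 2 cos η` with `sin η ≠ 0`; an explicit matrix
intertwines `A` with the rotation `R_η`. The only determinant-one matrices commuting with a
rotation `R_η`, `sin η ≠ 0`, are rotations, so the same conjugation sends `B` to a rotation.
If neither matrix has `|tr| < 2`, both are `±1 = R_0, R_π` and no conjugation is needed.
-/

open Matrix

lemma rotMat_zero : rotMat 0 = 1 := by
  simp [rotMat, one_fin_two]

lemma rotMat_pi : rotMat Real.pi = -1 := by
  simp [rotMat, one_fin_two]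

lemma exists_eq_rotMat_of_eq_one_or_neg_one {C : Matrix (Fin 2) (Fin 2) ℝ}
    (hC : C = 1 ∨ C = -1) : ∃ η : ℝ, C = rotMat η := by
  rcases hC with rfl | rfl
  exacts [⟨0, rotMat_zero.symm⟩, ⟨Real.pi, rotMat_pi.symm⟩]

lemma Real.exists_cos_eq_sin_eq {x y : ℝ} (h : x ^ 2 + y ^ 2 = 1) :
    ∃ θ : ℝ, Real.cos θ = x ∧ Real.sin θ = y := by
  have hnorm : ‖(⟨x, y⟩ : ℂ)‖ = 1 := by
    rw [Complex.norm_def, Complex.normSq_mk, ← sq, ← sq, h, Real.sqrt_one]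
  obtain ⟨θ, hθ⟩ := (Complex.norm_eq_one_iff _).1 hnorm
  exact ⟨θ, by simpa using congrArg Complex.re hθ, by simpa using congrArg Complex.im hθ⟩

section Conjugation

variable {n α : Type*} [Fintype n] [DecidableEq n] [CommRing α] {M : Matrix n n α}

lemma conj_mul_conj (hM : IsUnit M.det) (X Y : Matrix n n α) :
    M * X * M⁻¹ * (M * Y * M⁻¹) = M * (X * Y) * M⁻¹ := by
  simp only [Matrix.mul_assoc, nonsing_inv_mul_cancel_left _ _ hM]

lemma commute_conj_of_isUnit_det (hM : IsUnit M.det) {X Y : Matrix n n α} (h : Commute X Y) :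
    Commute (M * X * M⁻¹) (M * Y * M⁻¹) := by
  rw [Commute, SemiconjBy, conj_mul_conj hM, conj_mul_conj hM, h.eq]

end Conjugation

def rotIntertwiner (A : Matrix (Fin 2) (Fin 2) ℝ) (η : ℝ) : Matrix (Fin 2) (Fin 2) ℝ :=
  !![A 1 0, (A 1 1 - A 0 0) / 2; 0, Real.sin η]

lemma rotIntertwiner_mul {A : Matrix (Fin 2) (Fin 2) ℝ} {η : ℝ} (hA : A.det = 1)
    (hcos : Real.cos η = A.trace / 2) :
    rotIntertwiner A η * A = rotMat η * rotIntertwiner A η := by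
  rw [det_fin_two] at hA
  rw [trace_fin_two] at hcos
  have hsin : Real.sin η ^ 2 + ((A 0 0 + A 1 1) / 2) ^ 2 = 1 := hcos ▸ Real.sin_sq_add_cos_sq η
  ext i j
  fin_cases i <;> fin_cases j <;>
    simp only [rotIntertwiner, rotMat, hcos, mul_apply, Fin.sum_univ_two, of_apply, cons_val',
      cons_val_fin_one, cons_val_zero, cons_val_one, Fin.isValue, Fin.zero_eta, Fin.mk_one] <;>
    first | ring1 | linear_combination hsin - hA

lemma exists_conj_eq_rotMat_of_abs_trace_lt_two {A : Matrix (Fin 2) (Fin 2) ℝ}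
    (hA : A.det = 1) (htr : |A.trace| < 2) :
    ∃ M : Matrix (Fin 2) (Fin 2) ℝ, IsUnit M.det ∧ ∃ η : ℝ,
      Real.sin η ≠ 0 ∧ M * A * M⁻¹ = rotMat η := by
  have htr' : |A.trace / 2| < 1 := by rw [abs_div, abs_two]; linarith
  obtain ⟨hlo, hhi⟩ := abs_lt.1 htr'
  set η := Real.arccos (A.trace / 2)
  have hsin : Real.sin η ≠ 0 := by
    rw [Real.sin_arccos]
    exact (Real.sqrt_pos.2 (by nlinarith)).ne'
  have hcos : Real.cos η = A.trace / 2 := Real.cos_arccos hlo.le hhi.le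
  -- `A 1 0 = 0` would force `A 0 0 * A 1 1 = 1` and hence `|tr A| ≥ 2`.
  have hc : A 1 0 ≠ 0 := by
    intro hc
    rw [det_fin_two, hc] at hA
    rw [trace_fin_two] at htr'
    nlinarith [abs_lt.1 htr', sq_nonneg (A 0 0 - A 1 1)]
  have hM : IsUnit (rotIntertwiner A η).det := by
    rw [rotIntertwiner, det_fin_two_of, isUnit_iff_ne_zero]
    simpa using mul_ne_zero hc hsin
  refine ⟨rotIntertwiner A η, hM, η, hsin, ?_⟩
  rw [rotIntertwiner_mul hA hcos, mul_nonsing_inv_cancel_right _ _ hM]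

lemma exists_eq_rotMat_of_commute_rotMat {η : ℝ} (hη : Real.sin η ≠ 0)
    {B : Matrix (Fin 2) (Fin 2) ℝ} (hB : B.det = 1) (hcomm : Commute (rotMat η) B) :
    ∃ θ : ℝ, B = rotMat θ := by
  have hentry (i j : Fin 2) : (rotMat η * B) i j = (B * rotMat η) i j := by rw [hcomm.eq]
  have h00 := hentry 0 0
  have h01 := hentry 0 1
  simp only [rotMat, mul_apply, Fin.sum_univ_two, of_apply, cons_val', cons_val_fin_one,
    cons_val_zero, cons_val_one, Fin.isValue] at h00 h01
  have h10 : B 1 0 = -B 0 1 := mul_left_cancel₀ hη (by linarith)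
  have h11 : B 1 1 = B 0 0 := mul_left_cancel₀ hη (by linarith)
  rw [det_fin_two, h10, h11] at hB
  obtain ⟨θ, hcos, hsin⟩ := Real.exists_cos_eq_sin_eq (x := B 0 0) (y := -B 0 1) (by linarith)
  refine ⟨θ, ?_⟩
  rw [eta_fin_two B, h10, h11, rotMat, hcos, hsin, neg_neg]

lemma exists_conj_eq_rotMat_of_commute {A B : Matrix (Fin 2) (Fin 2) ℝ} (hA : A.det = 1)
    (hB : B.det = 1) (hAB : Commute A B) (htr : |A.trace| < 2) :
    ∃ M : Matrix (Fin 2) (Fin 2) ℝ, IsUnit M.det ∧ ∃ ηA ηB : ℝ,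
      M * A * M⁻¹ = rotMat ηA ∧ M * B * M⁻¹ = rotMat ηB := by
  obtain ⟨M, hM, ηA, hsin, hMA⟩ := exists_conj_eq_rotMat_of_abs_trace_lt_two hA htr
  have hMB : (M * B * M⁻¹).det = 1 := by rw [det_conj ((isUnit_iff_isUnit_det M).2 hM), hB]
  have hcomm : Commute (rotMat ηA) (M * B * M⁻¹) := hMA ▸ commute_conj_of_isUnit_det hM hAB
  obtain ⟨ηB, hηB⟩ := exists_eq_rotMat_of_commute_rotMat hsin hMB hcomm
  exact ⟨M, hM, ηA, ηB, hMA, hηB⟩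

/-- Two commuting elliptic `SL(2,ℝ)` matrices can be simultaneously conjugated to rotations. -/
theorem stmt17 (A B : Matrix (Fin 2) (Fin 2) ℝ) (hA : A.det = 1) (hB : B.det = 1)
    (hAB : A * B = B * A)
    (hellA : |A.trace| < 2 ∨ A = 1 ∨ A = -1) (hellB : |B.trace| < 2 ∨ B = 1 ∨ B = -1) :
    ∃ M : Matrix (Fin 2) (Fin 2) ℝ, IsUnit M.det ∧ ∃ ηA ηB : ℝ,
      M * A * M⁻¹ = rotMat ηA ∧ M * B * M⁻¹ = rotMat ηB := by
  rcases hellA with htrA | hA₁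
  · exact exists_conj_eq_rotMat_of_commute hA hB hAB htrA
  rcases hellB with htrB | hB₁
  · obtain ⟨M, hM, ηB, ηA, hMB, hMA⟩ := exists_conj_eq_rotMat_of_commute hB hA hAB.symm htrB
    exact ⟨M, hM, ηA, ηB, hMA, hMB⟩
  obtain ⟨ηA, rfl⟩ := exists_eq_rotMat_of_eq_one_or_neg_one hA₁
  obtain ⟨ηB, rfl⟩ := exists_eq_rotMat_of_eq_one_or_neg_one hB₁
  exact ⟨1, by simp, ηA, ηB, by simp, by simp⟩
end
end
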